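/- arXiv:2407.12518 — 8 statements merged into one kernel-verified Lean document; each statement's English description precedes it below -/
import Mathlib

section
/- For every initial data x₀, v₀ ∈ ℝ^d there exists a global solution x ∈ C²([0,∞); ℝ^d) of the inertial system with explicit Hessian damping, i.e. x satisfies ẍ(t) + γ(t)ẋ(t) + β∇²f(x(t))ẋ(t) + ∇f(x(t)) = 0 for all t > 0, with x(0) = x₀ and ẋ(0) = v₀. -/
open Filter Topology Set MeasureTheory Metric

set_option linter.unusedSectionVars false
set_option maxHeartbeats 1000000

section Infra
variable {E : Type*} [NormedAddCommGroup E] [NormedSpace ℝ E]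

theorem my_hasDerivWithinAt_singleton (f : ℝ → E) (x : ℝ) (v : E) :
    HasDerivWithinAt f v {x} x := by
  simp only [HasDerivWithinAt, HasDerivAtFilter, hasFDerivAtFilter_iff_isLittleO,
    nhdsWithin_singleton, Asymptotics.isLittleO_pure]
  simp

theorem ode_glue {F : ℝ → E → E} {a b c' : ℝ} (hab : a ≤ b) (hbc : b ≤ c')
    {u₁ u₂ : ℝ → E}
    (h₁ : ∀ t ∈ Icc a b, HasDerivWithinAt u₁ (F t (u₁ t)) (Icc a b) t)
    (h₂ : ∀ t ∈ Icc b c', HasDerivWithinAt u₂ (F t (u₂ t)) (Icc b c') t)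
    (hbb : u₂ b = u₁ b) :
    ∃ u : ℝ → E, (∀ t ∈ Iic b, u t = u₁ t) ∧
      ∀ t ∈ Icc a c', HasDerivWithinAt u (F t (u t)) (Icc a c') t := by
  classical
  refine ⟨fun t => if t ≤ b then u₁ t else u₂ t, fun t ht => if_pos ht, ?_⟩
  set u : ℝ → E := fun t => if t ≤ b then u₁ t else u₂ t with hu
  have hu1 : ∀ t ∈ Iic b, u t = u₁ t := fun t ht => if_pos ht
  have hu2 : ∀ t ∈ Icc b c', u t = u₂ t := by
    intro t ht
    rcases eq_or_lt_of_le ht.1 with h | h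
    · simp [hu, ← h, hbb]
    · simp [hu, not_le.mpr h]
  have hicc1 : Icc a b = Icc a c' ∩ Iic b := by
    ext s; simp only [mem_inter_iff, mem_Icc, mem_Iic]
    exact ⟨fun ⟨p, q⟩ => ⟨⟨p, q.trans hbc⟩, q⟩, fun ⟨⟨p, _⟩, q⟩ => ⟨p, q⟩⟩
  have hicc2 : Icc b c' = Icc a c' ∩ Ici b := by
    ext s; simp only [mem_inter_iff, mem_Icc, mem_Ici]
    exact ⟨fun ⟨p, q⟩ => ⟨⟨hab.trans p, q⟩, p⟩, fun ⟨⟨_, q⟩, p⟩ => ⟨p, q⟩⟩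
  intro t ht
  rcases lt_trichotomy t b with h | h | h
  · have hmem : Icc a c' ∩ Iic b ∈ 𝓝[Icc a c'] t :=
      inter_mem_nhdsWithin _ (Iic_mem_nhds h)
    have h1 : HasDerivWithinAt u₁ (F t (u₁ t)) (Icc a c') t :=
      (h₁ t ⟨ht.1, h.le⟩).mono_of_mem_nhdsWithin (hicc1 ▸ hmem)
    have h2 : HasDerivWithinAt u (F t (u₁ t)) (Icc a c') t :=
      h1.congr_of_eventuallyEq (eventually_of_mem hmem fun s hs => hu1 s hs.2) (hu1 t h.le)
    rw [hu1 t h.le]; exact h2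
  · subst h
    have ha' : HasDerivWithinAt u (F t (u₁ t)) (Icc a t) t :=
      (h₁ t ⟨hab, le_rfl⟩).congr (fun s hs => hu1 s hs.2) (hu1 t Set.self_mem_Iic)
    have hb' : HasDerivWithinAt u (F t (u₂ t)) (Icc t c') t :=
      (h₂ t ⟨le_rfl, hbc⟩).congr (fun s hs => hu2 s hs) (hu2 t ⟨le_rfl, hbc⟩)
    rw [hbb] at hb'
    rw [hu1 t Set.self_mem_Iic]
    exact (Icc_union_Icc_eq_Icc hab hbc) ▸ ha'.union hb'
  · have hmem : Icc a c' ∩ Ici b ∈ 𝓝[Icc a c'] t :=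
      inter_mem_nhdsWithin _ (Ici_mem_nhds h)
    have h1 : HasDerivWithinAt u₂ (F t (u₂ t)) (Icc a c') t :=
      (h₂ t ⟨h.le, ht.2⟩).mono_of_mem_nhdsWithin (hicc2 ▸ hmem)
    have h2 : HasDerivWithinAt u (F t (u₂ t)) (Icc a c') t :=
      h1.congr_of_eventuallyEq
        (eventually_of_mem hmem fun s hs => hu2 s (hicc2 ▸ hs)) (hu2 t ⟨h.le, ht.2⟩)
    rw [hu2 t ⟨h.le, ht.2⟩]; exact h2


variable (F : ℝ → E → E) (a : ℝ) (u₀ : E)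

/-- being a solution on `Icc a b` with initial value `u₀`. -/
def SolOn (u : ℝ → E) (b : ℝ) : Prop :=
  u a = u₀ ∧ ∀ t ∈ Icc a b, HasDerivWithinAt u (F t (u t)) (Icc a b) t

theorem ode_step (Hext : ∀ b, a ≤ b → ∀ y : E, ∃ u : ℝ → E, u b = y ∧
    ∀ t ∈ Icc b (b + 1), HasDerivWithinAt u (F t (u t)) (Icc b (b + 1)) t) {u : ℝ → E} {b : ℝ} (hb : a ≤ b) (hu : SolOn F a u₀ u b) :
    ∃ u' : ℝ → E, SolOn F a u₀ u' (b + 1) ∧ ∀ t ∈ Iic b, u' t = u t := by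
  obtain ⟨u₂, hu₂0, hu₂⟩ := Hext b hb (u b)
  obtain ⟨u', h1, h2⟩ := ode_glue hb (by linarith) hu.2 hu₂ hu₂0
  exact ⟨u', ⟨(h1 a hb).trans hu.1, h2⟩, h1⟩

noncomputable def odeSeq (Hext : ∀ b, a ≤ b → ∀ y : E, ∃ u : ℝ → E, u b = y ∧
    ∀ t ∈ Icc b (b + 1), HasDerivWithinAt u (F t (u t)) (Icc b (b + 1)) t) : (n : ℕ) → {u : ℝ → E // SolOn F a u₀ u (a + n)}
  | 0 => ⟨fun _ => u₀, rfl, by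
      intro t ht
      simp only [Nat.cast_zero, add_zero] at ht ⊢
      rw [Icc_self] at ht ⊢
      rw [mem_singleton_iff] at ht
      subst ht
      exact my_hasDerivWithinAt_singleton _ _ _⟩
  | (n + 1) =>
    ⟨Classical.choose (ode_step F a u₀ Hext (le_add_of_nonneg_right n.cast_nonneg)
        (odeSeq Hext n).2), by
      have h := Classical.choose_spec (ode_step F a u₀ Hext
        (le_add_of_nonneg_right n.cast_nonneg) (odeSeq Hext n).2)
      have hcast : a + ((n : ℝ) + 1) = (a + n) + 1 := by ring
      rw [show ((n + 1 : ℕ) : ℝ) = (n : ℝ) + 1 by push_cast; ring, hcast]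
      exact h.1⟩

theorem odeSeq_succ_eq (Hext : ∀ b, a ≤ b → ∀ y : E, ∃ u : ℝ → E, u b = y ∧
    ∀ t ∈ Icc b (b + 1), HasDerivWithinAt u (F t (u t)) (Icc b (b + 1)) t) (n : ℕ) :
    ∀ t ∈ Iic (a + (n : ℝ)), (odeSeq F a u₀ Hext (n + 1)).1 t = (odeSeq F a u₀ Hext n).1 t := by
  intro t ht
  conv_lhs => rw [odeSeq]
  exact (Classical.choose_spec (ode_step F a u₀ Hext
    (le_add_of_nonneg_right n.cast_nonneg) (odeSeq F a u₀ Hext n).2)).2 t ht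

theorem odeSeq_mono (Hext : ∀ b, a ≤ b → ∀ y : E, ∃ u : ℝ → E, u b = y ∧
    ∀ t ∈ Icc b (b + 1), HasDerivWithinAt u (F t (u t)) (Icc b (b + 1)) t) (m n : ℕ) (hmn : m ≤ n) :
    ∀ t ∈ Iic (a + (m : ℝ)), (odeSeq F a u₀ Hext n).1 t = (odeSeq F a u₀ Hext m).1 t := by
  induction n, hmn using Nat.le_induction with
  | base => intro t _; rfl
  | succ n hmn ih =>
    intro t ht
    rw [odeSeq_succ_eq F a u₀ Hext n t (by
      have : (m : ℝ) ≤ n := by exact_mod_cast hmn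
      simp only [mem_Iic] at ht ⊢; linarith)]
    exact ih t ht

theorem ode_global (Hext : ∀ b, a ≤ b → ∀ y : E, ∃ u : ℝ → E, u b = y ∧
    ∀ t ∈ Icc b (b + 1), HasDerivWithinAt u (F t (u t)) (Icc b (b + 1)) t) : ∃ u : ℝ → E, u a = u₀ ∧
    ∀ t ∈ Ici a, HasDerivWithinAt u (F t (u t)) (Ici a) t := by
  set S : ℕ → ℝ → E := fun n => (odeSeq F a u₀ Hext n).1 with hS
  set u : ℝ → E := fun t => S (⌊t - a⌋₊ + 1) t with hu
  have key : ∀ (n : ℕ) (t : ℝ), t ≤ a + n → u t = S n t := by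
    intro n t ht
    set m := ⌊t - a⌋₊ + 1 with hm
    have htm : t ≤ a + m := by
      have := Nat.lt_floor_add_one (t - a)
      push_cast [hm]
      push_cast at this
      linarith
    rcases le_total m n with h | h
    · exact (odeSeq_mono F a u₀ Hext m n h t htm).symm
    · exact odeSeq_mono F a u₀ Hext n m h t ht
  refine ⟨u, ?_, ?_⟩
  · exact (odeSeq F a u₀ Hext _).2.1
  · intro t₀ ht₀
    set N := ⌊t₀ - a⌋₊ + 1 with hN
    have htN : t₀ < a + N := by
      have := Nat.lt_floor_add_one (t₀ - a)
      push_cast [hN]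
      push_cast at this
      linarith
    have hd := (odeSeq F a u₀ Hext N).2.2 t₀ ⟨ht₀, htN.le⟩
    have hmem : Icc a (a + (N : ℝ)) ∈ 𝓝[Ici a] t₀ := by
      rw [← Ici_inter_Iic]
      exact inter_mem_nhdsWithin _ (Iic_mem_nhds htN)
    have hd' : HasDerivWithinAt (S N) (F t₀ (S N t₀)) (Ici a) t₀ :=
      hd.mono_of_mem_nhdsWithin hmem
    have he : u =ᶠ[𝓝[Ici a] t₀] S N :=
      eventually_of_mem hmem fun s hs => key N s hs.2
    have := hd'.congr_of_eventuallyEq he (key N t₀ htN.le)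
    rwa [key N t₀ htN.le]
end Infra

section Analysis
variable {X : Type*} [NormedAddCommGroup X] [InnerProductSpace ℝ X] [FiniteDimensional ℝ X]
variable {f : X → ℝ} {Γ : ℝ → ℝ} {β c C : ℝ}

local notation "⟪" x ", " y "⟫" => @inner ℝ _ _ x y

theorem grad_contDiff (hf : ContDiff ℝ 2 f) : ContDiff ℝ 1 (gradient f) := by
  have h1 : ContDiff ℝ 1 (fderiv ℝ f) := hf.fderiv_right (by norm_num)
  exact ((InnerProductSpace.toDual ℝ X).symm.contDiff).comp h1

theorem grad_inner (p y : X) : ⟪gradient f p, y⟫ = fderiv ℝ f p y :=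
  InnerProductSpace.toDual_symm_apply

theorem energy_deriv (hf : ContDiff ℝ 2 f) {x w : ℝ → X} {s : Set ℝ} {t : ℝ}
    (hx : HasDerivWithinAt x (w t - β • gradient f (x t)) s t)
    (hw : HasDerivWithinAt w
      (-(Γ t) • (w t - β • gradient f (x t)) - gradient f (x t)) s t) :
    HasDerivWithinAt (fun τ => f (x τ) + ⟪w τ, w τ⟫ / 2)
      (-(Γ t * ⟪w t - β • gradient f (x t), w t - β • gradient f (x t)⟫
        + Γ t * β * ⟪gradient f (x t), w t - β • gradient f (x t)⟫
        + β * ⟪gradient f (x t), gradient f (x t)⟫)) s t := by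
  have hfd : HasFDerivAt f (fderiv ℝ f (x t)) (x t) :=
    ((hf.differentiable (by norm_num)) (x t)).hasFDerivAt
  have h1 : HasDerivWithinAt (fun τ => f (x τ))
      (fderiv ℝ f (x t) (w t - β • gradient f (x t))) s t :=
    hfd.comp_hasDerivWithinAt t hx
  rw [← grad_inner] at h1
  have h2 := (hw.inner ℝ hw).div_const 2
  refine (h1.add h2).congr_deriv ?_
  simp only [inner_sub_left, inner_sub_right, real_inner_smul_left, real_inner_smul_right,
    inner_neg_left, inner_neg_right]
  rw [real_inner_comm (w t) (gradient f (x t))]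
  ring

theorem quad_bound (hc : 0 < c) (hcC : c ≤ C) (hβpos : 0 < β) (hβ : β * C ^ 2 < 2 * c)
    {gb : ℝ} (hgb1 : c ≤ gb) (hgb2 : gb ≤ C) (p q : X) :
    c * β / (2 * (C + β)) * ⟪p, p⟫ + c * β / (2 * (C + β)) * ⟪q, q⟫ ≤
      gb * ⟪p, p⟫ + gb * β * ⟪q, p⟫ + β * ⟪q, q⟫ := by
  have hCβ : 0 < C + β := by linarith [hc.trans_le hcC]
  set ε := c * β / (2 * (C + β)) with hεdef
  have hε : 0 < ε := by positivity
  have hε2 : ε * (2 * (C + β)) = c * β := by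
    rw [hεdef]; field_simp
  have hgbpos : 0 < gb := hc.trans_le hgb1
  have hg2 : gb ^ 2 ≤ C ^ 2 := pow_le_pow_left₀ hgbpos.le hgb2 2
  have h1 : (gb * β) ^ 2 ≤ 2 * c * β := by nlinarith [mul_le_mul_of_nonneg_right hg2 (sq_nonneg β), mul_lt_mul_of_pos_right hβ hβpos]
  have h2 : 2 * gb * β ≤ 4 * (gb - ε) * (β - ε) := by nlinarith [sq_nonneg ε, mul_le_mul_of_nonneg_left hgb2 hε.le, mul_le_mul_of_nonneg_right hgb1 hβpos.le]
  have hkey : (gb * β) ^ 2 ≤ 4 * (gb - ε) * (β - ε) := by nlinarith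
  have hγε : 0 < gb - ε := by nlinarith [hε2]
  have hp : ⟪p, p⟫ = ‖p‖ ^ 2 := real_inner_self_eq_norm_sq p
  have hq : ⟪q, q⟫ = ‖q‖ ^ 2 := real_inner_self_eq_norm_sq q
  have hqp : -(‖q‖ * ‖p‖) ≤ ⟪q, p⟫ := (abs_le.mp (abs_real_inner_le_norm q p)).1
  rw [hp, hq]
  nlinarith [sq_nonneg (2 * (gb - ε) * ‖p‖ - gb * β * ‖q‖),
    mul_nonneg (sub_nonneg.mpr hkey) (sq_nonneg ‖q‖),
    mul_le_mul_of_nonneg_left hqp (by positivity : (0:ℝ) ≤ gb * β),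
    norm_nonneg p, norm_nonneg q]


/-- antitone from nonpositive derivative within Icc -/
theorem antitoneOn_Icc_of_hasDerivWithinAt {a b : ℝ} {ψ : ℝ → ℝ} {ψ' : ℝ → ℝ}
    (hd : ∀ t ∈ Icc a b, HasDerivWithinAt ψ (ψ' t) (Icc a b) t)
    (hnp : ∀ t ∈ Ioo a b, ψ' t ≤ 0) : AntitoneOn ψ (Icc a b) := by
  apply antitoneOn_of_deriv_nonpos (convex_Icc a b)
    (fun t ht => (hd t ht).continuousWithinAt)
  · rw [interior_Icc]
    intro t ht
    exact ((hd t (Ioo_subset_Icc_self ht)).hasDerivAt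
      (Icc_mem_nhds ht.1 ht.2)).differentiableAt.differentiableWithinAt
  · rw [interior_Icc]
    intro t ht
    rw [((hd t (Ioo_subset_Icc_self ht)).hasDerivAt (Icc_mem_nhds ht.1 ht.2)).deriv]
    exact hnp t ht

theorem apriori (hf : ContDiff ℝ 2 f) (hbdd : BddBelow (Set.range f))
    (hc : 0 < c) (hcC : c ≤ C) (hβpos : 0 < β) (hβ : β * C ^ 2 < 2 * c)
    (hΓ : ∀ t, c ≤ Γ t ∧ Γ t ≤ C)
    {t₀ b : ℝ} (htb : t₀ ≤ b) {x w : ℝ → X}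
    (hx : ∀ t ∈ Icc t₀ b,
      HasDerivWithinAt x (w t - β • gradient f (x t)) (Icc t₀ b) t)
    (hw : ∀ t ∈ Icc t₀ b, HasDerivWithinAt w
      (-(Γ t) • (w t - β • gradient f (x t)) - gradient f (x t)) (Icc t₀ b) t) :
    ∀ t ∈ Icc t₀ b,
      ‖x t‖ ≤ ‖x t₀‖ + (b - t₀) / 2
          + (f (x t₀) + ⟪w t₀, w t₀⟫ / 2 - sInf (range f)) / (c * β / (2 * (C + β)))
        ∧ ‖w t‖ ^ 2 ≤ 2 * (f (x t₀) + ⟪w t₀, w t₀⟫ / 2 - sInf (range f)) := by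
  have hCβ : 0 < C + β := by linarith [hc.trans_le hcC]
  set ε := c * β / (2 * (C + β)) with hεdef
  have hε : 0 < ε := by positivity
  set If := sInf (range f) with hIf
  have hinf : ∀ p : X, If ≤ f p := fun p => csInf_le hbdd (mem_range_self p)
  set M := f (x t₀) + ⟪w t₀, w t₀⟫ / 2 - If with hM
  have hM0 : 0 ≤ M := by
    have := hinf (x t₀)
    have := (real_inner_self_nonneg : (0:ℝ) ≤ ⟪w t₀, w t₀⟫)
    rw [hM]; linarith
  set v : ℝ → X := fun t => w t - β • gradient f (x t) with hv
  set g : ℝ → X := fun t => gradient f (x t) with hg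
  set Q : ℝ → ℝ := fun t =>
    Γ t * ⟪v t, v t⟫ + Γ t * β * ⟪g t, v t⟫ + β * ⟪g t, g t⟫ with hQdef
  set EE : ℝ → ℝ := fun τ => f (x τ) + ⟪w τ, w τ⟫ / 2 with hEE
  have hEd : ∀ t ∈ Icc t₀ b, HasDerivWithinAt EE (-(Q t)) (Icc t₀ b) t :=
    fun t ht => energy_deriv hf (hx t ht) (hw t ht)
  have hQv : ∀ t, ε * ⟪v t, v t⟫ ≤ Q t := by
    intro t
    have h := quad_bound hc hcC hβpos hβ (hΓ t).1 (hΓ t).2 (v t) (g t)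
    rw [← hεdef] at h
    have h2 := (real_inner_self_nonneg : (0:ℝ) ≤ ⟪g t, g t⟫)
    simp only [hQdef]
    linarith [mul_nonneg hε.le h2]
  have hQ0 : ∀ t, 0 ≤ Q t := by
    intro t
    have h := quad_bound hc hcC hβpos hβ (hΓ t).1 (hΓ t).2 (v t) (g t)
    rw [← hεdef] at h
    have h2 := (real_inner_self_nonneg : (0:ℝ) ≤ ⟪g t, g t⟫)
    have h3 := (real_inner_self_nonneg : (0:ℝ) ≤ ⟪v t, v t⟫)
    simp only [hQdef]
    linarith [mul_nonneg hε.le h2, mul_nonneg hε.le h3]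
  -- energy is antitone
  have hEanti : AntitoneOn EE (Icc t₀ b) :=
    antitoneOn_Icc_of_hasDerivWithinAt hEd
      (fun t ht => by simpa using neg_nonpos.mpr (hQ0 t))
  have hEle : ∀ t ∈ Icc t₀ b, EE t ≤ EE t₀ := fun t ht =>
    hEanti (left_mem_Icc.mpr htb) ht ht.1
  intro t₁ ht₁
  constructor
  · -- position bound
    have key : ∀ e : X, ‖e‖ ≤ 1 → ⟪x t₁ - x t₀, e⟫ ≤ (b - t₀) / 2 + M / ε := by
      intro e he
      set ψ : ℝ → ℝ := fun τ => ⟪x τ - x t₀, e⟫ + EE τ / ε - τ / 2 with hψ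
      have hψd : ∀ t ∈ Icc t₀ b,
          HasDerivWithinAt ψ (⟪v t, e⟫ - Q t / ε - 1 / 2) (Icc t₀ b) t := by
        intro t ht
        have h1 : HasDerivWithinAt (fun τ => ⟪x τ - x t₀, e⟫)
            (⟪x t - x t₀, (0:X)⟫ + ⟪v t, e⟫) (Icc t₀ b) t :=
          ((hx t ht).sub_const (x t₀)).inner ℝ (hasDerivWithinAt_const t _ e)
        have h2 := (hEd t ht).div_const ε
        have h3 : HasDerivWithinAt (fun τ : ℝ => τ / 2) (1 / 2) (Icc t₀ b) t :=
          (hasDerivWithinAt_id t _).div_const 2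
        have := (h1.add h2).sub h3
        refine this.congr_deriv ?_
        simp [inner_zero_right]
        ring
      have hψanti : AntitoneOn ψ (Icc t₀ b) := by
        apply antitoneOn_Icc_of_hasDerivWithinAt hψd
        intro t _
        have h1 : ⟪v t, e⟫ ≤ ‖v t‖ := by
          calc ⟪v t, e⟫ ≤ ‖v t‖ * ‖e‖ := real_inner_le_norm _ _
            _ ≤ ‖v t‖ * 1 := by
                exact mul_le_mul_of_nonneg_left he (norm_nonneg _)
            _ = ‖v t‖ := mul_one _
        have h2 : ‖v t‖ ^ 2 ≤ Q t / ε := by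
          rw [le_div_iff₀ hε]
          have := hQv t
          rw [real_inner_self_eq_norm_sq] at this
          linarith
        nlinarith [sq_nonneg (‖v t‖ - 1 / 2)]
      have := hψanti (left_mem_Icc.mpr htb) ht₁ ht₁.1
      rw [hψ] at this
      simp only [sub_self, inner_zero_left] at this
      have hEt₁ : If ≤ EE t₁ := by
        have := hinf (x t₁)
        have := (real_inner_self_nonneg : (0:ℝ) ≤ ⟪w t₁, w t₁⟫)
        rw [hEE]; dsimp only; linarith
      have hdiv : EE t₀ / ε - EE t₁ / ε ≤ M / ε := by
        rw [← sub_div]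
        apply (div_le_div_iff_of_pos_right hε).mpr
        rw [hM, hEE]; dsimp only
        linarith [hinf (x t₁), (real_inner_self_nonneg : (0:ℝ) ≤ ⟪w t₁, w t₁⟫)]
      have ht₁b := ht₁.2
      linarith
    rcases eq_or_ne (x t₁) (x t₀) with hxx | hxx
    · rw [hxx]
      have h1 : (0:ℝ) ≤ (b - t₀) / 2 := by linarith
      have h2 : (0:ℝ) ≤ M / ε := by positivity
      linarith
    · have hz : x t₁ - x t₀ ≠ 0 := sub_ne_zero.mpr hxx
      have hnz : ‖x t₁ - x t₀‖ ≠ 0 := norm_ne_zero_iff.mpr hz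
      have he : ‖(‖x t₁ - x t₀‖⁻¹ • (x t₁ - x t₀))‖ ≤ 1 := by
        rw [norm_smul, norm_inv, norm_norm, inv_mul_cancel₀ hnz]
      have hze : ⟪x t₁ - x t₀, ‖x t₁ - x t₀‖⁻¹ • (x t₁ - x t₀)⟫ = ‖x t₁ - x t₀‖ := by
        rw [real_inner_smul_right, real_inner_self_eq_norm_sq]
        field_simp
      have hk := key _ he
      rw [hze] at hk
      have htri : ‖x t₁‖ - ‖x t₀‖ ≤ ‖x t₁ - x t₀‖ := norm_sub_norm_le _ _
      linarith
  · -- velocity bound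
    have h := hEle t₁ ht₁
    have h2 := hinf (x t₁)
    rw [hEE] at h
    dsimp only at h
    rw [← real_inner_self_eq_norm_sq]
    rw [hM]
    linarith


/-- the first-order vector field for ISEHD in the variables `(x, w) = (x, ẋ + β ∇f(x))`. -/
noncomputable def Fld (f : X → ℝ) (Γ : ℝ → ℝ) (β : ℝ) : ℝ → X × X → X × X := fun t u =>
  (u.2 - β • gradient f u.1,
    -(Γ t) • (u.2 - β • gradient f u.1) - gradient f u.1)


theorem field_bounds {f : X → ℝ} {Γ : ℝ → ℝ} {β c C : ℝ}
    (hf : ContDiff ℝ 2 f) (hc : 0 < c) (hcC : c ≤ C) (hβpos : 0 < β)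
    (hΓb : ∀ t, c ≤ Γ t ∧ Γ t ≤ C) (r : ℝ) :
    ∃ (L : NNReal) (B : ℝ), 0 < B ∧
      (∀ t, LipschitzOnWith L (Fld f Γ β t) (closedBall (0 : X × X) r)) ∧
      (∀ t u, u ∈ closedBall (0 : X × X) r → ‖Fld f Γ β t u‖ ≤ B) := by
  have hC : 0 < C := hc.trans_le hcC
  have hg1 : ContDiff ℝ 1 (gradient f) := grad_contDiff hf
  obtain ⟨Kg0, hKg0⟩ := (isCompact_closedBall (0:X) r).exists_bound_of_continuousOn
    (hg1.continuous_fderiv one_ne_zero).continuousOn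
  set Kg := max Kg0 0 with hKgdef
  have hKg : 0 ≤ Kg := le_max_right _ _
  have hgl : LipschitzOnWith (Real.toNNReal Kg) (gradient f) (closedBall (0:X) r) := by
    apply Convex.lipschitzOnWith_of_nnnorm_hasFDerivWithin_le
      (f' := fun p => fderiv ℝ (gradient f) p)
      (fun p _ => ((hg1.differentiable one_ne_zero) p).hasFDerivAt.hasFDerivWithinAt)
      ?_ (convex_closedBall 0 r)
    intro p hp
    rw [← NNReal.coe_le_coe, coe_nnnorm, Real.coe_toNNReal _ hKg]
    exact (hKg0 p hp).trans (le_max_left _ _)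
  have hglip : ∀ p q : X, p ∈ closedBall (0:X) r → q ∈ closedBall (0:X) r →
      ‖gradient f p - gradient f q‖ ≤ Kg * ‖p - q‖ := by
    intro p q hp hq
    have := (lipschitzOnWith_iff_norm_sub_le.mp hgl) hp hq
    rwa [Real.coe_toNNReal _ hKg] at this
  obtain ⟨Bg0, hBg0⟩ := (isCompact_closedBall (0:X) r).exists_bound_of_continuousOn
    (hg1.continuous.continuousOn (s := closedBall (0:X) r))
  set Bg := max Bg0 0 with hBgdef
  have hBg : 0 ≤ Bg := le_max_right _ _
  have hBg' : ∀ p ∈ closedBall (0:X) r, ‖gradient f p‖ ≤ Bg :=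
    fun p hp => (hBg0 p hp).trans (le_max_left _ _)
  set L1 : ℝ := 1 + β * Kg with hL1
  have hL1pos : 0 < L1 := by positivity
  set Lr : ℝ := L1 + (C * L1 + Kg) with hLr
  set B : ℝ := (1 + C) * ((|r| + β * Bg) + Bg) + 1 with hB
  have hBpos : 0 < B := by
    have h0 : (0:ℝ) ≤ (1 + C) * ((|r| + β * Bg) + Bg) :=
      mul_nonneg (by linarith) (by positivity)
    rw [hB]; linarith
  refine ⟨Real.toNNReal Lr, B, hBpos, ?_, ?_⟩
  · -- Lipschitz
    intro t
    rw [lipschitzOnWith_iff_norm_sub_le]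
    intro u hu u' hu'
    rw [Real.coe_toNNReal _ (by positivity)]
    have hu1 : u.1 ∈ closedBall (0:X) r := by
      rw [mem_closedBall_zero_iff] at hu ⊢
      exact (norm_fst_le u).trans hu
    have hu'1 : u'.1 ∈ closedBall (0:X) r := by
      rw [mem_closedBall_zero_iff] at hu' ⊢
      exact (norm_fst_le u').trans hu'
    have hgd : ‖gradient f u.1 - gradient f u'.1‖ ≤ Kg * ‖u - u'‖ := by
      refine (hglip u.1 u'.1 hu1 hu'1).trans ?_
      have : ‖u.1 - u'.1‖ ≤ ‖u - u'‖ := norm_fst_le (u - u')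
      exact mul_le_mul_of_nonneg_left this hKg
    have hsnd : ‖u.2 - u'.2‖ ≤ ‖u - u'‖ := norm_snd_le (u - u')
    set p1 : X := u.2 - β • gradient f u.1 with hp1
    set p2 : X := u'.2 - β • gradient f u'.1 with hp2
    have hA : ‖p1 - p2‖ ≤ L1 * ‖u - u'‖ := by
      have heq : p1 - p2 = (u.2 - u'.2) - β • (gradient f u.1 - gradient f u'.1) := by
        rw [hp1, hp2]; module
      rw [heq, hL1]
      refine (norm_sub_le _ _).trans ?_
      rw [norm_smul, Real.norm_eq_abs, abs_of_pos hβpos]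
      nlinarith [norm_nonneg (u - u')]
    have hΓt : |Γ t| ≤ C := by
      rw [abs_of_pos (hc.trans_le (hΓb t).1)]; exact (hΓb t).2
    have hB2 : ‖(-(Γ t) • p1 - gradient f u.1) - (-(Γ t) • p2 - gradient f u'.1)‖
        ≤ (C * L1 + Kg) * ‖u - u'‖ := by
      have heq : (-(Γ t) • p1 - gradient f u.1) - (-(Γ t) • p2 - gradient f u'.1)
          = -(Γ t) • (p1 - p2) - (gradient f u.1 - gradient f u'.1) := by
        module
      rw [heq]
      refine (norm_sub_le _ _).trans ?_
      rw [norm_smul, Real.norm_eq_abs, abs_neg]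
      nlinarith [norm_nonneg (p1 - p2), norm_nonneg (u - u'), abs_nonneg (Γ t),
        mul_le_mul hΓt hA (norm_nonneg _) (le_of_lt hC)]
    have hnorm : ‖Fld f Γ β t u - Fld f Γ β t u'‖
        = max ‖p1 - p2‖ ‖(-(Γ t) • p1 - gradient f u.1) - (-(Γ t) • p2 - gradient f u'.1)‖ := by
      rw [Prod.norm_def]; rfl
    rw [hnorm]
    apply max_le
    · refine hA.trans ?_
      rw [hLr]
      nlinarith [norm_nonneg (u - u'), mul_nonneg (mul_nonneg hC.le hL1pos.le)
        (norm_nonneg (u - u')), mul_nonneg hKg (norm_nonneg (u - u'))]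
    · refine hB2.trans ?_
      rw [hLr]
      nlinarith [norm_nonneg (u - u'), mul_nonneg hL1pos.le (norm_nonneg (u - u'))]
  · -- Bound
    intro t u hu
    have hu1 : u.1 ∈ closedBall (0:X) r := by
      rw [mem_closedBall_zero_iff] at hu ⊢
      exact (norm_fst_le u).trans hu
    have hu2 : ‖u.2‖ ≤ |r| := by
      rw [mem_closedBall_zero_iff] at hu
      exact (norm_snd_le u).trans (hu.trans (le_abs_self r))
    have hgb := hBg' u.1 hu1
    have hA : ‖u.2 - β • gradient f u.1‖ ≤ |r| + β * Bg := by
      refine (norm_sub_le _ _).trans ?_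
      rw [norm_smul, Real.norm_eq_abs, abs_of_pos hβpos]
      nlinarith
    have hΓt : |Γ t| ≤ C := by
      rw [abs_of_pos (hc.trans_le (hΓb t).1)]; exact (hΓb t).2
    have hB2 : ‖-(Γ t) • (u.2 - β • gradient f u.1) - gradient f u.1‖
        ≤ C * (|r| + β * Bg) + Bg := by
      refine (norm_sub_le _ _).trans ?_
      rw [norm_smul, Real.norm_eq_abs, abs_neg]
      have := mul_le_mul hΓt hA (norm_nonneg _) hC.le
      nlinarith
    have hnorm : ‖Fld f Γ β t u‖ = max ‖u.2 - β • gradient f u.1‖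
        ‖-(Γ t) • (u.2 - β • gradient f u.1) - gradient f u.1‖ := by
      rw [Prod.norm_def]; rfl
    rw [hnorm]
    apply max_le
    · refine hA.trans ?_
      rw [hB]
      nlinarith [abs_nonneg r, mul_nonneg (mul_nonneg hC.le hβpos.le) hBg]
    · refine hB2.trans ?_
      rw [hB]
      nlinarith [abs_nonneg r, mul_nonneg hβpos.le hBg]

theorem pl_step {E : Type*} [NormedAddCommGroup E] [NormedSpace ℝ E] [CompleteSpace E]
    {F : ℝ → E → E} {a h : ℝ} (hh : 0 ≤ h) (u₀ : E) {r : ℝ} (hr : 0 < r)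
    {L : NNReal} {B : ℝ}
    (hcont : ∀ z : E, ContinuousOn (fun t => F t z) (Icc a (a + h)))
    (hLip : ∀ t, LipschitzOnWith L (F t) (closedBall u₀ r))
    (hBd : ∀ t u, u ∈ closedBall u₀ r → ‖F t u‖ ≤ B)
    (hBh : B * h ≤ r) :
    ∃ u : ℝ → E, u a = u₀ ∧
      ∀ t ∈ Icc a (a + h), HasDerivWithinAt u (F t (u t)) (Icc a (a + h)) t := by
  have hB0 : 0 ≤ B := (norm_nonneg _).trans (hBd a u₀ (mem_closedBall_self hr.le))
  have hpl : IsPicardLindelof F (tmin := a) (tmax := a + h) ⟨a, le_rfl, by linarith⟩ u₀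
      (Real.toNNReal r) 0 (Real.toNNReal B) L :=
    { lipschitzOnWith := fun t _ => by rw [Real.coe_toNNReal _ hr.le]; exact hLip t
      continuousOn := fun z _ => hcont z
      norm_le := fun t _ z hz => by
        rw [Real.coe_toNNReal _ hB0]
        exact hBd t z (by rwa [Real.coe_toNNReal _ hr.le] at hz)
      mul_max_le := by
        simp only [Real.coe_toNNReal _ hr.le, Real.coe_toNNReal _ hB0, NNReal.coe_zero, sub_zero]
        rw [show a + h - a = h by ring, show a - a = 0 by ring, max_eq_left hh]
        exact hBh }
  exact hpl.exists_eq_forall_mem_Icc_hasDerivWithinAt₀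

theorem ext_one (hf : ContDiff ℝ 2 f) (hbdd : BddBelow (Set.range f))
    (hΓc : Continuous Γ) (hΓb : ∀ t, c ≤ Γ t ∧ Γ t ≤ C)
    (hc : 0 < c) (hcC : c ≤ C) (hβpos : 0 < β) (hβ : β * C ^ 2 < 2 * c)
    (b : ℝ) (y : X × X) :
    ∃ u : ℝ → X × X, u b = y ∧
      ∀ t ∈ Icc b (b + 1), HasDerivWithinAt u (Fld f Γ β t (u t)) (Icc b (b + 1)) t := by
  classical
  have hCβ : 0 < C + β := by linarith [hc.trans_le hcC]
  set ε := c * β / (2 * (C + β)) with hεdef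
  have hε : 0 < ε := by positivity
  set If := sInf (range f) with hIfdef
  set M := f y.1 + ⟪y.2, y.2⟫ / 2 - If with hMdef
  have hM0 : 0 ≤ M := by
    have h1 : If ≤ f y.1 := csInf_le hbdd (mem_range_self y.1)
    have h2 := (real_inner_self_nonneg : (0:ℝ) ≤ ⟪y.2, y.2⟫)
    rw [hMdef]; linarith
  set ρ : ℝ := max (‖y.1‖ + 1 / 2 + M / ε) (M + 1 / 2) with hρdef
  obtain ⟨L, B, hBpos, hL, hBd⟩ := field_bounds hf hc hcC hβpos hΓb (ρ + 1)
  set h := min (1 / B) 1 with hhdef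
  have hhpos : 0 < h := lt_min (by positivity) one_pos
  have main : ∀ n : ℕ, ∃ u : ℝ → X × X, u b = y ∧
      ∀ t ∈ Icc b (b + min ((n : ℝ) * h) 1),
        HasDerivWithinAt u (Fld f Γ β t (u t)) (Icc b (b + min ((n : ℝ) * h) 1)) t := by
    intro n
    induction n with
    | zero =>
      refine ⟨fun _ => y, rfl, ?_⟩
      intro t ht
      have e0 : min ((0 : ℕ) * h : ℝ) 1 = 0 := by norm_num
      rw [Nat.cast_zero] at ht ⊢
      rw [show min ((0:ℝ) * h) 1 = 0 by norm_num, add_zero, Icc_self] at ht ⊢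
      rw [mem_singleton_iff] at ht
      subst ht
      exact my_hasDerivWithinAt_singleton _ _ _
    | succ n ih =>
      obtain ⟨u, hu0, hu⟩ := ih
      have hcast : ((n + 1 : ℕ) : ℝ) = (n : ℝ) + 1 := by push_cast; ring
      rcases le_or_gt 1 ((n : ℝ) * h) with hc1 | hc1
      · have e1 : min ((n : ℝ) * h) 1 = 1 := min_eq_right hc1
        have e2 : min (((n + 1 : ℕ) : ℝ) * h) 1 = 1 := by
          rw [hcast]
          exact min_eq_right (by nlinarith)
        rw [e1] at hu
        rw [e2]
        exact ⟨u, hu0, hu⟩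
      · have hnh0 : (0:ℝ) ≤ (n : ℝ) * h := by positivity
        have e1 : min ((n : ℝ) * h) 1 = (n : ℝ) * h := min_eq_left hc1.le
        rw [e1] at hu
        set b1 := b + (n : ℝ) * h with hb1def
        have hbb1 : b ≤ b1 := by rw [hb1def]; linarith
        -- component derivatives
        have hx : ∀ t ∈ Icc b b1, HasDerivWithinAt (fun τ => (u τ).1)
            ((fun τ => (u τ).2) t - β • gradient f ((fun τ => (u τ).1) t)) (Icc b b1) t := by
          intro t ht
          exact (ContinuousLinearMap.fst ℝ X X).hasFDerivAt.comp_hasDerivWithinAt t (hu t ht)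
        have hw : ∀ t ∈ Icc b b1, HasDerivWithinAt (fun τ => (u τ).2)
            (-(Γ t) • ((fun τ => (u τ).2) t - β • gradient f ((fun τ => (u τ).1) t))
              - gradient f ((fun τ => (u τ).1) t)) (Icc b b1) t := by
          intro t ht
          exact (ContinuousLinearMap.snd ℝ X X).hasFDerivAt.comp_hasDerivWithinAt t (hu t ht)
        have hap := apriori hf hbdd hc hcC hβpos hβ hΓb hbb1 hx hw
        have hapb1 := hap b1 (right_mem_Icc.mpr hbb1)
        rw [hu0] at hapb1
        have h1 : ‖(u b1).1‖ ≤ ‖y.1‖ + 1 / 2 + M / ε := by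
          have := hapb1.1
          rw [← hεdef, ← hIfdef, ← hMdef] at this
          have harr : (b1 - b) / 2 ≤ 1 / 2 := by rw [hb1def]; linarith
          have hMε : (0:ℝ) ≤ M / ε := by positivity
          linarith
        have h2 : ‖(u b1).2‖ ≤ M + 1 / 2 := by
          have := hapb1.2
          rw [← hIfdef, ← hMdef] at this
          nlinarith [sq_nonneg (‖(u b1).2‖ - 1), norm_nonneg (u b1).2]
        have hcenter : ‖u b1‖ ≤ ρ := by
          rw [Prod.norm_def]
          exact max_le (h1.trans (le_max_left _ _)) (h2.trans (le_max_right _ _))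
        have hsub : closedBall (u b1) 1 ⊆ closedBall (0 : X × X) (ρ + 1) := by
          apply closedBall_subset_closedBall'
          rw [dist_zero_right]
          linarith
        set h2' := min h (1 - (n : ℝ) * h) with hh2def
        have hh2pos : 0 < h2' := lt_min hhpos (by linarith)
        have hcont : ∀ z : X × X, ContinuousOn (fun t => Fld f Γ β t z) (Icc b1 (b1 + h2')) := by
          intro z
          apply Continuous.continuousOn
          exact continuous_const.prodMk (((hΓc.neg).smul continuous_const).sub continuous_const)
        have hBh : B * h2' ≤ 1 := by
          have h1' : h2' ≤ 1 / B := (min_le_left _ _).trans (min_le_left _ _)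
          calc B * h2' ≤ B * (1 / B) := mul_le_mul_of_nonneg_left h1' hBpos.le
            _ = 1 := by field_simp
        obtain ⟨u₂, hu₂0, hu₂⟩ := pl_step hh2pos.le (u b1) one_pos hcont
          (fun t => (hL t).mono hsub) (fun t z hz => hBd t z (hsub hz)) hBh
        obtain ⟨u', hle', hsol'⟩ := ode_glue hbb1 (by linarith) hu hu₂ hu₂0
        have harith : b1 + h2' = b + min (((n + 1 : ℕ) : ℝ) * h) 1 := by
          rw [hcast, hb1def, hh2def]
          rcases le_total h (1 - (n : ℝ) * h) with hle | hle
          · rw [min_eq_left hle, min_eq_left (by linarith)]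
            ring
          · rw [min_eq_right hle, min_eq_right (by nlinarith)]
            ring
        rw [harith] at hsol'
        exact ⟨u', by rw [hle' b (mem_Iic.mpr hbb1)]; exact hu0, hsol'⟩
  obtain ⟨u, hu0, hu⟩ := main ⌈1 / h⌉₊
  have hge : (1:ℝ) ≤ (⌈1 / h⌉₊ : ℝ) * h := by
    have := Nat.le_ceil (1 / h)
    calc (1:ℝ) = (1 / h) * h := by field_simp
      _ ≤ (⌈1 / h⌉₊ : ℝ) * h := mul_le_mul_of_nonneg_right this hhpos.le
  rw [min_eq_right hge] at hu
  exact ⟨u, hu0, hu⟩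


end Analysis


/-- Existence of a global solution of the inertial system with
explicit Hessian damping (ISEHD):
`ẍ(t) + γ(t)ẋ(t) + β∇²f(x(t))ẋ(t) + ∇f(x(t)) = 0` on `(0,∞)`,
with `x(0) = x₀` and `ẋ(0) = v₀`.  A `C²` solution on `[0,∞)` is encoded by
its position `x`, velocity `v` and (continuous) acceleration `a`. -/
theorem isehd_global_existence
    (d : ℕ) (f : EuclideanSpace ℝ (Fin d) → ℝ) (γ : ℝ → ℝ) (β c C : ℝ)
    (hf : ContDiff ℝ 2 f) (hbdd : BddBelow (Set.range f))
    (hγ : ContDiffOn ℝ 1 γ (Set.Ici 0))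
    (hc : 0 < c) (hcC : c ≤ C)
    (hγb : ∀ t ∈ Set.Ici (0:ℝ), c ≤ γ t ∧ γ t ≤ C)
    (hβpos : 0 < β) (hβ : β < 2 * c / C ^ 2)
    (x₀ v₀ : EuclideanSpace ℝ (Fin d)) :
    ∃ x v a : ℝ → EuclideanSpace ℝ (Fin d),
      (∀ t ∈ Set.Ici (0:ℝ), HasDerivWithinAt x (v t) (Set.Ici 0) t) ∧
      (∀ t ∈ Set.Ici (0:ℝ), HasDerivWithinAt v (a t) (Set.Ici 0) t) ∧
      ContinuousOn a (Set.Ici 0) ∧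
      (∀ t > (0:ℝ),
        a t + γ t • v t + β • fderiv ℝ (gradient f) (x t) (v t) + gradient f (x t) = 0) ∧
      x 0 = x₀ ∧ v 0 = v₀ := by
  classical
  have hC : 0 < C := lt_of_lt_of_le hc hcC
  set Γ : ℝ → ℝ := fun t => γ (max t 0) with hΓdef
  have hΓc : Continuous Γ :=
    hγ.continuousOn.comp_continuous (continuous_id.max continuous_const)
      (fun t => mem_Ici.mpr (le_max_right t 0))
  have hΓb : ∀ t, c ≤ Γ t ∧ Γ t ≤ C := fun t => hγb _ (mem_Ici.mpr (le_max_right t 0))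
  have hβ' : β * C ^ 2 < 2 * c := by
    rw [lt_div_iff₀ (by positivity)] at hβ
    linarith
  have Hext : ∀ b, (0:ℝ) ≤ b → ∀ y : EuclideanSpace ℝ (Fin d) × EuclideanSpace ℝ (Fin d),
      ∃ u : ℝ → EuclideanSpace ℝ (Fin d) × EuclideanSpace ℝ (Fin d), u b = y ∧
        ∀ t ∈ Icc b (b + 1), HasDerivWithinAt u (Fld f Γ β t (u t)) (Icc b (b + 1)) t :=
    fun b _ y => ext_one hf hbdd hΓc hΓb hc hcC hβpos hβ' b y
  obtain ⟨u, hu0, hu⟩ := ode_global (Fld f Γ β) 0 (x₀, v₀ + β • gradient f x₀) Hext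
  set x : ℝ → EuclideanSpace ℝ (Fin d) := fun t => (u t).1 with hxdef
  set w : ℝ → EuclideanSpace ℝ (Fin d) := fun t => (u t).2 with hwdef
  set v : ℝ → EuclideanSpace ℝ (Fin d) := fun t => w t - β • gradient f (x t) with hvdef
  set a : ℝ → EuclideanSpace ℝ (Fin d) := fun t =>
    -(Γ t) • v t - gradient f (x t) - β • (fderiv ℝ (gradient f) (x t)) (v t) with hadef
  have hgC1 : ContDiff ℝ 1 (gradient f) := grad_contDiff hf
  have hx : ∀ t ∈ Ici (0:ℝ), HasDerivWithinAt x (v t) (Ici 0) t := by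
    intro t ht
    exact (ContinuousLinearMap.fst ℝ (EuclideanSpace ℝ (Fin d)) (EuclideanSpace ℝ (Fin d))
      ).hasFDerivAt.comp_hasDerivWithinAt t (hu t ht)
  have hw : ∀ t ∈ Ici (0:ℝ), HasDerivWithinAt w (-(Γ t) • v t - gradient f (x t)) (Ici 0) t := by
    intro t ht
    exact (ContinuousLinearMap.snd ℝ (EuclideanSpace ℝ (Fin d)) (EuclideanSpace ℝ (Fin d))
      ).hasFDerivAt.comp_hasDerivWithinAt t (hu t ht)
  have hgx : ∀ t ∈ Ici (0:ℝ), HasDerivWithinAt (fun τ => gradient f (x τ))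
      ((fderiv ℝ (gradient f) (x t)) (v t)) (Ici 0) t := by
    intro t ht
    exact (((hgC1.differentiable one_ne_zero) (x t)).hasFDerivAt).comp_hasDerivWithinAt t (hx t ht)
  have hv : ∀ t ∈ Ici (0:ℝ), HasDerivWithinAt v (a t) (Ici 0) t := by
    intro t ht
    exact (hw t ht).sub ((hgx t ht).const_smul β)
  have hxc : ContinuousOn x (Ici 0) := fun t ht => (hx t ht).continuousWithinAt
  have hwc : ContinuousOn w (Ici 0) := fun t ht => (hw t ht).continuousWithinAt
  have hgc : Continuous (gradient f) := hgC1.continuous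
  have hvc : ContinuousOn v (Ici 0) :=
    hwc.sub ((hgc.comp_continuousOn hxc).const_smul β)
  have hDgc : Continuous (fderiv ℝ (gradient f)) := hgC1.continuous_fderiv one_ne_zero
  have hac : ContinuousOn a (Ici 0) := by
    apply ContinuousOn.sub
    · apply ContinuousOn.sub
      · exact ContinuousOn.smul (hΓc.neg.continuousOn) hvc
      · exact hgc.comp_continuousOn hxc
    · exact (ContinuousOn.clm_apply (hDgc.comp_continuousOn hxc) hvc).const_smul β
  refine ⟨x, v, a, hx, hv, hac, ?_, ?_, ?_⟩
  · intro t ht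
    have hΓt : Γ t = γ t := by rw [hΓdef]; simp [max_eq_left ht.le]
    rw [hadef]
    dsimp only
    rw [hΓt]
    module
  · rw [hxdef]; dsimp only; rw [hu0]
  · rw [hvdef, hwdef, hxdef]; dsimp only; rw [hu0]; dsimp only; module
end

section
/- Let x ∈ C²([0,T); ℝ^d) be a solution of the ISEHD equation on [0,T), and define the energy V(t) = f(x(t)) + ½‖ẋ(t) + β∇f(x(t))‖². Then, with δ₁ := min(c/2, β(1 − βC²/(2c))) > 0, one has V'(t) ≤ −δ₁(‖ẋ(t)‖² + ‖∇f(x(t))‖²) for all t ∈ (0,T); in particular V is non-increasing. -/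
open Filter Topology Set MeasureTheory
open scoped RealInnerProductSpace

/-- Lyapunov decay for the ISEHD dynamics on `[0,T)`:
with `V(t) = f(x(t)) + ½‖ẋ(t) + β∇f(x(t))‖²` and
`δ₁ = min(c/2, β(1 − βC²/(2c))) > 0`, one has
`V'(t) ≤ −δ₁(‖ẋ(t)‖² + ‖∇f(x(t))‖²)` on `(0,T)`; in particular `V` is
non-increasing on `[0,T)`. -/
theorem isehd_lyapunov_decay
    (d : ℕ) (f : EuclideanSpace ℝ (Fin d) → ℝ) (γ : ℝ → ℝ) (β c C T : ℝ)
    (hf : ContDiff ℝ 2 f) (hbdd : BddBelow (Set.range f))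
    (hγ : ContDiffOn ℝ 1 γ (Set.Ici 0))
    (hc : 0 < c) (hcC : c ≤ C)
    (hγb : ∀ t ∈ Set.Ici (0:ℝ), c ≤ γ t ∧ γ t ≤ C)
    (hβpos : 0 < β) (hβ : β < 2 * c / C ^ 2)
    (hT : 0 < T)
    (x v a : ℝ → EuclideanSpace ℝ (Fin d))
    (hx : ∀ t ∈ Set.Ico (0:ℝ) T, HasDerivWithinAt x (v t) (Set.Ico 0 T) t)
    (hv : ∀ t ∈ Set.Ico (0:ℝ) T, HasDerivWithinAt v (a t) (Set.Ico 0 T) t)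
    (ha : ContinuousOn a (Set.Ico 0 T))
    (hode : ∀ t ∈ Set.Ioo (0:ℝ) T,
      a t + γ t • v t + β • fderiv ℝ (gradient f) (x t) (v t) + gradient f (x t) = 0) :
    0 < min (c / 2) (β * (1 - β * C ^ 2 / (2 * c))) ∧
    (∀ t ∈ Set.Ioo (0:ℝ) T, ∃ V' : ℝ,
      HasDerivWithinAt
        (fun s => f (x s) + (1 / 2) * ‖v s + β • gradient f (x s)‖ ^ 2)
        V' (Set.Ico 0 T) t ∧
      V' ≤ - min (c / 2) (β * (1 - β * C ^ 2 / (2 * c)))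
            * (‖v t‖ ^ 2 + ‖gradient f (x t)‖ ^ 2)) ∧
    AntitoneOn (fun s => f (x s) + (1 / 2) * ‖v s + β • gradient f (x s)‖ ^ 2)
      (Set.Ico 0 T) := by
  have hC : (0:ℝ) < C := lt_of_lt_of_le hc hcC
  have hβC2 : β * C ^ 2 < 2 * c := (lt_div_iff₀ (by positivity)).mp hβ
  set δ : ℝ := min (c / 2) (β * (1 - β * C ^ 2 / (2 * c))) with hδdef
  have hδpos : 0 < δ := by
    apply lt_min (by positivity)
    have : β * C ^ 2 / (2 * c) < 1 := (div_lt_one (by positivity)).mpr hβC2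
    nlinarith
  -- smoothness of gradient
  have hg1 : ContDiff ℝ 1 (gradient f) := by
    have h1 : ContDiff ℝ 1 (fderiv ℝ f) := hf.fderiv_right (by norm_num)
    exact (InnerProductSpace.toDual ℝ (EuclideanSpace ℝ (Fin d))).symm.contDiff.comp h1
  have hfd1 : Differentiable ℝ f := hf.differentiable (by norm_num)
  set g : ℝ → EuclideanSpace ℝ (Fin d) := fun s => gradient f (x s) with hgdef
  set u : ℝ → EuclideanSpace ℝ (Fin d) := fun s => v s + β • g s with hudef
  set W : ℝ → ℝ := fun t =>
    ((inner ℝ (g t) (v t) : ℝ) + (inner ℝ (u t) (a t + β • fderiv ℝ (gradient f) (x t) (v t)) : ℝ)) with hWdef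
  -- derivative of V at every point of Ico
  have hVd : ∀ t ∈ Set.Ico (0:ℝ) T,
      HasDerivWithinAt (fun s => f (x s) + (1 / 2) * ‖v s + β • gradient f (x s)‖ ^ 2)
        (W t) (Set.Ico 0 T) t := by
    intro t ht
    have hxd := hx t ht
    have hgd : HasDerivWithinAt g (fderiv ℝ (gradient f) (x t) (v t)) (Set.Ico 0 T) t :=
      ((hg1.differentiable one_ne_zero) (x t)).hasFDerivAt.comp_hasDerivWithinAt t hxd
    have hfd : HasDerivWithinAt (fun s => f (x s)) (fderiv ℝ f (x t) (v t)) (Set.Ico 0 T) t :=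
      (hfd1 (x t)).hasFDerivAt.comp_hasDerivWithinAt t hxd
    have hud : HasDerivWithinAt u (a t + β • fderiv ℝ (gradient f) (x t) (v t))
        (Set.Ico 0 T) t := (hv t ht).add (hgd.const_smul β)
    have hinner := (hud.inner ℝ hud)
    have hsum : HasDerivWithinAt (fun s => f (x s) + 1/2 * (inner ℝ (u s) (u s) : ℝ)) _ (Set.Ico 0 T) t :=
      hfd.add (hinner.const_mul (1/2 : ℝ))
    have hfun : (fun s => f (x s) + 1/2 * (inner ℝ (u s) (u s) : ℝ))
        = (fun s => f (x s) + (1 / 2) * ‖v s + β • gradient f (x s)‖ ^ 2) := by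
      funext s
      rw [real_inner_self_eq_norm_sq]
    rw [hfun] at hsum
    convert hsum using 1
    have hfg : fderiv ℝ f (x t) (v t) = (inner ℝ (g t) (v t) : ℝ) := by
      rw [hgdef]; simp only [gradient]
      rw [InnerProductSpace.toDual_symm_apply]
    rw [hWdef, hfg]
    simp only [real_inner_comm (u t)]
    ring
  -- bound on W on Ioo
  have hWb : ∀ t ∈ Set.Ioo (0:ℝ) T,
      W t ≤ -δ * (‖v t‖ ^ 2 + ‖gradient f (x t)‖ ^ 2) := by
    intro t ht
    have hγt := hγb t (le_of_lt ht.1)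
    have hu' : a t + β • fderiv ℝ (gradient f) (x t) (v t)
        = -(γ t • v t) - g t := by
      have h := hode t ht
      rw [show a t + β • fderiv ℝ (gradient f) (x t) (v t)
          = (a t + γ t • v t + β • fderiv ℝ (gradient f) (x t) (v t) + gradient f (x t))
            - (γ t • v t) - gradient f (x t) by abel, h]
      rw [hgdef]; abel
    have hW : W t = -(γ t) * ‖v t‖ ^ 2 - (β * γ t) * (inner ℝ (g t) (v t) : ℝ) - β * ‖g t‖ ^ 2 := by
      rw [hWdef]
      simp only [hu', hudef, inner_sub_right, inner_neg_right, inner_add_left,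
        inner_smul_left, inner_smul_right, real_inner_self_eq_norm_sq,
        RCLike.star_def, conj_trivial, real_inner_comm (v t) (g t)]
      ring
    have hcs := abs_real_inner_le_norm (g t) (v t)
    have habs1 : (inner ℝ (g t) (v t) : ℝ) ≤ ‖g t‖ * ‖v t‖ := (abs_le.mp hcs).2
    have habs2 : -(‖g t‖ * ‖v t‖) ≤ (inner ℝ (g t) (v t) : ℝ) := (abs_le.mp hcs).1
    have hδ1 : δ ≤ c / 2 := min_le_left _ _
    have hδ2 : δ ≤ β * (1 - β * C ^ 2 / (2 * c)) := min_le_right _ _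
    have h2c : (0:ℝ) < 2 * c := by positivity
    have hδ2' : δ * (2 * c) ≤ β * (2 * c) - β ^ 2 * C ^ 2 := by
      calc δ * (2 * c) ≤ β * (1 - β * C ^ 2 / (2 * c)) * (2 * c) :=
            mul_le_mul_of_nonneg_right hδ2 h2c.le
        _ = β * (2 * c) - β ^ 2 * C ^ 2 := by field_simp
    have hgn : (0:ℝ) ≤ ‖g t‖ := norm_nonneg _
    have hvn : (0:ℝ) ≤ ‖v t‖ := norm_nonneg _
    have key : β * γ t * (-((inner ℝ (g t) (v t) : ℝ))) ≤ β * C * (‖g t‖ * ‖v t‖) := by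
      have h1 : -((inner ℝ (g t) (v t) : ℝ)) ≤ ‖g t‖ * ‖v t‖ := by linarith
      have hβγ : 0 ≤ β * γ t := mul_nonneg hβpos.le (hc.le.trans hγt.1)
      calc β * γ t * (-((inner ℝ (g t) (v t) : ℝ))) ≤ β * γ t * (‖g t‖ * ‖v t‖) :=
            mul_le_mul_of_nonneg_left h1 hβγ
        _ ≤ β * C * (‖g t‖ * ‖v t‖) :=
            mul_le_mul_of_nonneg_right (mul_le_mul_of_nonneg_left hγt.2 hβpos.le)
              (mul_nonneg hgn hvn)
    have young : 2 * c * (β * C * (‖g t‖ * ‖v t‖))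
        ≤ c ^ 2 * ‖v t‖ ^ 2 + β ^ 2 * C ^ 2 * ‖g t‖ ^ 2 := by
      nlinarith [sq_nonneg (c * ‖v t‖ - β * C * ‖g t‖)]
    have q1 : δ * (2 * c) ≤ c ^ 2 := by
      calc δ * (2 * c) ≤ c / 2 * (2 * c) := mul_le_mul_of_nonneg_right hδ1 h2c.le
        _ = c ^ 2 := by ring
    have p1 : δ * (2 * c) * ‖v t‖ ^ 2 ≤ c ^ 2 * ‖v t‖ ^ 2 :=
      mul_le_mul_of_nonneg_right q1 (sq_nonneg _)
    have p2 : δ * (2 * c) * ‖g t‖ ^ 2 ≤ (β * (2 * c) - β ^ 2 * C ^ 2) * ‖g t‖ ^ 2 :=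
      mul_le_mul_of_nonneg_right hδ2' (sq_nonneg _)
    have m3 : c * ‖v t‖ ^ 2 ≤ γ t * ‖v t‖ ^ 2 :=
      mul_le_mul_of_nonneg_right hγt.1 (sq_nonneg _)
    have p3 : (2 * c) * (c * ‖v t‖ ^ 2) ≤ (2 * c) * (γ t * ‖v t‖ ^ 2) :=
      mul_le_mul_of_nonneg_left m3 h2c.le
    have p4 : (2 * c) * (β * γ t * (-((inner ℝ (g t) (v t) : ℝ))))
        ≤ (2 * c) * (β * C * (‖g t‖ * ‖v t‖)) := mul_le_mul_of_nonneg_left key h2c.le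
    have hGpart : gradient f (x t) = g t := rfl
    rw [hGpart, hW]
    have main2 : (2 * c) * (-(γ t) * ‖v t‖ ^ 2 - (β * γ t) * (inner ℝ (g t) (v t) : ℝ)
          - β * ‖g t‖ ^ 2)
        ≤ (2 * c) * (-δ * (‖v t‖ ^ 2 + ‖g t‖ ^ 2)) := by linarith
    exact le_of_mul_le_mul_left main2 h2c
  refine ⟨hδpos, fun t ht => ⟨W t, hVd t (Set.Ioo_subset_Ico_self ht), hWb t ht⟩, ?_⟩
  -- antitone
  apply antitoneOn_of_deriv_nonpos (convex_Ico 0 T)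
  · exact fun s hs => (hVd s hs).continuousWithinAt
  · intro s hs
    rw [interior_Ico] at hs
    exact ((hVd s (Set.Ioo_subset_Ico_self hs)).hasDerivAt
      (Ico_mem_nhds hs.1 hs.2)).differentiableAt.differentiableWithinAt
  · intro s hs
    rw [interior_Ico] at hs
    have hd := ((hVd s (Set.Ioo_subset_Ico_self hs)).hasDerivAt (Ico_mem_nhds hs.1 hs.2)).deriv
    rw [hd]
    have h1 := hWb s hs
    have hnn : (0:ℝ) ≤ ‖v s‖ ^ 2 + ‖gradient f (x s)‖ ^ 2 := by positivity
    have := mul_nonneg hδpos.le hnn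
    linarith
end

section
/- Let x ∈ C²([0,∞); ℝ^d) be a global solution of the ISEHD equation. Then the velocity t ↦ ẋ(t) and the gradient along the trajectory t ↦ ∇f(x(t)) both belong to L²([0,∞); ℝ^d), i.e. ∫₀^∞ ‖ẋ(t)‖² dt < ∞ and ∫₀^∞ ‖∇f(x(t))‖² dt < ∞. -/
open Filter Topology Set MeasureTheory

set_option maxHeartbeats 1000000 in
open RealInnerProductSpace in
/-- For any global solution of the ISEHD dynamics, the velocity
`t ↦ ẋ(t)` and the gradient along the trajectory `t ↦ ∇f(x(t))` are in
`L²([0,∞); ℝ^d)`: `∫₀^∞ ‖ẋ(t)‖² dt < ∞` and `∫₀^∞ ‖∇f(x(t))‖² dt < ∞`. -/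
theorem isehd_L2_estimates
    (d : ℕ) (f : EuclideanSpace ℝ (Fin d) → ℝ) (γ : ℝ → ℝ) (β c C : ℝ)
    (hf : ContDiff ℝ 2 f) (hbdd : BddBelow (Set.range f))
    (hγ : ContDiffOn ℝ 1 γ (Set.Ici 0))
    (hc : 0 < c) (hcC : c ≤ C)
    (hγb : ∀ t ∈ Set.Ici (0:ℝ), c ≤ γ t ∧ γ t ≤ C)
    (hβpos : 0 < β) (hβ : β < 2 * c / C ^ 2)
    (x v a : ℝ → EuclideanSpace ℝ (Fin d))
    (hx : ∀ t ∈ Set.Ici (0:ℝ), HasDerivWithinAt x (v t) (Set.Ici 0) t)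
    (hv : ∀ t ∈ Set.Ici (0:ℝ), HasDerivWithinAt v (a t) (Set.Ici 0) t)
    (ha : ContinuousOn a (Set.Ici 0))
    (hode : ∀ t > (0:ℝ),
      a t + γ t • v t + β • fderiv ℝ (gradient f) (x t) (v t) + gradient f (x t) = 0) :
    MeasureTheory.IntegrableOn (fun t => ‖v t‖ ^ 2) (Set.Ici 0) ∧
    MeasureTheory.IntegrableOn (fun t => ‖gradient f (x t)‖ ^ 2) (Set.Ici 0) := by
  have hC : 0 < C := lt_of_lt_of_le hc hcC
  -- the gradient is C¹
  have hfd : ContDiff ℝ 1 (fderiv ℝ f) := hf.fderiv_right (by norm_num)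
  have hG : ContDiff ℝ 1 (gradient f) :=
    ((InnerProductSpace.toDual ℝ (EuclideanSpace ℝ (Fin d))).symm.contDiff).comp hfd
  have hGdiff : Differentiable ℝ (gradient f) := hG.differentiable one_ne_zero
  -- abbreviations
  set G : ℝ → EuclideanSpace ℝ (Fin d) := fun t => gradient f (x t) with hGdef
  set w : ℝ → EuclideanSpace ℝ (Fin d) := fun t => v t + β • G t with hwdef
  set w' : ℝ → EuclideanSpace ℝ (Fin d) :=
    fun t => a t + β • fderiv ℝ (gradient f) (x t) (v t) with hw'def
  set E : ℝ → ℝ := fun t => f (x t) + (1/2) * ⟪w t, w t⟫ with hEdef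
  set E' : ℝ → ℝ := fun t => ⟪G t, v t⟫ + (1/2) * (⟪w t, w' t⟫ + ⟪w' t, w t⟫)
    with hE'def
  set g : ℝ → ℝ := fun t => ‖v t‖ ^ 2 + ‖G t‖ ^ 2 with hgdef
  -- derivative of G along the trajectory
  have hGder : ∀ t ∈ Set.Ici (0:ℝ),
      HasDerivWithinAt G (fderiv ℝ (gradient f) (x t) (v t)) (Set.Ici 0) t := by
    intro t ht
    exact ((hGdiff (x t)).hasFDerivAt).comp_hasDerivWithinAt t (hx t ht)
  -- derivative of w
  have hwder : ∀ t ∈ Set.Ici (0:ℝ), HasDerivWithinAt w (w' t) (Set.Ici 0) t := by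
    intro t ht
    exact (hv t ht).add ((hGder t ht).const_smul β)
  -- derivative of f ∘ x
  have hfx : ∀ t ∈ Set.Ici (0:ℝ),
      HasDerivWithinAt (fun s => f (x s)) ⟪G t, v t⟫ (Set.Ici 0) t := by
    intro t ht
    have hgr : HasGradientAt f (gradient f (x t)) (x t) :=
      (hf.differentiable (by norm_num) (x t)).hasGradientAt
    have := (hgr.hasFDerivAt).comp_hasDerivWithinAt t (hx t ht)
    exact this.congr_deriv (by rw [InnerProductSpace.toDual_apply_apply])
  -- derivative of E
  have hEder : ∀ t ∈ Set.Ici (0:ℝ), HasDerivWithinAt E (E' t) (Set.Ici 0) t := by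
    intro t ht
    exact (hfx t ht).add
      (((hwder t ht).inner ℝ (hwder t ht)).const_mul (1/2))
  -- the key pointwise inequality
  have hδ1 : 0 < c - β * C ^ 2 / 2 := by
    have h2 : β * C ^ 2 < 2 * c := by
      have := (lt_div_iff₀ (by positivity : (0:ℝ) < C ^ 2)).mp hβ
      linarith
    linarith
  set δ : ℝ := min (c - β * C ^ 2 / 2) (β / 2) with hδdef
  have hδpos : 0 < δ := lt_min hδ1 (by linarith)
  have hkey : ∀ t > (0:ℝ), E' t ≤ -(δ * g t) := by
    intro t ht
    have htI : t ∈ Set.Ici (0:ℝ) := le_of_lt ht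
    have hODE : w' t = -(γ t • v t) - G t := by
      have h0 := hode t ht
      simp only [hw'def, hGdef]
      have : a t + β • fderiv ℝ (gradient f) (x t) (v t)
          = -(γ t • v t) - gradient f (x t) := by
        have := h0
        abel_nf
        abel_nf at this
        linear_combination (norm := module) this
      rw [this]
    have hγc := (hγb t htI).1
    have hγC := (hγb t htI).2
    have hip : |⟪G t, v t⟫| ≤ ‖G t‖ * ‖v t‖ := abs_real_inner_le_norm _ _
    have hE'eq : E' t = -(γ t * ⟪v t, v t⟫) - β * ⟪G t, G t⟫
        - β * γ t * ⟪v t, G t⟫ := by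
      simp only [hE'def, hODE, hwdef]
      simp only [inner_add_left, inner_add_right, inner_sub_left, inner_sub_right,
        inner_neg_left, inner_neg_right, real_inner_smul_left, real_inner_smul_right]
      rw [real_inner_comm (G t) (v t)]
      ring
    rw [hE'eq]
    simp only [hgdef]
    set nv := ‖v t‖ with hnv
    set ng := ‖G t‖ with hng
    set ip := ⟪v t, G t⟫ with hipd
    have hvv : ⟪v t, v t⟫ = nv ^ 2 := real_inner_self_eq_norm_sq _
    have hgg : ⟪G t, G t⟫ = ng ^ 2 := real_inner_self_eq_norm_sq _
    rw [hvv, hgg]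
    have hnvn : 0 ≤ nv := norm_nonneg _
    have hngn : 0 ≤ ng := norm_nonneg _
    have habs : -ip ≤ ng * nv := by
      have h := abs_real_inner_le_norm (v t) (G t)
      have := neg_abs_le ip
      rw [← hipd] at h
      nlinarith [h, this]
    have hγc := (hγb t htI).1
    have hγC := (hγb t htI).2
    have hγ0 : 0 ≤ γ t := le_trans (le_of_lt hc) hγc
    have h1 : γ t * (-ip) ≤ C * (ng * nv) :=
      le_trans (mul_le_mul_of_nonneg_left habs hγ0)
        (mul_le_mul_of_nonneg_right hγC (mul_nonneg hngn hnvn))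
    have h1' : β * (γ t * (-ip)) ≤ β * (C * (ng * nv)) :=
      mul_le_mul_of_nonneg_left h1 (le_of_lt hβpos)
    have h2 : C * (ng * nv) ≤ C ^ 2 / 2 * nv ^ 2 + 1 / 2 * ng ^ 2 := by
      nlinarith [sq_nonneg (C * nv - ng)]
    have h2' : β * (C * (ng * nv)) ≤ β * (C ^ 2 / 2 * nv ^ 2 + 1 / 2 * ng ^ 2) :=
      mul_le_mul_of_nonneg_left h2 (le_of_lt hβpos)
    have h3 : c * nv ^ 2 ≤ γ t * nv ^ 2 :=
      mul_le_mul_of_nonneg_right hγc (sq_nonneg _)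
    have hδle1 : δ ≤ c - β * C ^ 2 / 2 := min_le_left _ _
    have hδle2 : δ ≤ β / 2 := min_le_right _ _
    have h4 : δ * nv ^ 2 ≤ (c - β * C ^ 2 / 2) * nv ^ 2 :=
      mul_le_mul_of_nonneg_right hδle1 (sq_nonneg _)
    have h5 : δ * ng ^ 2 ≤ (β / 2) * ng ^ 2 :=
      mul_le_mul_of_nonneg_right hδle2 (sq_nonneg _)
    nlinarith [h1', h2', h3, h4, h5]
  -- continuity facts
  have hxc : ContinuousOn x (Set.Ici 0) := fun t ht => (hx t ht).continuousWithinAt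
  have hvc : ContinuousOn v (Set.Ici 0) := fun t ht => (hv t ht).continuousWithinAt
  have hGc : ContinuousOn G (Set.Ici 0) := hG.continuous.comp_continuousOn hxc
  have hgc : ContinuousOn g (Set.Ici 0) :=
    ((hvc.norm).pow 2).add ((hGc.norm).pow 2)
  have hgnonneg : ∀ t, 0 ≤ g t := fun t => by positivity
  have hw'c : ContinuousOn w' (Set.Ici 0) := by
    have hfdc : Continuous (fun y => fderiv ℝ (gradient f) y) :=
      hG.continuous_fderiv one_ne_zero
    exact ha.add (((hfdc.comp_continuousOn hxc).clm_apply hvc).const_smul β)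
  have hwc : ContinuousOn w (Set.Ici 0) := hvc.add (hGc.const_smul β)
  have hE'c : ContinuousOn E' (Set.Ici 0) := by
    exact (ContinuousOn.inner hGc hvc).add
      (continuousOn_const.mul ((ContinuousOn.inner hwc hw'c).add
        (ContinuousOn.inner hw'c hwc)))
  have hEc : ContinuousOn E (Set.Ici 0) :=
    fun t ht => (hEder t ht).continuousWithinAt
  -- lower bound for E
  obtain ⟨B, hB⟩ := hbdd
  have hEB : ∀ t, 0 ≤ t → B ≤ E t := by
    intro t _
    have h1 : B ≤ f (x t) := hB (Set.mem_range_self _)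
    have h2 : (0:ℝ) ≤ ⟪w t, w t⟫ := real_inner_self_nonneg
    simp only [hEdef]; linarith
  -- uniform bound on ∫₀ᵀ g
  have hmain : ∀ T : ℝ, 0 ≤ T → ∫ t in (0:ℝ)..T, g t ≤ (E 0 - B) / δ := by
    intro T hT
    have hIccsub : Set.Icc (0:ℝ) T ⊆ Set.Ici 0 := Set.Icc_subset_Ici_self
    have hE'int : IntervalIntegrable E' volume 0 T := by
      apply ContinuousOn.intervalIntegrable
      rw [Set.uIcc_of_le hT]
      exact hE'c.mono hIccsub
    have hgint : IntervalIntegrable g volume 0 T := by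
      apply ContinuousOn.intervalIntegrable
      rw [Set.uIcc_of_le hT]
      exact hgc.mono hIccsub
    have hFTC : ∫ t in (0:ℝ)..T, E' t = E T - E 0 := by
      apply intervalIntegral.integral_eq_sub_of_hasDeriv_right_of_le hT
        (hEc.mono hIccsub) _ hE'int
      intro s hs
      exact (hEder s (le_of_lt hs.1)).mono
        (fun y hy => le_of_lt (lt_trans hs.1 hy))
    have hmono : ∫ t in (0:ℝ)..T, δ * g t ≤ ∫ t in (0:ℝ)..T, -E' t := by
      apply intervalIntegral.integral_mono_ae_restrict hT (IntervalIntegrable.const_mul hgint δ)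
        hE'int.neg
      have h0 : ∀ᵐ t ∂(volume.restrict (Set.Icc (0:ℝ) T)), t ≠ 0 := by
        refine ae_restrict_of_ae ?_
        refine ae_iff.mpr ?_
        simp only [not_not, Set.setOf_eq_eq_singleton]
        exact measure_singleton 0
      have h1 : ∀ᵐ t ∂(volume.restrict (Set.Icc (0:ℝ) T)),
          t ∈ Set.Icc (0:ℝ) T := ae_restrict_mem measurableSet_Icc
      filter_upwards [h0, h1] with t ht0 ht1
      have htpos : 0 < t := lt_of_le_of_ne ht1.1 (Ne.symm ht0)
      have := hkey t htpos
      simp only [Pi.neg_apply]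
      linarith
    have h6 : δ * ∫ t in (0:ℝ)..T, g t ≤ E 0 - E T := by
      rw [← intervalIntegral.integral_const_mul]
      have h7 : ∫ t in (0:ℝ)..T, -E' t = E 0 - E T := by
        rw [intervalIntegral.integral_neg, hFTC]; ring
      linarith [hmono]
    have hET := hEB T hT
    rw [le_div_iff₀ hδpos]
    nlinarith [h6, hET]
  -- integrability of g on Ici 0
  have hgI : MeasureTheory.IntegrableOn g (Set.Ici 0) := by
    rw [integrableOn_Ici_iff_integrableOn_Ioi]
    apply MeasureTheory.integrableOn_Ioi_of_intervalIntegral_norm_bounded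
      ((E 0 - B) / δ) 0 (f := g) (b := fun i : ℝ => i) (l := atTop) _
      tendsto_id
    · filter_upwards [eventually_ge_atTop (0:ℝ)] with i hi
      have : ∀ t, ‖g t‖ = g t := fun t => Real.norm_of_nonneg (hgnonneg t)
      simp only [this]
      exact hmain i hi
    · intro i
      rcases le_or_gt i 0 with h | h
      · rw [Set.Ioc_eq_empty (by simpa using h)]
        exact integrableOn_empty
      · apply (ContinuousOn.integrableOn_compact isCompact_Icc
          (hgc.mono (Set.Icc_subset_Ici_self))).mono_set
        · exact Set.Ioc_subset_Icc_self
  -- conclude by domination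
  have hmeas_v : AEStronglyMeasurable (fun t => ‖v t‖ ^ 2)
      (volume.restrict (Set.Ici (0:ℝ))) :=
    ((hvc.norm.pow 2)).aestronglyMeasurable measurableSet_Ici
  have hmeas_G : AEStronglyMeasurable (fun t => ‖gradient f (x t)‖ ^ 2)
      (volume.restrict (Set.Ici (0:ℝ))) :=
    ((hGc.norm.pow 2)).aestronglyMeasurable measurableSet_Ici
  constructor
  · apply hgI.mono' hmeas_v
    filter_upwards with t
    have h1 : (0:ℝ) ≤ ‖G t‖ ^ 2 := by positivity
    have h2 : (0:ℝ) ≤ ‖v t‖ ^ 2 := by positivity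
    rw [Real.norm_of_nonneg h2]
    simp only [hgdef]; linarith
  · apply hgI.mono' hmeas_G
    filter_upwards with t
    have h1 : (0:ℝ) ≤ ‖v t‖ ^ 2 := by positivity
    have h2 : (0:ℝ) ≤ ‖gradient f (x t)‖ ^ 2 := by positivity
    rw [Real.norm_of_nonneg h2]
    simp only [hgdef, hGdef]; linarith
end

section
/- Let x ∈ C²([0,∞); ℝ^d) be a global solution of the ISEHD equation whose trajectory is bounded, i.e. sup_{t ≥ 0} ‖x(t)‖ < ∞. Then ‖∇f(x(t))‖ → 0 and ‖ẋ(t)‖ → 0 as t → ∞, and lim_{t→∞} f(x(t)) exists. -/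
open Filter Topology Set MeasureTheory Metric

set_option maxHeartbeats 1000000



lemma aux_anti_tendsto (E : ℝ → ℝ) (hE : AntitoneOn E (Ici 0)) (m : ℝ)
    (hm : ∀ t ≥ (0:ℝ), m ≤ E t) : ∃ l, Tendsto E atTop (𝓝 l) := by
  set F : ℝ → ℝ := fun t => E (max t 0) with hF
  have hFa : Antitone F := fun s t hst =>
    hE (mem_Ici.mpr (le_max_right _ _)) (mem_Ici.mpr (le_max_right _ _)) (max_le_max hst le_rfl)
  have hFb : BddBelow (range F) := ⟨m, by rintro y ⟨t, rfl⟩; exact hm _ (le_max_right _ _)⟩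
  refine ⟨_, (tendsto_atTop_ciInf hFa hFb).congr' ?_⟩
  filter_upwards [eventually_ge_atTop (0:ℝ)] with t ht
  simp [hF, max_eq_left ht]

lemma aux_barbalat (h : ℝ → ℝ) (K I : ℝ) (hK : 0 < K)
    (hcont : ContinuousOn h (Ici 0))
    (hnn : ∀ t ≥ (0:ℝ), 0 ≤ h t)
    (hlip : ∀ s t, 0 ≤ s → s ≤ t → h s - h t ≤ K * (t - s))
    (hint : ∀ T ≥ (0:ℝ), (∫ t in (0:ℝ)..T, h t) ≤ I) :
    Tendsto h atTop (𝓝 0) := by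
  rw [Metric.tendsto_atTop]
  intro ε hε
  set δ : ℝ := ε / (2 * K) with hδ
  have hδpos : 0 < δ := div_pos hε (by positivity)
  -- F T = ∫_0^T h, monotone on Ici 0, bounded by I
  set F : ℝ → ℝ := fun T => ∫ t in (0:ℝ)..T, h t with hFdef
  have hinteg : ∀ u w : ℝ, 0 ≤ u → IntervalIntegrable h volume u w → True := fun _ _ _ _ => trivial
  have hII : ∀ u w : ℝ, 0 ≤ u → 0 ≤ w → IntervalIntegrable h volume u w := by
    intro u w hu hw
    apply ContinuousOn.intervalIntegrable
    apply hcont.mono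
    intro z hz
    rcases mem_uIcc.mp hz with hz | hz
    · exact le_trans hu hz.1
    · exact le_trans hw hz.1
  have hFmono : ∀ u w : ℝ, 0 ≤ u → u ≤ w → F u ≤ F w := by
    intro u w hu huw
    have : F w - F u = ∫ t in u..w, h t := by
      rw [hFdef]
      simp only
      rw [← intervalIntegral.integral_add_adjacent_intervals (hII 0 u le_rfl hu)
        (hII u w hu (le_trans hu huw))]
      ring
    have hnn2 : 0 ≤ ∫ t in u..w, h t := by
      apply intervalIntegral.integral_nonneg huw
      intro z hz; exact hnn z (le_trans hu hz.1)
    linarith [this]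
  -- sup of F
  have hbddF : BddAbove (F '' Ici 0) := ⟨I, by rintro y ⟨t, ht, rfl⟩; exact hint t ht⟩
  have hne : (F '' Ici 0).Nonempty := ⟨F 0, 0, Set.self_mem_Ici, rfl⟩
  set L := sSup (F '' Ici 0) with hL
  obtain ⟨y, ⟨T₀, hT₀, rfl⟩, hy⟩ := Real.add_neg_lt_sSup hne (ε := -(ε * δ / 4)) (by nlinarith)
  refine ⟨T₀, fun t ht => ?_⟩
  have ht0 : 0 ≤ t := le_trans hT₀ ht
  rw [Real.dist_eq, sub_zero, abs_of_nonneg (hnn t ht0)]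
  by_contra hcon
  push_neg at hcon
  -- h ≥ ε/2 on [t, t+δ]
  have hlow : ∀ z ∈ Icc t (t + δ), ε / 2 ≤ h z := by
    intro z hz
    have := hlip t z ht0 hz.1
    have hKδ : K * (z - t) ≤ K * δ := by
      apply mul_le_mul_of_nonneg_left _ hK.le
      linarith [hz.2]
    have : h t - h z ≤ K * δ := by linarith [hlip t z ht0 hz.1]
    have hKδ2 : K * δ = ε / 2 := by
      rw [hδ]; field_simp
    linarith
  have hFle : F (t + δ) ≤ L := le_csSup hbddF ⟨t + δ, mem_Ici.mpr (by linarith), rfl⟩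
  have hFge : F T₀ ≤ F t := hFmono T₀ t hT₀ ht
  have hdiff : F (t + δ) - F t = ∫ z in t..(t + δ), h z := by
    rw [hFdef]; simp only
    rw [← intervalIntegral.integral_add_adjacent_intervals (hII 0 t le_rfl ht0)
      (hII t (t + δ) ht0 (by linarith))]
    ring
  have hlower : ε / 2 * δ ≤ ∫ z in t..(t + δ), h z := by
    have := intervalIntegral.integral_mono_on (by linarith : t ≤ t + δ)
      (intervalIntegrable_const (c := ε / 2)) (hII t (t + δ) ht0 (by linarith)) hlow
    rw [intervalIntegral.integral_const] at this
    simpa [mul_comm] using this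
  nlinarith [hFle, hFge, hdiff, hlower, hy]

local notation "⟪" x ", " y "⟫" => @inner ℝ _ _ x y


/-- For a bounded global solution of the ISEHD dynamics,
`‖∇f(x(t))‖ → 0`, `‖ẋ(t)‖ → 0` as `t → ∞`, and `lim_{t→∞} f(x(t))` exists. -/
theorem isehd_bounded_trajectory_limits
    (d : ℕ) (f : EuclideanSpace ℝ (Fin d) → ℝ) (γ : ℝ → ℝ) (β c C : ℝ)
    (hf : ContDiff ℝ 2 f) (hbdd : BddBelow (Set.range f))
    (hγ : ContDiffOn ℝ 1 γ (Set.Ici 0))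
    (hc : 0 < c) (hcC : c ≤ C)
    (hγb : ∀ t ∈ Set.Ici (0:ℝ), c ≤ γ t ∧ γ t ≤ C)
    (hβpos : 0 < β) (hβ : β < 2 * c / C ^ 2)
    (x v a : ℝ → EuclideanSpace ℝ (Fin d))
    (hx : ∀ t ∈ Set.Ici (0:ℝ), HasDerivWithinAt x (v t) (Set.Ici 0) t)
    (hv : ∀ t ∈ Set.Ici (0:ℝ), HasDerivWithinAt v (a t) (Set.Ici 0) t)
    (ha : ContinuousOn a (Set.Ici 0))
    (hode : ∀ t > (0:ℝ),
      a t + γ t • v t + β • fderiv ℝ (gradient f) (x t) (v t) + gradient f (x t) = 0)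
    (hbound : ∃ M, ∀ t ≥ (0:ℝ), ‖x t‖ ≤ M) :
    Tendsto (fun t => ‖gradient f (x t)‖) atTop (𝓝 0) ∧
    Tendsto (fun t => ‖v t‖) atTop (𝓝 0) ∧
    ∃ l : ℝ, Tendsto (fun t => f (x t)) atTop (𝓝 l) := by
  obtain ⟨M₀, hM₀⟩ := hbound
  obtain ⟨m, hm⟩ := hbdd
  have hm' : ∀ y, m ≤ f y := fun y => hm ⟨y, rfl⟩
  -- smoothness of the gradient
  have hgrad : ContDiff ℝ 1 (gradient f) :=
    ((InnerProductSpace.toDual ℝ (EuclideanSpace ℝ (Fin d))).symm.contDiff).comp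
      (hf.fderiv_right (by norm_num))
  have hgdiff : Differentiable ℝ (gradient f) := hgrad.differentiable (by norm_num)
  have hgc : Continuous (gradient f) := hgrad.continuous
  have hg'cont : Continuous (fderiv ℝ (gradient f)) := hgrad.continuous_fderiv (by norm_num)
  have hfdiff : Differentiable ℝ f := hf.differentiable (by norm_num)
  have hfd : ∀ y u, fderiv ℝ f y u = ⟪gradient f y, u⟫ := by
    intro y u; rw [gradient, InnerProductSpace.toDual_symm_apply]
  -- abbreviations
  set g : ℝ → EuclideanSpace ℝ (Fin d) := fun t => gradient f (x t) with hgdef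
  set g' : ℝ → EuclideanSpace ℝ (Fin d) := fun t => fderiv ℝ (gradient f) (x t) (v t) with hg'def
  set w : ℝ → EuclideanSpace ℝ (Fin d) := fun t => v t + β • g t with hwdef
  set E : ℝ → ℝ := fun t => f (x t) + (1/2) * ⟪w t, w t⟫ with hEdef
  set e : ℝ → ℝ :=
    fun t => -(γ t * ‖v t‖^2 + β * (γ t * ⟪g t, v t⟫) + β * ‖g t‖^2) with hedef
  set h : ℝ → ℝ := fun t => ‖v t‖^2 + ‖g t‖^2 with hhdef
  -- continuity facts on Ici 0
  have hxc : ContinuousOn x (Ici 0) := fun t ht => (hx t ht).continuousWithinAt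
  have hvc : ContinuousOn v (Ici 0) := fun t ht => (hv t ht).continuousWithinAt
  have hgcont : ContinuousOn g (Ici 0) := hgc.comp_continuousOn hxc
  have hg'c : ContinuousOn g' (Ici 0) := by
    have h1 : ContinuousOn (fun t => fderiv ℝ (gradient f) (x t)) (Ici 0) :=
      hg'cont.comp_continuousOn hxc
    exact h1.clm_apply hvc
  have hwc : ContinuousOn w (Ici 0) := hvc.add (hgcont.const_smul β)
  have hEc : ContinuousOn E (Ici 0) :=
    ((hf.continuous.comp_continuousOn hxc)).add (continuousOn_const.mul (hwc.inner hwc))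
  have hec : ContinuousOn e (Ici 0) := by
    have hγc : ContinuousOn γ (Ici 0) := hγ.continuousOn
    have h1 : ContinuousOn (fun t => ‖v t‖^2) (Ici 0) := (hvc.norm.pow 2)
    have h2 : ContinuousOn (fun t => ‖g t‖^2) (Ici 0) := (hgcont.norm.pow 2)
    have h3 : ContinuousOn (fun t => ⟪g t, v t⟫) (Ici 0) := hgcont.inner hvc
    exact (((hγc.mul h1).add (continuousOn_const.mul (hγc.mul h3))).add
      (continuousOn_const.mul h2)).neg
  have hhc : ContinuousOn h (Ici 0) := (hvc.norm.pow 2).add (hgcont.norm.pow 2)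
  have hhnn : ∀ t, 0 ≤ h t := fun t => by positivity
  -- derivatives
  have hgd : ∀ t ∈ Ici (0:ℝ), HasDerivWithinAt g (g' t) (Ici 0) t := fun t ht =>
    (hgdiff (x t)).hasFDerivAt.comp_hasDerivWithinAt t (hx t ht)
  have hfxd : ∀ t ∈ Ici (0:ℝ), HasDerivWithinAt (fun s => f (x s)) ⟪g t, v t⟫ (Ici 0) t := by
    intro t ht
    have := (hfdiff (x t)).hasFDerivAt.comp_hasDerivWithinAt t (hx t ht)
    rwa [hfd] at this
  have hwd : ∀ t ∈ Ici (0:ℝ), HasDerivWithinAt w (a t + β • g' t) (Ici 0) t := fun t ht =>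
    (hv t ht).add ((hgd t ht).const_smul β)
  have hEd : ∀ t ∈ Ici (0:ℝ),
      HasDerivWithinAt E (⟪g t, v t⟫ + (1/2) * (⟪w t, a t + β • g' t⟫ + ⟪a t + β • g' t, w t⟫))
        (Ici 0) t := fun t ht =>
    (hfxd t ht).add ((((hwd t ht).inner ℝ (hwd t ht))).const_mul (1/2))
  have hEdAt : ∀ t > (0:ℝ), HasDerivAt E (e t) t := by
    intro t ht
    have hode' : a t + β • g' t = -(γ t • v t) - g t := by
      have h0 := hode t ht
      apply sub_eq_zero.mp
      rw [← h0]; abel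
    have h1 := ((hEd t (le_of_lt ht)).hasDerivAt (Ici_mem_nhds ht))
    have hval : ⟪g t, v t⟫ + (1/2) * (⟪w t, a t + β • g' t⟫ + ⟪a t + β • g' t, w t⟫) = e t := by
      rw [hode', hedef, hwdef]
      simp only [inner_sub_right, inner_sub_left, inner_neg_right, inner_neg_left,
        inner_add_left, inner_add_right, real_inner_smul_left, real_inner_smul_right,
        real_inner_self_eq_norm_sq]
      rw [real_inner_comm (v t) (g t)]
      ring
    rwa [hval] at h1
  -- the key coefficient
  have hC0 : (0:ℝ) < C := lt_of_lt_of_le hc hcC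
  have hβC2 : β * C < 2 := by
    rw [lt_div_iff₀ (by positivity)] at hβ
    nlinarith
  set ε₀ : ℝ := min (c/2) (β * (1 - β*C/2)) with hε₀def
  have hε₀pos : 0 < ε₀ := lt_min (by linarith) (by nlinarith)
  have hε₀c : ε₀ ≤ c/2 := min_le_left _ _
  have hε₀β : ε₀ ≤ β * (1 - β*C/2) := min_le_right _ _
  have hkeygen : ∀ gm u r p : ℝ, c ≤ gm → gm ≤ C → 0 ≤ u → 0 ≤ r → -(r*u) ≤ p →
      -(gm * u^2 + β * (gm * p) + β * r^2) ≤ -(ε₀ * (u^2 + r^2)) := by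
    intro gm u r p hγc hγC hu hr habs
    have hγ0 : (0:ℝ) ≤ gm := le_trans hc.le hγc
    have hsq : 0 ≤ gm * (u - β*r)^2 := mul_nonneg hγ0 (sq_nonneg _)
    have hP1 : 0 ≤ (β * gm) * (p + r * u) :=
      mul_nonneg (mul_nonneg hβpos.le hγ0) (by linarith)
    have hP2 : 0 ≤ (gm - c) * u^2 := mul_nonneg (by linarith) (sq_nonneg _)
    have hP3 : 0 ≤ (c/2 - ε₀) * u^2 := mul_nonneg (by linarith) (sq_nonneg _)
    have hP4 : 0 ≤ (C - gm) * (β^2 * r^2) :=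
      mul_nonneg (by linarith) (mul_nonneg (sq_nonneg _) (sq_nonneg _))
    have hP5 : 0 ≤ (β * (1 - β*C/2) - ε₀) * r^2 := mul_nonneg (by linarith) (sq_nonneg _)
    nlinarith [hsq, hP1, hP2, hP3, hP4, hP5]
  have hkey : ∀ t ∈ Ici (0:ℝ), e t ≤ -(ε₀ * h t) := by
    intro t ht
    obtain ⟨hγc, hγC⟩ := hγb t ht
    have habs : -(‖g t‖ * ‖v t‖) ≤ ⟪g t, v t⟫ := by
      have h1 := abs_real_inner_le_norm (g t) (v t)
      have h2 := abs_le.mp h1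
      linarith [h2.1]
    exact hkeygen (γ t) ‖v t‖ ‖g t‖ ⟪g t, v t⟫ hγc hγC (norm_nonneg _) (norm_nonneg _) habs
  -- E is antitone
  have hAnti : AntitoneOn E (Ici 0) := by
    apply antitoneOn_of_deriv_nonpos (convex_Ici 0) hEc
    · intro z hz; rw [interior_Ici] at hz
      exact (hEdAt z hz).differentiableAt.differentiableWithinAt
    · intro z hz; rw [interior_Ici] at hz
      rw [(hEdAt z hz).deriv]
      have h1 := hkey z (mem_Ici.mpr (le_of_lt hz))
      have h2 := mul_nonneg hε₀pos.le (hhnn z)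
      linarith
  have hEm : ∀ t ≥ (0:ℝ), m ≤ E t := by
    intro t ht
    have h1 : (0:ℝ) ≤ ⟪w t, w t⟫ := real_inner_self_nonneg
    have h2 := hm' (x t)
    simp only [hEdef]
    linarith
  have hEle : ∀ t ≥ (0:ℝ), E t ≤ E 0 := fun t ht => hAnti self_mem_Ici ht ht
  -- bounds along the trajectory
  have hxK : ∀ t ≥ (0:ℝ), x t ∈ closedBall (0:EuclideanSpace ℝ (Fin d)) (max M₀ 0) := by
    intro t ht
    rw [mem_closedBall_zero_iff]
    exact le_trans (hM₀ t ht) (le_max_left _ _)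
  obtain ⟨G, hG⟩ := (isCompact_closedBall (0:EuclideanSpace ℝ (Fin d))
    (max M₀ 0)).exists_bound_of_continuousOn hgc.continuousOn
  obtain ⟨H, hH⟩ := (isCompact_closedBall (0:EuclideanSpace ℝ (Fin d))
    (max M₀ 0)).exists_bound_of_continuousOn hg'cont.continuousOn
  have h0K : (0:EuclideanSpace ℝ (Fin d)) ∈ closedBall (0:EuclideanSpace ℝ (Fin d)) (max M₀ 0) :=
    mem_closedBall_self (le_max_right _ _)
  have hG0 : 0 ≤ G := le_trans (norm_nonneg _) (hG 0 h0K)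
  have hH0 : 0 ≤ H := le_trans (norm_nonneg _) (hH 0 h0K)
  have hgB : ∀ t ≥ (0:ℝ), ‖g t‖ ≤ G := fun t ht => hG _ (hxK t ht)
  set B : ℝ := 2 * (E 0 - m) with hBdef
  have hB0 : 0 ≤ B := by have := hEm 0 le_rfl; simp only [hBdef]; linarith
  have hwB : ∀ t ≥ (0:ℝ), ‖w t‖ ≤ Real.sqrt B := by
    intro t ht
    rw [show ‖w t‖ = Real.sqrt (‖w t‖^2) from (Real.sqrt_sq (norm_nonneg _)).symm]
    apply Real.sqrt_le_sqrt
    have h1 : ⟪w t, w t⟫ = ‖w t‖^2 := real_inner_self_eq_norm_sq _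
    have h2 := hEle t ht
    have h3 := hm' (x t)
    have h5 : E t = f (x t) + 1/2 * ⟪w t, w t⟫ := rfl
    rw [h1] at h5
    simp only [hBdef]
    have h6 : E t = f (x t) + 1 / 2 * ‖w t‖ ^ 2 := h5
    clear h5 h1
    clear_value E
    linarith [h6, h2, h3]
  set V : ℝ := Real.sqrt B + β * G with hVdef
  have hV0 : 0 ≤ V := by positivity
  have hvB : ∀ t ≥ (0:ℝ), ‖v t‖ ≤ V := by
    intro t ht
    have h1 : v t = w t - β • g t := by simp only [hwdef]; abel
    calc ‖v t‖ = ‖w t - β • g t‖ := by rw [← h1]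
      _ ≤ ‖w t‖ + ‖β • g t‖ := norm_sub_le _ _
      _ = ‖w t‖ + β * ‖g t‖ := by rw [norm_smul, Real.norm_eq_abs, abs_of_pos hβpos]
      _ ≤ Real.sqrt B + β * G := by
          have := hwB t ht
          have := hgB t ht
          have := mul_le_mul_of_nonneg_left (hgB t ht) hβpos.le
          linarith
  have hg'B : ∀ t ≥ (0:ℝ), ‖g' t‖ ≤ H * V := by
    intro t ht
    calc ‖g' t‖ ≤ ‖fderiv ℝ (gradient f) (x t)‖ * ‖v t‖ :=
          ContinuousLinearMap.le_opNorm _ _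
      _ ≤ H * V := mul_le_mul (hH _ (hxK t ht)) (hvB t ht) (norm_nonneg _) hH0
  set A : ℝ := C * V + β * (H * V) + G with hAdef
  have hA0 : 0 ≤ A := by
    have := mul_nonneg hC0.le hV0
    have := mul_nonneg hβpos.le (mul_nonneg hH0 hV0)
    simp only [hAdef]; linarith
  have haBpos : ∀ t > (0:ℝ), ‖a t‖ ≤ A := by
    intro t ht
    have h0 := hode t ht
    have h1 : a t = -(γ t • v t) - β • g' t - g t := by
      apply sub_eq_zero.mp
      rw [← h0]; abel
    have hγv : ‖γ t • v t‖ ≤ C * V := by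
      rw [norm_smul, Real.norm_eq_abs, abs_of_pos (lt_of_lt_of_le hc (hγb t ht.le).1)]
      exact mul_le_mul (hγb t ht.le).2 (hvB t ht.le) (norm_nonneg _) hC0.le
    have hβg' : ‖β • g' t‖ ≤ β * (H * V) := by
      rw [norm_smul, Real.norm_eq_abs, abs_of_pos hβpos]
      exact mul_le_mul_of_nonneg_left (hg'B t ht.le) hβpos.le
    calc ‖a t‖ = ‖-(γ t • v t) - β • g' t - g t‖ := by rw [← h1]
      _ ≤ ‖-(γ t • v t) - β • g' t‖ + ‖g t‖ := norm_sub_le _ _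
      _ ≤ ‖-(γ t • v t)‖ + ‖β • g' t‖ + ‖g t‖ := by
          have := norm_sub_le (-(γ t • v t)) (β • g' t)
          linarith
      _ = ‖γ t • v t‖ + ‖β • g' t‖ + ‖g t‖ := by rw [norm_neg]
      _ ≤ C * V + β * (H * V) + G := by
          have := hgB t ht.le
          linarith
  have haB : ∀ t ≥ (0:ℝ), ‖a t‖ ≤ A := by
    intro t ht
    rcases ht.eq_or_lt' with hh | hh
    · rw [hh]
      have hten : Tendsto (fun s => ‖a s‖) (𝓝[>] (0:ℝ)) (𝓝 ‖a 0‖) :=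
        (((ha 0 self_mem_Ici).mono (Ioi_subset_Ici le_rfl)).norm)
      exact le_of_tendsto hten (eventually_nhdsWithin_of_forall (fun s hs => haBpos s hs))
    · exact haBpos t hh
  -- derivative of h and Lipschitz bound
  set D : ℝ → ℝ := fun t => (⟪v t, a t⟫ + ⟪a t, v t⟫) + (⟪g t, g' t⟫ + ⟪g' t, g t⟫) with hDdef
  have hhd : ∀ t ∈ Ici (0:ℝ), HasDerivWithinAt h (D t) (Ici 0) t := by
    intro t ht
    have heq : h = fun s => ⟪v s, v s⟫ + ⟪g s, g s⟫ := by
      funext s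
      simp only [hhdef]
      rw [real_inner_self_eq_norm_sq, real_inner_self_eq_norm_sq]
    rw [heq]
    exact ((hv t ht).inner ℝ (hv t ht)).add ((hgd t ht).inner ℝ (hgd t ht))
  set K₀ : ℝ := 2 * (V * A) + 2 * (G * (H * V)) + 1 with hK₀def
  have hK₀pos : 0 < K₀ := by
    have h1 := mul_nonneg hV0 hA0
    have h2 := mul_nonneg hG0 (mul_nonneg hH0 hV0)
    simp only [hK₀def]; linarith
  have hDb : ∀ z ∈ Ici (0:ℝ), ‖D z‖ ≤ K₀ := by
    intro z hz
    have h1 : |(⟪v z, a z⟫:ℝ)| ≤ V * A := by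
      refine le_trans (abs_real_inner_le_norm _ _) ?_
      exact mul_le_mul (hvB z hz) (haB z hz) (norm_nonneg _) hV0
    have h2 : |(⟪g z, g' z⟫:ℝ)| ≤ G * (H * V) := by
      refine le_trans (abs_real_inner_le_norm _ _) ?_
      exact mul_le_mul (hgB z hz) (hg'B z hz) (norm_nonneg _) hG0
    have h3 : (⟪a z, v z⟫:ℝ) = ⟪v z, a z⟫ := real_inner_comm _ _
    have h4 : (⟪g' z, g z⟫:ℝ) = ⟪g z, g' z⟫ := real_inner_comm _ _
    rw [Real.norm_eq_abs]
    simp only [hDdef, h3, h4]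
    have h5 := abs_le.mp h1
    have h6 := abs_le.mp h2
    rw [abs_le]
    constructor <;> [skip; skip] <;> simp only [hK₀def] <;>
      [linarith [h5.1, h6.1]; linarith [h5.2, h6.2]]
  have hlip : ∀ s t : ℝ, 0 ≤ s → s ≤ t → h s - h t ≤ K₀ * (t - s) := by
    intro s t hs hst
    have h1 := (convex_Ici (0:ℝ)).norm_image_sub_le_of_norm_hasDerivWithin_le hhd hDb
      (mem_Ici.mpr hs) (mem_Ici.mpr (le_trans hs hst))
    rw [Real.norm_eq_abs, Real.norm_eq_abs, abs_of_nonneg (sub_nonneg.mpr hst)] at h1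
    have h2 := neg_abs_le (h t - h s)
    have h3 := abs_le.mp h1
    linarith [h3.1]
  -- integral bound via FTC
  have hεI : ∀ T ≥ (0:ℝ), (∫ t in (0:ℝ)..T, h t) ≤ (E 0 - m)/ε₀ := by
    intro T hT
    have hIccsub : Icc (0:ℝ) T ⊆ Ici 0 := Icc_subset_Ici_self
    have heint : IntervalIntegrable e volume 0 T := by
      apply ContinuousOn.intervalIntegrable
      apply hec.mono
      rw [uIcc_of_le hT]; exact hIccsub
    have hhint : IntervalIntegrable h volume 0 T := by
      apply ContinuousOn.intervalIntegrable
      apply hhc.mono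
      rw [uIcc_of_le hT]; exact hIccsub
    have hftc : ∫ t in (0:ℝ)..T, e t = E T - E 0 :=
      intervalIntegral.integral_eq_sub_of_hasDeriv_right_of_le hT (hEc.mono hIccsub)
        (fun z hz => (hEdAt z hz.1).hasDerivWithinAt) heint
    have hmono : (∫ t in (0:ℝ)..T, ε₀ * h t) ≤ ∫ t in (0:ℝ)..T, -e t := by
      apply intervalIntegral.integral_mono_on hT (hhint.const_mul ε₀) heint.neg
      intro z hz
      simp only [Pi.neg_apply]
      have := hkey z (hIccsub hz)
      linarith
    rw [intervalIntegral.integral_const_mul, intervalIntegral.integral_neg, hftc] at hmono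
    have hEmT := hEm T hT
    rw [le_div_iff₀ hε₀pos]
    clear_value E
    nlinarith [hmono, hEmT]
  have hbar : Tendsto h atTop (𝓝 0) :=
    aux_barbalat h K₀ ((E 0 - m)/ε₀) hK₀pos hhc (fun t _ => hhnn t) hlip hεI
  -- conclusions
  have hvsq : ∀ t, ‖v t‖^2 ≤ h t := fun t => le_add_of_nonneg_right (sq_nonneg _)
  have hgsq : ∀ t, ‖g t‖^2 ≤ h t := fun t => le_add_of_nonneg_left (sq_nonneg _)
  have hv2 : Tendsto (fun t => ‖v t‖^2) atTop (𝓝 0) :=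
    squeeze_zero (fun t => sq_nonneg _) hvsq hbar
  have hg2 : Tendsto (fun t => ‖g t‖^2) atTop (𝓝 0) :=
    squeeze_zero (fun t => sq_nonneg _) hgsq hbar
  have hvt : Tendsto (fun t => ‖v t‖) atTop (𝓝 0) := by
    have h1 := (Real.continuous_sqrt.tendsto 0).comp hv2
    rw [Real.sqrt_zero] at h1
    exact h1.congr fun t => Real.sqrt_sq (norm_nonneg _)
  have hgt : Tendsto (fun t => ‖g t‖) atTop (𝓝 0) := by
    have h1 := (Real.continuous_sqrt.tendsto 0).comp hg2
    rw [Real.sqrt_zero] at h1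
    exact h1.congr fun t => Real.sqrt_sq (norm_nonneg _)
  obtain ⟨l, hl⟩ := aux_anti_tendsto E hAnti m hEm
  have hwt : Tendsto (fun t => ‖w t‖) atTop (𝓝 0) := by
    have hle : ∀ t, ‖w t‖ ≤ ‖v t‖ + β * ‖g t‖ := by
      intro t
      calc ‖w t‖ ≤ ‖v t‖ + ‖β • g t‖ := norm_add_le _ _
        _ = ‖v t‖ + β * ‖g t‖ := by rw [norm_smul, Real.norm_eq_abs, abs_of_pos hβpos]
    have hrhs : Tendsto (fun t => ‖v t‖ + β * ‖g t‖) atTop (𝓝 0) := by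
      have := hvt.add (hgt.const_mul β)
      simpa using this
    exact squeeze_zero (fun t => norm_nonneg _) hle hrhs
  have hww : Tendsto (fun t => (⟪w t, w t⟫:ℝ)) atTop (𝓝 0) := by
    have h1 := hwt.mul hwt
    rw [mul_zero] at h1
    exact h1.congr fun t => (real_inner_self_eq_norm_mul_norm _).symm
  refine ⟨hgt, hvt, l, ?_⟩
  have hfx : (fun t => f (x t)) = fun t => E t - 1/2 * ⟪w t, w t⟫ := by
    funext t
    simp only [hEdef]
    ring
  rw [hfx]
  have h1 := hl.sub (hww.const_mul (1/2))
  simpa using h1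
end

section
/- Consider the discrete scheme ISEHD-Disc: y_k = x_k + α_k(x_k − x_{k−1}) − β_k(∇f(x_k) − ∇f(x_{k−1})), x_{k+1} = y_k − s_k∇f(x_k), with α_k = 1/(1 + γ_k h), β_k = βh α_k, s_k = h² α_k. If β + h/2 < c/L, then Σ_k ‖∇f(x_k)‖² < ∞ and Σ_k ‖x_{k+1} − x_k‖² < ∞; in particular ‖∇f(x_k)‖ → 0 as k → ∞. -/
open Filter Topology Set

lemma descent_lemma {E : Type*} [NormedAddCommGroup E] [InnerProductSpace ℝ E] [CompleteSpace E]
    (f : E → ℝ) (L : ℝ) (hL : 0 ≤ L)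
    (hd : Differentiable ℝ f)
    (hlip : LipschitzWith (Real.toNNReal L) (gradient f)) (a b : E) :
    f b ≤ f a + inner ℝ (gradient f a) (b - a) + L / 2 * ‖b - a‖ ^ 2 := by
  set v := b - a with hv
  have key : ∀ t : ℝ, HasDerivAt (fun t : ℝ => f (a + t • v))
      (inner (𝕜 := ℝ) (gradient f (a + t • v)) v) t := by
    intro t
    have h1 : HasFDerivAt f ((InnerProductSpace.toDual ℝ E) (gradient f (a + t • v)))
        (a + t • v) := hasGradientAt_iff_hasFDerivAt.mp (hd _).hasGradientAt
    have h2 : HasDerivAt (fun t : ℝ => a + t • v) v t := by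
      simpa using ((hasDerivAt_id t).smul_const v).const_add a
    have := h1.comp_hasDerivAt t h2
    exact this
  have contg : Continuous fun t : ℝ => gradient f (a + t • v) :=
    hlip.continuous.comp (by continuity)
  have cont : Continuous fun t : ℝ => inner (𝕜 := ℝ) (gradient f (a + t • v)) v :=
    contg.inner continuous_const
  have ftc : ∫ t in (0:ℝ)..1, inner (𝕜 := ℝ) (gradient f (a + t • v)) v
      = f b - f a := by
    rw [intervalIntegral.integral_eq_sub_of_hasDerivAt (fun t _ => key t)
      (cont.intervalIntegrable _ _)]
    simp [hv]
  have contmaj : Continuous fun t : ℝ =>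
      inner (𝕜 := ℝ) (gradient f a) v + L * ‖v‖ ^ 2 * t := by continuity
  have bound : ∫ t in (0:ℝ)..1, inner (𝕜 := ℝ) (gradient f (a + t • v)) v
      ≤ ∫ t in (0:ℝ)..1, (inner (𝕜 := ℝ) (gradient f a) v + L * ‖v‖ ^ 2 * t) := by
    apply intervalIntegral.integral_mono_on (by norm_num) (cont.intervalIntegrable _ _)
      (contmaj.intervalIntegrable _ _)
    intro t ht
    have h1 : inner (𝕜 := ℝ) (gradient f (a + t • v)) v
        = inner (𝕜 := ℝ) (gradient f a) v
          + inner (𝕜 := ℝ) (gradient f (a + t • v) - gradient f a) v := by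
      rw [inner_sub_left]; ring
    rw [h1]
    gcongr
    calc inner (𝕜 := ℝ) (gradient f (a + t • v) - gradient f a) v
        ≤ ‖gradient f (a + t • v) - gradient f a‖ * ‖v‖ := real_inner_le_norm _ _
      _ ≤ (L * (t * ‖v‖)) * ‖v‖ := by
          gcongr
          have := hlip.dist_le_mul (a + t • v) a
          rw [dist_eq_norm, dist_eq_norm] at this
          simpa [norm_smul, abs_of_nonneg ht.1, Real.coe_toNNReal L hL, mul_assoc]
            using this
      _ = L * ‖v‖ ^ 2 * t := by ring
  have intval : ∫ t in (0:ℝ)..1, (inner (𝕜 := ℝ) (gradient f a) v + L * ‖v‖ ^ 2 * t)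
      = inner (𝕜 := ℝ) (gradient f a) v + L / 2 * ‖v‖ ^ 2 := by
    rw [intervalIntegral.integral_add (continuous_const.intervalIntegrable _ _)
      ((by continuity : Continuous fun t : ℝ => L * ‖v‖ ^ 2 * t).intervalIntegrable _ _)]
    rw [intervalIntegral.integral_const_mul, integral_id, intervalIntegral.integral_const]
    simp
    ring
  have := bound
  rw [ftc, intval] at this
  linarith

set_option maxHeartbeats 1000000 in
/-- The discrete scheme ISEHD-Disc
`x_{k+1} = x_k + α_k(x_k − x_{k−1}) − β_k(∇f(x_k) − ∇f(x_{k−1})) − s_k ∇f(x_k)`,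
with `α_k = 1/(1 + γ_k h)`, `β_k = βhα_k`, `s_k = h²α_k`, under the stepsize
condition `β + h/2 < c/L`, satisfies
`Σ_k ‖∇f(x_k)‖² < ∞` and `Σ_k ‖x_{k+1} − x_k‖² < ∞`; in particular
`‖∇f(x_k)‖ → 0`. -/
theorem isehd_disc_summability
    (d : ℕ) (f : EuclideanSpace ℝ (Fin d) → ℝ) (L h β c C : ℝ) (γ : ℕ → ℝ)
    (hf : ContDiff ℝ 2 f) (hbdd : BddBelow (Set.range f))
    (hL : 0 < L) (hlip : LipschitzWith (Real.toNNReal L) (gradient f))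
    (hh : 0 < h) (hβ : 0 ≤ β) (hc : 0 < c) (hcC : c ≤ C)
    (hγ : ∀ k, c ≤ γ k ∧ γ k ≤ C)
    (hstep : β + h / 2 < c / L)
    (x : ℕ → EuclideanSpace ℝ (Fin d))
    (hrec : ∀ k : ℕ, 1 ≤ k →
      x (k + 1) = x k + (1 / (1 + γ k * h)) • (x k - x (k - 1))
        - (β * h * (1 / (1 + γ k * h))) • (gradient f (x k) - gradient f (x (k - 1)))
        - (h ^ 2 * (1 / (1 + γ k * h))) • gradient f (x k)) :
    Summable (fun k => ‖gradient f (x k)‖ ^ 2) ∧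
    Summable (fun k => ‖x (k + 1) - x k‖ ^ 2) ∧
    Tendsto (fun k => ‖gradient f (x k)‖) atTop (𝓝 0) := by
  obtain ⟨m, hm⟩ := hbdd
  have hmle : ∀ p, m ≤ f p := fun p => hm ⟨p, rfl⟩
  have hdiff : Differentiable ℝ f := hf.differentiable (by norm_num)
  have hcL : L * (β + h / 2) < c := by
    have := (lt_div_iff₀ hL).mp hstep
    linarith
  -- the vector identity, for every k ≥ 1
  have hvec : ∀ k : ℕ, 1 ≤ k →
      (1 + γ k * h) • (x (k + 1) - x k)
        = (x k - x (k - 1)) - (β * h) • (gradient f (x k) - gradient f (x (k - 1)))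
          - (h ^ 2) • gradient f (x k) := by
    intro k hk
    have hpos : (0:ℝ) < 1 + γ k * h := by nlinarith [(hγ k).1]
    have h1 : x (k + 1) - x k
        = (1 / (1 + γ k * h)) • ((x k - x (k - 1))
            - (β * h) • (gradient f (x k) - gradient f (x (k - 1)))
            - (h ^ 2) • gradient f (x k)) := by
      rw [hrec k hk]; module
    rw [h1, smul_smul, mul_one_div, div_self hpos.ne', one_smul]
  -- Lipschitz bound on gradient differences
  have hgd : ∀ p q : EuclideanSpace ℝ (Fin d),
      ‖gradient f p - gradient f q‖ ≤ L * ‖p - q‖ := by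
    intro p q
    have := hlip.dist_le_mul p q
    rw [dist_eq_norm, dist_eq_norm] at this
    simpa [Real.coe_toNNReal L hL.le] using this
  -- key one-step energy inequality
  have key : ∀ k : ℕ, 1 ≤ k →
      2 * h ^ 2 * (f (x (k + 1)) - m) + (1 + β * h * L) * ‖x (k + 1) - x k‖ ^ 2
        + 2 * h * (c - L * (β + h / 2)) * ‖x (k + 1) - x k‖ ^ 2
      ≤ 2 * h ^ 2 * (f (x k) - m) + (1 + β * h * L) * ‖x k - x (k - 1)‖ ^ 2 := by
    intro k hk
    have hv := hvec k hk
    set a := x (k - 1) with ha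
    set b := x k with hb
    set cc := x (k + 1) with hcc
    set gb := gradient f b with hgb
    set ga := gradient f a with hga
    have hip : (1 + γ k * h) * ‖cc - b‖ ^ 2
        = inner (𝕜 := ℝ) (b - a) (cc - b) - β * h * inner (𝕜 := ℝ) (gb - ga) (cc - b)
          - h ^ 2 * inner (𝕜 := ℝ) gb (cc - b) := by
      have h2 : inner (𝕜 := ℝ) ((1 + γ k * h) • (cc - b)) (cc - b)
          = inner (𝕜 := ℝ) ((b - a) - (β * h) • (gb - ga) - (h ^ 2) • gb) (cc - b) := by
        rw [hv]
      simp only [inner_sub_left, real_inner_smul_left] at h2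
      rw [← real_inner_self_eq_norm_sq]
      simp only [inner_sub_left]
      linarith
    have hdesc : f cc ≤ f b + inner (𝕜 := ℝ) gb (cc - b) + L / 2 * ‖cc - b‖ ^ 2 :=
      descent_lemma f L hL.le hdiff hlip b cc
    have hdesc2 : 2 * h ^ 2 * f cc
        ≤ 2 * h ^ 2 * (f b + inner (𝕜 := ℝ) gb (cc - b) + L / 2 * ‖cc - b‖ ^ 2) :=
      mul_le_mul_of_nonneg_left hdesc (by positivity)
    have e0 : inner (𝕜 := ℝ) (b - a) (cc - b) ≤ ‖b - a‖ * ‖cc - b‖ := real_inner_le_norm _ _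
    have e1 : -(inner (𝕜 := ℝ) (gb - ga) (cc - b)) ≤ ‖gb - ga‖ * ‖cc - b‖ := by
      have h4 := abs_real_inner_le_norm (gb - ga) (cc - b)
      have h3 := neg_abs_le (inner (𝕜 := ℝ) (gb - ga) (cc - b))
      linarith
    have e2 : ‖gb - ga‖ * ‖cc - b‖ ≤ (L * ‖b - a‖) * ‖cc - b‖ :=
      mul_le_mul_of_nonneg_right (hgd b a) (norm_nonneg _)
    have e3 : β * h * (-(inner (𝕜 := ℝ) (gb - ga) (cc - b)))
        ≤ β * h * ((L * ‖b - a‖) * ‖cc - b‖) :=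
      mul_le_mul_of_nonneg_left (e1.trans e2) (by positivity)
    have e4 : ‖b - a‖ * ‖cc - b‖ ≤ (‖b - a‖ ^ 2 + ‖cc - b‖ ^ 2) / 2 := by
      nlinarith [sq_nonneg (‖b - a‖ - ‖cc - b‖)]
    have e5 : (1 + β * h * L) * (‖b - a‖ * ‖cc - b‖)
        ≤ (1 + β * h * L) * ((‖b - a‖ ^ 2 + ‖cc - b‖ ^ 2) / 2) := by
      have hPpos : (0:ℝ) ≤ 1 + β * h * L := by positivity
      exact mul_le_mul_of_nonneg_left e4 hPpos
    have hcross : 2 * inner (𝕜 := ℝ) (b - a) (cc - b)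
        - 2 * (β * h) * inner (𝕜 := ℝ) (gb - ga) (cc - b)
        ≤ (1 + β * h * L) * (‖b - a‖ ^ 2 + ‖cc - b‖ ^ 2) := by
      nlinarith [e0, e3, e5]
    have hGc : 0 ≤ 2 * h * (γ k - c) * ‖cc - b‖ ^ 2 := by
      have h5 := (hγ k).1
      have : (0:ℝ) ≤ γ k - c := by linarith
      positivity
    linarith [hdesc2, hip, hcross, hGc]
  -- energy and summability
  have hD : (0:ℝ) < 2 * h * (c - L * (β + h / 2)) := by nlinarith
  have hEstep : ∀ k : ℕ,
      (2 * h ^ 2 * (f (x (k + 1 + 1)) - m) + (1 + β * h * L) * ‖x (k + 1 + 1) - x (k + 1)‖ ^ 2)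
        + 2 * h * (c - L * (β + h / 2)) * ‖x (k + 1 + 1) - x (k + 1)‖ ^ 2
      ≤ 2 * h ^ 2 * (f (x (k + 1)) - m) + (1 + β * h * L) * ‖x (k + 1) - x k‖ ^ 2 := by
    intro k
    have h1 := key (k + 1) (Nat.le_add_left 1 k)
    simpa [Nat.add_sub_cancel] using h1
  have hEnn : ∀ k : ℕ,
      (0:ℝ) ≤ 2 * h ^ 2 * (f (x (k + 1)) - m) + (1 + β * h * L) * ‖x (k + 1) - x k‖ ^ 2 := by
    intro k
    have h1 := hmle (x (k + 1))
    have h2 : (0:ℝ) ≤ (1 + β * h * L) * ‖x (k + 1) - x k‖ ^ 2 := by positivity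
    nlinarith [sq_nonneg h]
  have hchain : ∀ n : ℕ,
      (2 * h ^ 2 * (f (x (n + 1)) - m) + (1 + β * h * L) * ‖x (n + 1) - x n‖ ^ 2)
        + 2 * h * (c - L * (β + h / 2)) * ∑ i ∈ Finset.range n, ‖x (i + 1 + 1) - x (i + 1)‖ ^ 2
      ≤ 2 * h ^ 2 * (f (x 1) - m) + (1 + β * h * L) * ‖x 1 - x 0‖ ^ 2 := by
    intro n
    induction n with
    | zero => simp
    | succ n ih =>
      rw [Finset.sum_range_succ]
      have h1 := hEstep n
      linarith
  have hpartial : ∀ n : ℕ, ∑ i ∈ Finset.range n, ‖x (i + 1 + 1) - x (i + 1)‖ ^ 2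
      ≤ (2 * h ^ 2 * (f (x 1) - m) + (1 + β * h * L) * ‖x 1 - x 0‖ ^ 2)
        / (2 * h * (c - L * (β + h / 2))) := by
    intro n
    rw [le_div_iff₀ hD]
    have h1 := hchain n
    have h2 := hEnn n
    linarith
  have hsum0 : Summable (fun k => ‖x (k + 1 + 1) - x (k + 1)‖ ^ 2) :=
    summable_of_sum_range_le (fun n => sq_nonneg _) hpartial
  have hsumd : Summable (fun k => ‖x (k + 1) - x k‖ ^ 2) :=
    (summable_nat_add_iff 1).mp hsum0
  -- gradient bound
  have keyg : ∀ k : ℕ, 1 ≤ k →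
      ‖gradient f (x k)‖ ^ 2 ≤ (2 * (1 + β * h * L) ^ 2 / h ^ 4) * ‖x k - x (k - 1)‖ ^ 2
        + (2 * (1 + C * h) ^ 2 / h ^ 4) * ‖x (k + 1) - x k‖ ^ 2 := by
    intro k hk
    have hv := hvec k hk
    have hG1 := (hγ k).1
    have hG2 := (hγ k).2
    have hv2 : (h ^ 2) • gradient f (x k)
        = ((x k - x (k - 1)) - (β * h) • (gradient f (x k) - gradient f (x (k - 1))))
          - (1 + γ k * h) • (x (k + 1) - x k) := by
      rw [eq_sub_iff_add_eq, hv]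
      abel
    have hn : h ^ 2 * ‖gradient f (x k)‖
        ≤ (1 + β * h * L) * ‖x k - x (k - 1)‖ + (1 + C * h) * ‖x (k + 1) - x k‖ := by
      have hn1 : ‖(h ^ 2) • gradient f (x k)‖ = h ^ 2 * ‖gradient f (x k)‖ := by
        rw [norm_smul, Real.norm_eq_abs, abs_of_nonneg (by positivity)]
      have hn2 : ‖(x k - x (k - 1)) - (β * h) • (gradient f (x k) - gradient f (x (k - 1)))‖
          ≤ ‖x k - x (k - 1)‖ + β * h * (L * ‖x k - x (k - 1)‖) := by
        refine (norm_sub_le _ _).trans ?_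
        gcongr
        rw [norm_smul, Real.norm_eq_abs, abs_of_nonneg (by positivity)]
        exact mul_le_mul_of_nonneg_left (hgd (x k) (x (k - 1))) (by positivity)
      have hn3 : ‖(1 + γ k * h) • (x (k + 1) - x k)‖ ≤ (1 + C * h) * ‖x (k + 1) - x k‖ := by
        rw [norm_smul, Real.norm_eq_abs, abs_of_nonneg (by nlinarith)]
        exact mul_le_mul_of_nonneg_right (by nlinarith) (norm_nonneg _)
      calc h ^ 2 * ‖gradient f (x k)‖ = ‖(h ^ 2) • gradient f (x k)‖ := hn1.symm
        _ ≤ ‖(x k - x (k - 1)) - (β * h) • (gradient f (x k) - gradient f (x (k - 1)))‖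
            + ‖(1 + γ k * h) • (x (k + 1) - x k)‖ := by rw [hv2]; exact norm_sub_le _ _
        _ ≤ (1 + β * h * L) * ‖x k - x (k - 1)‖ + (1 + C * h) * ‖x (k + 1) - x k‖ := by
            have := hn3
            nlinarith [hn2]
    have hsq : (h ^ 2 * ‖gradient f (x k)‖) ^ 2
        ≤ ((1 + β * h * L) * ‖x k - x (k - 1)‖ + (1 + C * h) * ‖x (k + 1) - x k‖) ^ 2 :=
      pow_le_pow_left₀ (by positivity) hn 2
    rw [div_mul_eq_mul_div, div_mul_eq_mul_div, ← add_div, le_div_iff₀ (by positivity)]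
    nlinarith [hsq, sq_nonneg ((1 + β * h * L) * ‖x k - x (k - 1)‖
      - (1 + C * h) * ‖x (k + 1) - x k‖)]
  have hsumg1 : Summable (fun k => ‖gradient f (x (k + 1))‖ ^ 2) := by
    refine Summable.of_nonneg_of_le (fun k => sq_nonneg _) (fun k => ?_)
      (((hsumd.mul_left (2 * (1 + β * h * L) ^ 2 / h ^ 4))).add
        (hsum0.mul_left (2 * (1 + C * h) ^ 2 / h ^ 4)))
    have h1 := keyg (k + 1) (Nat.le_add_left 1 k)
    simpa [Nat.add_sub_cancel] using h1
  have hsumg : Summable (fun k => ‖gradient f (x k)‖ ^ 2) :=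
    (summable_nat_add_iff 1).mp hsumg1
  refine ⟨hsumg, hsumd, ?_⟩
  have h0 := hsumg.tendsto_atTop_zero
  have h1 : Tendsto (fun k => Real.sqrt (‖gradient f (x k)‖ ^ 2)) atTop (𝓝 (Real.sqrt 0)) :=
    (Real.continuous_sqrt.tendsto 0).comp h0
  simpa [Real.sqrt_sq (norm_nonneg _)] using h1
end

section
/- Consider the discrete scheme ISEHD-Disc (y_k = x_k + α_k(x_k − x_{k−1}) − β_k(∇f(x_k) − ∇f(x_{k−1})), x_{k+1} = y_k − s_k∇f(x_k), α_k = 1/(1+γ_k h), β_k = βhα_k, s_k = h²α_k) under the condition β + h/2 < c/L. Set C₁ = 1/h² + βL/h, s̄ = h²/(1+ch), δ = 1/s̄ − L/2 − C₁, and V_k = f(x_k) + (C₁/2)‖x_k − x_{k−1}‖². Then δ > 0 and V_{k+1} ≤ V_k − δ‖x_{k+1} − x_k‖² for every k ≥ 1; in particular (V_k) is non-increasing and converges. -/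
set_option maxHeartbeats 1000000

open Filter Topology Set intervalIntegral

local notation "⟪" x ", " y "⟫" => @inner ℝ _ _ x y

lemma descent_lemma_s10 {d : ℕ} (f : EuclideanSpace ℝ (Fin d) → ℝ) {L : ℝ}
    (hL : 0 ≤ L)
    (hdiff : Differentiable ℝ f)
    (hlip : LipschitzWith (Real.toNNReal L) (gradient f))
    (x y : EuclideanSpace ℝ (Fin d)) :
    f y ≤ f x + ⟪gradient f x, y - x⟫ + L / 2 * ‖y - x‖ ^ 2 := by
  set v := y - x with hv
  have hcurve : ∀ t : ℝ, HasDerivAt (fun t : ℝ => x + t • v) v t := by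
    intro t
    simpa using ((hasDerivAt_id t).smul_const v).const_add x
  have hderiv : ∀ t : ℝ,
      HasDerivAt (fun t : ℝ => f (x + t • v)) ⟪gradient f (x + t • v), v⟫ t := by
    intro t
    have hg : HasFDerivAt f
        ((InnerProductSpace.toDual ℝ _) (gradient f (x + t • v))) (x + t • v) :=
      (hdiff (x + t • v)).hasGradientAt
    simpa [Function.comp_def] using hg.comp_hasDerivAt t (hcurve t)
  have hgradcont : Continuous (gradient f) := hlip.continuous
  have hcont : Continuous fun t : ℝ => ⟪gradient f (x + t • v), v⟫ := by
    exact (hgradcont.comp (by continuity)).inner continuous_const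
  have hFTC : ∫ t in (0:ℝ)..1, ⟪gradient f (x + t • v), v⟫ = f y - f x := by
    have := integral_eq_sub_of_hasDerivAt (fun t _ => hderiv t)
      (hcont.intervalIntegrable 0 1)
    simpa [hv] using this
  have hbound : ∀ t ∈ Set.Icc (0:ℝ) 1,
      ⟪gradient f (x + t • v), v⟫ ≤ ⟪gradient f x, v⟫ + L * t * ‖v‖ ^ 2 := by
    intro t ht
    have h1 : ⟪gradient f (x + t • v) - gradient f x, v⟫
        ≤ ‖gradient f (x + t • v) - gradient f x‖ * ‖v‖ :=
      real_inner_le_norm _ _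
    have h2 : ‖gradient f (x + t • v) - gradient f x‖ ≤ L * (t * ‖v‖) := by
      have := hlip.dist_le_mul (x + t • v) x
      rw [Real.coe_toNNReal _ hL] at this
      simpa [dist_eq_norm, norm_smul, abs_of_nonneg ht.1, mul_assoc] using this
    have h3 : ⟪gradient f (x + t • v) - gradient f x, v⟫
        ≤ L * t * ‖v‖ ^ 2 := by
      calc ⟪gradient f (x + t • v) - gradient f x, v⟫
          ≤ ‖gradient f (x + t • v) - gradient f x‖ * ‖v‖ := h1
        _ ≤ L * (t * ‖v‖) * ‖v‖ :=
            mul_le_mul_of_nonneg_right h2 (norm_nonneg _)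
        _ = L * t * ‖v‖ ^ 2 := by ring
    have := inner_sub_left (𝕜 := ℝ) (gradient f (x + t • v)) (gradient f x) v
    linarith [this ▸ h3]
  have hint : ∫ t in (0:ℝ)..1, (⟪gradient f x, v⟫ + L * t * ‖v‖ ^ 2)
      = ⟪gradient f x, v⟫ + L / 2 * ‖v‖ ^ 2 := by
    rw [intervalIntegral.integral_add (intervalIntegrable_const)
      (by apply Continuous.intervalIntegrable; continuity)]
    have he : (fun t : ℝ => L * t * ‖v‖ ^ 2) = fun t : ℝ => (L * ‖v‖ ^ 2) * t := by
      funext t; ring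
    rw [intervalIntegral.integral_const, he, intervalIntegral.integral_const_mul,
      integral_id]
    simp
    ring
  have hmono : ∫ t in (0:ℝ)..1, ⟪gradient f (x + t • v), v⟫
      ≤ ∫ t in (0:ℝ)..1, (⟪gradient f x, v⟫ + L * t * ‖v‖ ^ 2) := by
    apply intervalIntegral.integral_mono_on zero_le_one
      (hcont.intervalIntegrable 0 1)
      (by apply Continuous.intervalIntegrable; continuity)
    exact hbound
  rw [hFTC] at hmono
  rw [hint] at hmono
  linarith

/-- Lyapunov descent for ISEHD-Disc under `β + h/2 < c/L`:
with `C₁ = 1/h² + βL/h`, `s̄ = h²/(1+ch)`, `δ = 1/s̄ − L/2 − C₁` and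
`V_k = f(x_k) + (C₁/2)‖x_k − x_{k−1}‖²`, one has `δ > 0` and
`V_{k+1} ≤ V_k − δ‖x_{k+1} − x_k‖²` for all `k ≥ 1`; in particular `(V_k)` is
non-increasing and converges. -/
theorem isehd_disc_lyapunov
    (d : ℕ) (f : EuclideanSpace ℝ (Fin d) → ℝ) (L h β c C : ℝ) (γ : ℕ → ℝ)
    (hf : ContDiff ℝ 2 f) (hbdd : BddBelow (Set.range f))
    (hL : 0 < L) (hlip : LipschitzWith (Real.toNNReal L) (gradient f))
    (hh : 0 < h) (hβ : 0 ≤ β) (hc : 0 < c) (hcC : c ≤ C)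
    (hγ : ∀ k, c ≤ γ k ∧ γ k ≤ C)
    (hstep : β + h / 2 < c / L)
    (x : ℕ → EuclideanSpace ℝ (Fin d))
    (hrec : ∀ k : ℕ, 1 ≤ k →
      x (k + 1) = x k + (1 / (1 + γ k * h)) • (x k - x (k - 1))
        - (β * h * (1 / (1 + γ k * h))) • (gradient f (x k) - gradient f (x (k - 1)))
        - (h ^ 2 * (1 / (1 + γ k * h))) • gradient f (x k))
    (C₁ sbar δ : ℝ)
    (hC₁ : C₁ = 1 / h ^ 2 + β * L / h)
    (hsbar : sbar = h ^ 2 / (1 + c * h))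
    (hδ : δ = 1 / sbar - L / 2 - C₁) :
    0 < δ ∧
    (∀ k : ℕ, 1 ≤ k →
      f (x (k + 1)) + (C₁ / 2) * ‖x (k + 1) - x k‖ ^ 2
        ≤ f (x k) + (C₁ / 2) * ‖x k - x (k - 1)‖ ^ 2
            - δ * ‖x (k + 1) - x k‖ ^ 2) ∧
    (∀ k : ℕ, 1 ≤ k →
      f (x (k + 1)) + (C₁ / 2) * ‖x (k + 1) - x k‖ ^ 2
        ≤ f (x k) + (C₁ / 2) * ‖x k - x (k - 1)‖ ^ 2) ∧
    (∃ l : ℝ, Tendsto (fun k => f (x (k + 1)) + (C₁ / 2) * ‖x (k + 1) - x k‖ ^ 2)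
        atTop (𝓝 l)) := by
  have hch : (0:ℝ) < 1 + c * h := by positivity
  have hh2 : (0:ℝ) < h ^ 2 := by positivity
  have h1sbar : 1 / sbar = (1 + c * h) / h ^ 2 := by
    rw [hsbar, one_div_div]
  have hstep' : β * L + h * L / 2 < c := by
    rw [lt_div_iff₀ hL] at hstep
    nlinarith
  have hδpos : 0 < δ := by
    have heq : δ = (c - β * L - h * L / 2) / h := by
      rw [hδ, h1sbar, hC₁]; field_simp; ring
    rw [heq]
    exact div_pos (by linarith) hh
  have hdiff : Differentiable ℝ f := hf.differentiable (by norm_num)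
  have hC₁nn : 0 ≤ C₁ := by
    rw [hC₁]; positivity
  have key : ∀ k : ℕ, 1 ≤ k →
      f (x (k + 1)) + (C₁ / 2) * ‖x (k + 1) - x k‖ ^ 2
        ≤ f (x k) + (C₁ / 2) * ‖x k - x (k - 1)‖ ^ 2
            - δ * ‖x (k + 1) - x k‖ ^ 2 := by
    intro k hk
    set a := x (k - 1)
    set b := x k with hb
    set y := x (k + 1) with hy
    set g := gradient f b with hg
    set g' := gradient f a with hg'
    set u := b - a with hu
    set v := y - b with hv
    have hP : (0:ℝ) < 1 + γ k * h := by
      have := (hγ k).1; nlinarith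
    have hveq : v = (1 / (1 + γ k * h)) • u - (β * h * (1 / (1 + γ k * h))) • (g - g')
        - (h ^ 2 * (1 / (1 + γ k * h))) • g := by
      rw [hv, hy, hrec k hk]
      abel
    have hveq2 : (1 + γ k * h) • v = u - (β * h) • (g - g') - (h ^ 2) • g := by
      rw [hveq]
      match_scalars <;> (field_simp; try ring)
    have E : (1 + γ k * h) * ‖v‖ ^ 2 = ⟪u, v⟫ - β * h * ⟪g - g', v⟫ - h ^ 2 * ⟪g, v⟫ := by
      have h0 := congrArg (fun z => ⟪z, v⟫) hveq2
      simpa only [inner_sub_left, real_inner_smul_left, real_inner_self_eq_norm_sq] using h0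
    have hb1 : ⟪u, v⟫ ≤ (‖u‖ ^ 2 + ‖v‖ ^ 2) / 2 := by
      have h1 := real_inner_le_norm u v
      nlinarith [sq_nonneg (‖u‖ - ‖v‖)]
    have hb2 : -(L * (‖u‖ ^ 2 + ‖v‖ ^ 2) / 2) ≤ ⟪g - g', v⟫ := by
      have h1 : |⟪g - g', v⟫| ≤ ‖g - g'‖ * ‖v‖ := abs_real_inner_le_norm _ _
      have h2 : ‖g - g'‖ ≤ L * ‖u‖ := by
        have := hlip.dist_le_mul b a
        rw [Real.coe_toNNReal _ hL.le] at this
        simpa [hg, hg', hu, dist_eq_norm] using this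
      have h3 : -(‖g - g'‖ * ‖v‖) ≤ ⟪g - g', v⟫ := neg_le_of_abs_le h1
      nlinarith [sq_nonneg (‖u‖ - ‖v‖), norm_nonneg v, norm_nonneg u, norm_nonneg (g - g'),
        mul_le_mul_of_nonneg_right h2 (norm_nonneg v)]
    have t1 : 0 ≤ β * h * (⟪g - g', v⟫ + L * (‖u‖ ^ 2 + ‖v‖ ^ 2) / 2) :=
      mul_nonneg (by positivity) (by linarith)
    have t2 : (1 + c * h) * ‖v‖ ^ 2 ≤ (1 + γ k * h) * ‖v‖ ^ 2 := by
      nlinarith [mul_nonneg (mul_nonneg (sub_nonneg.2 (hγ k).1) hh.le) (sq_nonneg ‖v‖)]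
    have keyE : h ^ 2 * ⟪g, v⟫ ≤ (‖u‖ ^ 2 + ‖v‖ ^ 2) / 2
        + β * h * (L * (‖u‖ ^ 2 + ‖v‖ ^ 2) / 2) - (1 + c * h) * ‖v‖ ^ 2 := by
      nlinarith [E, hb1, t1, t2]
    have hfin : ⟪g, v⟫ ≤ C₁ / 2 * ‖u‖ ^ 2 + C₁ / 2 * ‖v‖ ^ 2
        - ((1 + c * h) / h ^ 2) * ‖v‖ ^ 2 := by
      have hstep1 : ⟪g, v⟫ ≤ ((‖u‖ ^ 2 + ‖v‖ ^ 2) / 2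
          + β * h * (L * (‖u‖ ^ 2 + ‖v‖ ^ 2) / 2) - (1 + c * h) * ‖v‖ ^ 2) / h ^ 2 := by
        rw [le_div_iff₀ hh2]; nlinarith [keyE]
      have heq : ((‖u‖ ^ 2 + ‖v‖ ^ 2) / 2
          + β * h * (L * (‖u‖ ^ 2 + ‖v‖ ^ 2) / 2) - (1 + c * h) * ‖v‖ ^ 2) / h ^ 2
          = C₁ / 2 * ‖u‖ ^ 2 + C₁ / 2 * ‖v‖ ^ 2 - ((1 + c * h) / h ^ 2) * ‖v‖ ^ 2 := by
        rw [hC₁]; field_simp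
      linarith [heq ▸ hstep1]
    have hδB : δ * ‖v‖ ^ 2 = ((1 + c * h) / h ^ 2) * ‖v‖ ^ 2 - L / 2 * ‖v‖ ^ 2
        - C₁ * ‖v‖ ^ 2 := by
      rw [hδ, h1sbar]; ring
    have hdesc := descent_lemma_s10 f hL.le hdiff hlip b y
    linarith [hdesc, hfin, hδB]
  refine ⟨hδpos, key, fun k hk => ?_, ?_⟩
  · have := key k hk
    nlinarith [sq_nonneg ‖x (k + 1) - x k‖]
  · set A : ℕ → ℝ := fun k => f (x (k + 1)) + (C₁ / 2) * ‖x (k + 1) - x k‖ ^ 2 with hA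
    have hanti : Antitone A := by
      apply antitone_nat_of_succ_le
      intro k
      have h1 : 1 ≤ k + 1 := Nat.le_add_left 1 k
      have := key (k + 1) h1
      simpa [hA] using by
        have h2 : (k + 1 : ℕ) - 1 = k := rfl
        rw [h2] at this
        nlinarith [sq_nonneg ‖x (k + 1 + 1) - x (k + 1)‖]
    obtain ⟨m, hm⟩ := hbdd
    have hbddA : BddBelow (Set.range A) := by
      refine ⟨m, ?_⟩
      rintro _ ⟨k, rfl⟩
      have h1 : m ≤ f (x (k + 1)) := hm ⟨x (k + 1), rfl⟩
      have h2 : 0 ≤ (C₁ / 2) * ‖x (k + 1) - x k‖ ^ 2 := by positivity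
      simp only [hA]
      linarith
    exact ⟨⨅ k, A k, tendsto_atTop_ciInf hanti hbddA⟩
end

section
/- Consider the discrete scheme ISEHD-Disc under the condition β + h/2 < c/L, and assume the sequence (x_k) is bounded. Let 𝔠 be the set of cluster points of (x_k), C₁ = 1/h² + βL/h, E(u,v) = f(u) + (C₁/2)‖v‖² on ℝ^{2d}, and L̃ = lim_k (f(x_k) + (C₁/2)‖x_k − x_{k−1}‖²). Assume there exist r, η > 0 and ψ ∈ κ(0,η) such that ψ'(E(u,v) − L̃)‖∇E(u,v)‖ ≥ 1 whenever dist(u,𝔠) < r, ‖v‖ < r and 0 < E(u,v) − L̃ < η. Then Σ_k ‖x_{k+1} − x_k‖ < ∞ and x_k converges as k → ∞ to a point x_∞ with ∇f(x_∞) = 0. -/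
open Filter Topology Set Metric

set_option maxHeartbeats 4000000

section aux
variable {E : Type*} [NormedAddCommGroup E] [InnerProductSpace ℝ E] [CompleteSpace E]

lemma grad_inner_eq {f : E → ℝ} (hf : Differentiable ℝ f) (p w : E) :
    fderiv ℝ f p w = inner ℝ (gradient f p) w := by
  have h1 : HasFDerivAt f (InnerProductSpace.toDual ℝ E (gradient f p)) p :=
    (hasGradientAt_iff_hasFDerivAt).1 (hf p).hasGradientAt
  rw [h1.fderiv]
  exact InnerProductSpace.toDual_apply_apply

lemma descent_aux {f : E → ℝ} {L : ℝ} (hL : 0 ≤ L) (hf : Differentiable ℝ f)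
    (hlip : ∀ u v : E, ‖gradient f u - gradient f v‖ ≤ L * ‖u - v‖) (x y : E) :
    f y ≤ f x + inner ℝ (gradient f x) (y - x) + L / 2 * ‖y - x‖ ^ 2 := by
  set v := y - x with hv
  set φ : ℝ → ℝ := fun t => f (x + t • v) - t * inner ℝ (gradient f x) v - L * t ^ 2 / 2 * ‖v‖ ^ 2
    with hφ
  have hline : ∀ t : ℝ, HasDerivAt (fun s : ℝ => x + s • v) v t := by
    intro t
    simpa using ((hasDerivAt_id t).smul_const v).const_add x
  have hder : ∀ t : ℝ, HasDerivAt φ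
      ((inner ℝ (gradient f (x + t • v)) v : ℝ) - inner ℝ (gradient f x) v - L * t * ‖v‖ ^ 2) t := by
    intro t
    have h1 : HasDerivAt (fun s : ℝ => f (x + s • v)) (fderiv ℝ f (x + t • v) v) t :=
      (hf (x + t • v)).hasFDerivAt.comp_hasDerivAt t (hline t)
    rw [grad_inner_eq hf] at h1
    have h2 : HasDerivAt (fun s : ℝ => s * (inner ℝ (gradient f x) v : ℝ))
        (inner ℝ (gradient f x) v : ℝ) t := by
      simpa using (hasDerivAt_id t).mul_const (inner ℝ (gradient f x) v : ℝ)
    have h3 : HasDerivAt (fun s : ℝ => L * s ^ 2 / 2 * ‖v‖ ^ 2) (L * t * ‖v‖ ^ 2) t := by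
      have := ((hasDerivAt_pow 2 t).const_mul L).div_const 2
      have := this.mul_const (‖v‖ ^ 2)
      refine this.congr_deriv ?_
      ring
    exact (h1.sub h2).sub h3
  have hnonpos : ∀ t ∈ interior (Icc (0:ℝ) 1), deriv φ t ≤ 0 := by
    intro t ht
    rw [interior_Icc] at ht
    rw [(hder t).deriv]
    have hsub : (inner ℝ (gradient f (x + t • v)) v : ℝ) - inner ℝ (gradient f x) v
        = inner ℝ (gradient f (x + t • v) - gradient f x) v := by
      rw [inner_sub_left]
    rw [hsub]
    have h1 : (inner ℝ (gradient f (x + t • v)) v : ℝ) - inner ℝ (gradient f x) v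
        ≤ L * t * ‖v‖ ^ 2 := by
      rw [hsub]
      calc (inner ℝ (gradient f (x + t • v) - gradient f x) v : ℝ)
          ≤ ‖gradient f (x + t • v) - gradient f x‖ * ‖v‖ := real_inner_le_norm _ _
        _ ≤ (L * ‖(x + t • v) - x‖) * ‖v‖ := by
            apply mul_le_mul_of_nonneg_right _ (norm_nonneg _)
            exact hlip _ _
        _ = L * t * ‖v‖ ^ 2 := by
            rw [add_sub_cancel_left, norm_smul, Real.norm_eq_abs, abs_of_pos ht.1]
            ring
    rw [hsub] at h1
    linarith
  have hcont : ContinuousOn φ (Icc 0 1) := by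
    apply Continuous.continuousOn
    have h0 : Continuous fun t : ℝ => x + t • v :=
      continuous_const.add (continuous_id.smul continuous_const)
    have h1 : Continuous fun t : ℝ => t * (inner ℝ (gradient f x) v : ℝ) :=
      continuous_id.mul continuous_const
    have h2 : Continuous fun t : ℝ => L * t ^ 2 / 2 * ‖v‖ ^ 2 := by fun_prop
    exact ((hf.continuous.comp h0).sub h1).sub h2
  have hdiff : DifferentiableOn ℝ φ (interior (Icc (0:ℝ) 1)) := fun t _ =>
    ((hder t).differentiableAt).differentiableWithinAt
  have hanti := antitoneOn_of_deriv_nonpos (convex_Icc (0:ℝ) 1) hcont hdiff hnonpos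
  have h01 := hanti (left_mem_Icc.2 zero_le_one) (right_mem_Icc.2 zero_le_one) zero_le_one
  simp only [hφ] at h01
  rw [one_smul] at h01
  have hxy : x + v = y := by rw [hv]; abel
  rw [hxy] at h01
  simp at h01
  rw [grad_inner_eq hf] at h01
  nlinarith [h01]

lemma concave_tangent {η : ℝ} {ψ ψ' : ℝ → ℝ}
    (hconc : ConcaveOn ℝ (Ico 0 η) ψ)
    (hderiv : ∀ s ∈ Ioo (0:ℝ) η, HasDerivAt ψ (ψ' s) s)
    {a b : ℝ} (ha : a ∈ Ioo (0:ℝ) η) (hb0 : 0 ≤ b) (hba : b ≤ a) :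
    ψ' a * (a - b) ≤ ψ a - ψ b := by
  rcases eq_or_lt_of_le hba with rfl | hba'
  · simp
  · have hmema : a ∈ Ico (0:ℝ) η := ⟨le_of_lt ha.1, ha.2⟩
    have hmemb : b ∈ Ico (0:ℝ) η := ⟨hb0, lt_trans hba' ha.2⟩
    have := hconc.le_slope_of_hasDerivAt hmemb hmema hba' (hderiv a ha)
    rw [slope_def_field] at this
    have hab : 0 < a - b := sub_pos.2 hba'
    rw [le_div_iff₀ hab] at this
    linarith

end aux

lemma am_step {δ a0 a1 P : ℝ} (hδ : 0 < δ) (h0 : 0 ≤ a0) (h1 : 0 ≤ a1) (hP : 0 ≤ P)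
    (hkey : δ * a1^2 ≤ (a0+a1) * P) : δ*(7*a1) ≤ δ*a0 + 16*P := by
  have hAM : 2*(δ*a1) ≤ δ*(a0+a1)/4 + 4*P := by
    nlinarith [mul_le_mul_of_nonneg_left hkey hδ.le,
      sq_nonneg (δ*(a0+a1)/4 - 4*P),
      mul_nonneg hδ.le h1, mul_nonneg hδ.le h0]
  linarith

lemma infDist_cluster_tendsto {E : Type*} [NormedAddCommGroup E] [ProperSpace E]
    (x : ℕ → E) (M : ℝ) (hb : ∀ k, ‖x k‖ ≤ M) :
    Tendsto (fun n => Metric.infDist (x n) {p | MapClusterPt p atTop x}) atTop (𝓝 0) := by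
  by_contra hcon
  rw [Metric.tendsto_atTop] at hcon
  push_neg at hcon
  obtain ⟨ε, hε, hfreq⟩ := hcon
  obtain ⟨φ, hφmono, hφ⟩ := Filter.extraction_of_frequently_atTop
    (Filter.frequently_atTop.2 (fun N => by
      obtain ⟨n, hn1, hn2⟩ := hfreq N
      exact ⟨n, hn1, hn2⟩))
  have hball : ∀ n, (x ∘ φ) n ∈ Metric.closedBall (0:E) M := by
    intro n
    simp [Metric.mem_closedBall, dist_eq_norm]
    exact hb (φ n)
  obtain ⟨p, _, ψ₂, hψ₂mono, hψ₂⟩ :=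
    tendsto_subseq_of_bounded Metric.isBounded_closedBall hball
  have hp : MapClusterPt p atTop x := by
    apply MapClusterPt.of_comp ((hφmono.comp hψ₂mono).tendsto_atTop)
    exact (hψ₂ : Tendsto (x ∘ φ ∘ ψ₂) atTop (𝓝 p)).mapClusterPt
  have hle : ∀ n, Metric.infDist (x (φ (ψ₂ n))) {p | MapClusterPt p atTop x}
      ≤ dist (x (φ (ψ₂ n))) p := fun n => Metric.infDist_le_dist_of_mem hp
  have htend : Tendsto (fun n => dist (x (φ (ψ₂ n))) p) atTop (𝓝 0) := by
    rw [← dist_self p]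
    exact (Filter.Tendsto.dist hψ₂ tendsto_const_nhds)
  obtain ⟨N, hN⟩ := (Metric.tendsto_atTop.1 htend) ε hε
  have h1 := hφ (ψ₂ N)
  have h2 := hle N
  have h3 := hN N le_rfl
  rw [Real.dist_eq, sub_zero] at h1 h3
  have : 0 ≤ dist (x (φ (ψ₂ N))) p := dist_nonneg
  rw [abs_of_nonneg this] at h3
  have hnn : 0 ≤ Metric.infDist (x (φ (ψ₂ N))) {p | MapClusterPt p atTop x} :=
    Metric.infDist_nonneg
  rw [abs_of_nonneg hnn] at h1
  linarith

/-- Global convergence of bounded ISEHD-Disc iterates under a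
KL inequality for `E(u,w) = f(u) + (C₁/2)‖w‖²` (gradient `(∇f(u), C₁w)`, so
`‖∇E(u,w)‖ = √(‖∇f(u)‖² + C₁²‖w‖²)`) near the cluster set of `(x_k)` at level
`L̃ = lim_k (f(x_k) + (C₁/2)‖x_k − x_{k−1}‖²)`: then
`Σ_k ‖x_{k+1} − x_k‖ < ∞` and `x_k` converges to a critical point of `f`. -/
theorem isehd_disc_KL_convergence
    (d : ℕ) (f : EuclideanSpace ℝ (Fin d) → ℝ) (L h β c C : ℝ) (γ : ℕ → ℝ)
    (hf : ContDiff ℝ 2 f) (hbdd : BddBelow (Set.range f))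
    (hL : 0 < L) (hlip : LipschitzWith (Real.toNNReal L) (gradient f))
    (hh : 0 < h) (hβ : 0 ≤ β) (hc : 0 < c) (hcC : c ≤ C)
    (hγ : ∀ k, c ≤ γ k ∧ γ k ≤ C)
    (hstep : β + h / 2 < c / L)
    (x : ℕ → EuclideanSpace ℝ (Fin d))
    (hrec : ∀ k : ℕ, 1 ≤ k →
      x (k + 1) = x k + (1 / (1 + γ k * h)) • (x k - x (k - 1))
        - (β * h * (1 / (1 + γ k * h))) • (gradient f (x k) - gradient f (x (k - 1)))
        - (h ^ 2 * (1 / (1 + γ k * h))) • gradient f (x k))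
    (hbound : ∃ M, ∀ k, ‖x k‖ ≤ M)
    (C₁ : ℝ) (hC₁ : C₁ = 1 / h ^ 2 + β * L / h)
    (Ltil : ℝ)
    (hLtil : Tendsto (fun k => f (x (k + 1)) + (C₁ / 2) * ‖x (k + 1) - x k‖ ^ 2)
      atTop (𝓝 Ltil))
    (r η : ℝ) (hr : 0 < r) (hη : 0 < η)
    (ψ ψ' : ℝ → ℝ)
    (hψcont : ContinuousOn ψ (Set.Ico 0 η))
    (hψ0 : ψ 0 = 0)
    (hψnonneg : ∀ s ∈ Set.Ico (0:ℝ) η, 0 ≤ ψ s)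
    (hψconc : ConcaveOn ℝ (Set.Ico 0 η) ψ)
    (hψderiv : ∀ s ∈ Set.Ioo (0:ℝ) η, HasDerivAt ψ (ψ' s) s)
    (hψ'pos : ∀ s ∈ Set.Ioo (0:ℝ) η, 0 < ψ' s)
    (hKL : ∀ u w : EuclideanSpace ℝ (Fin d),
      Metric.infDist u {p | MapClusterPt p atTop x} < r → ‖w‖ < r →
      0 < f u + (C₁ / 2) * ‖w‖ ^ 2 - Ltil →
      f u + (C₁ / 2) * ‖w‖ ^ 2 - Ltil < η →
      1 ≤ ψ' (f u + (C₁ / 2) * ‖w‖ ^ 2 - Ltil)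
            * Real.sqrt (‖gradient f u‖ ^ 2 + C₁ ^ 2 * ‖w‖ ^ 2)) :
    Summable (fun k => ‖x (k + 1) - x k‖) ∧
    ∃ xinf : EuclideanSpace ℝ (Fin d),
      Tendsto x atTop (𝓝 xinf) ∧ gradient f xinf = 0 := by
  classical
  obtain ⟨M, hM⟩ := hbound
  have hdiff : Differentiable ℝ f := hf.differentiable (by norm_num)
  have hLnn : ((Real.toNNReal L : NNReal) : ℝ) = L := Real.coe_toNNReal L hL.le
  have hlip' : ∀ u v, ‖gradient f u - gradient f v‖ ≤ L * ‖u - v‖ := by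
    intro u v
    have := hlip.dist_le_mul u v
    rwa [dist_eq_norm, dist_eq_norm, hLnn] at this
  have hC₁pos : 0 < C₁ := by rw [hC₁]; positivity
  set δ : ℝ := c / h - β * L / h - L / 2 with hδdef
  have hδ : 0 < δ := by
    have hδeq : δ = L / h * (c / L - β - h / 2) := by
      rw [hδdef]; field_simp
    rw [hδeq]
    have : 0 < c / L - β - h / 2 := by linarith
    positivity
  set Es : ℕ → ℝ := fun k => f (x (k + 1)) + C₁ / 2 * ‖x (k + 1) - x k‖ ^ 2 with hEs
  have hLtil' : Tendsto Es atTop (𝓝 Ltil) := by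
    apply hLtil.congr'
    filter_upwards with k
    rw [hEs]
  -- key algebraic identity of the scheme
  have key : ∀ k : ℕ, (1 + γ (k+1) * h) • (x (k+2) - x (k+1)) =
      (x (k+1) - x k) - (β*h) • (gradient f (x (k+1)) - gradient f (x k))
        - h^2 • gradient f (x (k+1)) := by
    intro k
    have hr := hrec (k+1) (Nat.le_add_left 1 k)
    simp only [Nat.add_sub_cancel] at hr
    have hγpos : (0:ℝ) < 1 + γ (k+1) * h := by nlinarith [(hγ (k+1)).1]
    have hne : (1 + γ (k+1)*h) ≠ 0 := ne_of_gt hγpos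
    have e1 : x (k+2) - x (k+1) = (1/(1 + γ (k+1)*h)) •
        ((x (k+1) - x k) - (β*h) • (gradient f (x (k+1)) - gradient f (x k))
          - h^2 • gradient f (x (k+1))) := by
      rw [show k+2 = k+1+1 from rfl, hr]
      module
    rw [e1, smul_smul, mul_one_div_cancel hne, one_smul]
  -- descent inequality
  have hdesc : ∀ k : ℕ, Es (k+1) + δ * ‖x (k+2) - x (k+1)‖^2 ≤ Es k := by
    intro k
    have hγ1 := (hγ (k+1)).1
    have hγpos : (0:ℝ) < 1 + γ (k+1) * h := by nlinarith
    have hh2 : (0:ℝ) < h^2 := by positivity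
    have hkey := key k
    have hf2 : f (x (k+2)) ≤ f (x (k+1))
        + (inner ℝ (gradient f (x (k+1))) (x (k+2) - x (k+1))) + L/2 * ‖x (k+2) - x (k+1)‖^2 := by
      have := descent_aux hL.le hdiff hlip' (x (k+1)) (x (k+2))
      convert this using 3 <;> abel
    have hEs1 : Es (k+1) = f (x (k+2)) + C₁/2 * ‖x (k+2) - x (k+1)‖^2 := by simp only [hEs]
    have hEs0 : Es k = f (x (k+1)) + C₁/2 * ‖x (k+1) - x k‖^2 := by simp only [hEs]
    have hlipk := hlip' (x (k+1)) (x k)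
    rw [hEs1, hEs0]
    set w := x (k+2) - x (k+1) with hw
    set u := x (k+1) - x k with hu
    set G := gradient f (x (k+1)) with hG
    set G0 := gradient f (x k) with hG0
    have hin : h^2 * (inner ℝ G w : ℝ) =
        (inner ℝ u w : ℝ) - (1 + γ (k+1)*h) * ‖w‖^2
          - β*h*((inner ℝ G w : ℝ) - (inner ℝ G0 w : ℝ)) := by
      have h0 := congrArg (fun z => (inner ℝ z w : ℝ)) hkey
      simp only [inner_sub_left, real_inner_smul_left, real_inner_self_eq_norm_sq] at h0
      linarith [h0]
    have hi1 : (inner ℝ u w : ℝ) ≤ ‖u‖ * ‖w‖ := real_inner_le_norm _ _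
    have hi2 : -(L * ‖u‖ * ‖w‖) ≤ (inner ℝ G w : ℝ) - (inner ℝ G0 w : ℝ) := by
      have habs : |(inner ℝ G w : ℝ) - (inner ℝ G0 w : ℝ)| ≤ ‖G - G0‖ * ‖w‖ := by
        rw [← inner_sub_left]; exact abs_real_inner_le_norm _ _
      have hneg := neg_abs_le ((inner ℝ G w : ℝ) - (inner ℝ G0 w : ℝ))
      nlinarith [norm_nonneg w, norm_nonneg (G - G0)]
    have hβh : (0:ℝ) ≤ β * h := mul_nonneg hβ hh.le
    have hi2' := mul_le_mul_of_nonneg_left hi2 hβh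
    have hfinal : (inner ℝ G w : ℝ) + (L/2 + C₁/2 + δ) * ‖w‖^2 ≤ C₁/2 * ‖u‖^2 := by
      rw [← mul_le_mul_iff_of_pos_left hh2]
      rw [hC₁, hδdef]
      have hgoal : h^2 * ((inner ℝ G w : ℝ) + (L/2 + (1/h^2 + β*L/h)/2
            + (c/h - β*L/h - L/2)) * ‖w‖^2) ≤ h^2 * ((1/h^2 + β*L/h)/2 * ‖u‖^2) := by
        have hexp1 : h^2 * ((1/h^2 + β*L/h)/2 * ‖u‖^2) = (1 + β*L*h)/2 * ‖u‖^2 := by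
          field_simp
        have hexp2 : h^2 * ((inner ℝ G w : ℝ) + (L/2 + (1/h^2 + β*L/h)/2
              + (c/h - β*L/h - L/2)) * ‖w‖^2)
            = h^2 * (inner ℝ G w : ℝ) + (h^2*L/2 + (1 + β*L*h)/2 + c*h - β*L*h
              - h^2*L/2) * ‖w‖^2 := by
          field_simp; ring
        rw [hexp1, hexp2, hin]
        nlinarith [hi1, hi2',
          mul_nonneg (by positivity : (0:ℝ) ≤ 1 + β*L*h) (sq_nonneg (‖u‖ - ‖w‖)),
          mul_nonneg (mul_nonneg (sub_nonneg.2 hγ1) hh.le) (sq_nonneg ‖w‖)]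
      exact hgoal
    linarith
  -- gradient bound
  have hgb : ∀ k : ℕ, ‖gradient f (x (k+1))‖ ≤
      (2 + β*h*L + C*h)/h^2 * (‖x (k+1) - x k‖ + ‖x (k+2) - x (k+1)‖) := by
    intro k
    have hγ1 := (hγ (k+1)).1
    have hγ2 := (hγ (k+1)).2
    have hh2 : (0:ℝ) < h^2 := by positivity
    have e3 : h ^ 2 • gradient f (x (k+1)) = ((x (k+1) - x k)
        - (β*h) • (gradient f (x (k+1)) - gradient f (x k)))
        - (1 + γ (k+1) * h) • (x (k+2) - x (k+1)) := by
      rw [key k]; abel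
    have hn : h^2 * ‖gradient f (x (k+1))‖ ≤ ‖x (k+1) - x k‖
        + (β*h) * (L * ‖x (k+1) - x k‖) + (1 + γ (k+1)*h) * ‖x (k+2) - x (k+1)‖ := by
      have h1 : ‖h ^ 2 • gradient f (x (k+1))‖ = h^2 * ‖gradient f (x (k+1))‖ := by
        rw [norm_smul, Real.norm_eq_abs, abs_of_pos hh2]
      have h2 := norm_sub_le ((x (k+1) - x k)
        - (β*h) • (gradient f (x (k+1)) - gradient f (x k)))
        ((1 + γ (k+1) * h) • (x (k+2) - x (k+1)))
      have h3 := norm_sub_le (x (k+1) - x k)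
        ((β*h) • (gradient f (x (k+1)) - gradient f (x k)))
      have h4 : ‖(β*h) • (gradient f (x (k+1)) - gradient f (x k))‖
          ≤ β*h*(L*‖x (k+1) - x k‖) := by
        rw [norm_smul, Real.norm_eq_abs, abs_of_nonneg (mul_nonneg hβ hh.le)]
        exact mul_le_mul_of_nonneg_left (hlip' _ _) (mul_nonneg hβ hh.le)
      have h5 : ‖(1 + γ (k+1) * h) • (x (k+2) - x (k+1))‖
          = (1 + γ (k+1)*h) * ‖x (k+2) - x (k+1)‖ := by
        rw [norm_smul, Real.norm_eq_abs, abs_of_pos (by nlinarith)]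
      rw [e3] at h1
      linarith
    rw [div_mul_eq_mul_div, le_div_iff₀ hh2]
    have hexp : ‖gradient f (x (k+1))‖ * h^2 = h^2 * ‖gradient f (x (k+1))‖ := by ring
    rw [hexp]
    have hb1 : β*h*(L*‖x (k+1) - x k‖) = β*h*L*‖x (k+1) - x k‖ := by ring
    have hCh : (0:ℝ) ≤ C*h := by nlinarith
    nlinarith [hn, norm_nonneg (x (k+2) - x (k+1)), norm_nonneg (x (k+1) - x k),
      mul_nonneg hCh (norm_nonneg (x (k+1) - x k)),
      mul_nonneg (mul_nonneg (mul_nonneg hβ hh.le) hL.le) (norm_nonneg (x (k+2) - x (k+1))),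
      mul_nonneg (mul_nonneg (sub_nonneg.2 hγ2) hh.le) (norm_nonneg (x (k+2) - x (k+1)))]
  have hanti : Antitone Es := by
    apply antitone_nat_of_succ_le
    intro k
    have := hdesc k
    nlinarith [mul_nonneg hδ.le (sq_nonneg ‖x (k+2) - x (k+1)‖)]
  have hEge : ∀ k, Ltil ≤ Es k := fun k => hanti.le_of_tendsto hLtil' k
  have hetend : Tendsto (fun k => Es k - Ltil) atTop (𝓝 0) := by
    simpa using hLtil'.sub_const Ltil
  -- ‖x (k+1) - x k‖ → 0
  have heshift : Tendsto (fun k => Es (k+1) - Ltil) atTop (𝓝 0) :=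
    hetend.comp (tendsto_add_atTop_nat 1)
  have hato : Tendsto (fun k => ‖x (k+1) - x k‖) atTop (𝓝 0) := by
    have hsq2 : Tendsto (fun k => ‖x (k+2) - x (k+1)‖^2) atTop (𝓝 0) := by
      apply squeeze_zero (fun k => sq_nonneg _)
        (g := fun k => ((Es k - Ltil) - (Es (k+1) - Ltil))/δ)
      · intro k
        rw [le_div_iff₀ hδ]
        have := hdesc k
        nlinarith
      · have : Tendsto (fun k => ((Es k - Ltil) - (Es (k+1) - Ltil))) atTop (𝓝 0) := by
          simpa using hetend.sub heshift
        simpa using this.div_const δ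
    have hsq1 : Tendsto (fun k => ‖x (k+2) - x (k+1)‖) atTop (𝓝 0) := by
      have := (Real.continuous_sqrt.tendsto 0).comp hsq2
      simp only [Function.comp_def, Real.sqrt_zero] at this
      convert this using 2 with k
      rw [Real.sqrt_sq (norm_nonneg _)]
    have hiff := tendsto_add_atTop_iff_nat
      (f := fun k => ‖x (k+1) - x k‖) (l := 𝓝 (0:ℝ)) 1
    rw [← hiff]
    exact hsq1
  -- summability (case analysis on whether the energy gap vanishes)
  have hsum : Summable (fun k => ‖x (k + 1) - x k‖) := by
    by_cases hcase : ∃ K, Es K - Ltil ≤ 0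
    · -- energy gap hits zero: sequence eventually constant
      obtain ⟨K, hK⟩ := hcase
      have hstepA : ∀ m, Es m - Ltil ≤ 0 → (Es (m+1) - Ltil ≤ 0 ∧ x (m+2) = x (m+1)) := by
        intro m hm
        have h1 := hdesc m
        have h2 := hEge (m+1)
        have hw0 : (0:ℝ) ≤ δ * ‖x (m+2) - x (m+1)‖^2 :=
          mul_nonneg hδ.le (sq_nonneg _)
        have h3 : δ * ‖x (m+2) - x (m+1)‖^2 ≤ 0 := by linarith
        have h4 : ‖x (m+2) - x (m+1)‖^2 = 0 := by nlinarith [sq_nonneg ‖x (m+2) - x (m+1)‖]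
        have h5 : ‖x (m+2) - x (m+1)‖ = 0 := by
          exact pow_eq_zero_iff (two_ne_zero) |>.1 h4
        constructor
        · linarith
        · rwa [norm_eq_zero, sub_eq_zero] at h5
      have hallA : ∀ n, Es (K+n) - Ltil ≤ 0 := by
        intro n
        induction n with
        | zero => simpa using hK
        | succ n ih => exact (hstepA (K+n) ih).1
      have hconst : ∀ n, x (K+n+2) = x (K+n+1) := fun n => (hstepA (K+n) (hallA n)).2
      have hzero : ∀ n : ℕ, ‖x (n + (K+1) + 1) - x (n + (K+1))‖ = 0 := by
        intro n
        have h1 : n + (K+1) + 1 = K+n+2 := by omega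
        have h2 : n + (K+1) = K+n+1 := by omega
        rw [h1, h2, hconst n, sub_self, norm_zero]
      exact (summable_nat_add_iff (K+1)).1 (summable_zero.congr fun n => (hzero n).symm)
    · -- KL regime
      push_neg at hcase
      set b : ℝ := (2 + β*h*L + C*h)/h^2 + C₁ with hbdef
      have hb : 0 < b := by
        rw [hbdef]
        have h1 : (0:ℝ) < 2 + β*h*L + C*h := by
          nlinarith [mul_nonneg (mul_nonneg hβ hh.le) hL.le,
            mul_pos (lt_of_lt_of_le hc hcC) hh]
        positivity
      have hinf : Tendsto (fun n => Metric.infDist (x n) {p | MapClusterPt p atTop x})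
          atTop (𝓝 0) := infDist_cluster_tendsto x M hM
      have hev1 : ∀ᶠ k in atTop, Es k - Ltil < η := hetend.eventually_lt_const hη
      have hev2 : ∀ᶠ k in atTop, ‖x (k+1) - x k‖ < r := hato.eventually_lt_const hr
      have hev3 : ∀ᶠ k in atTop,
          Metric.infDist (x (k+1)) {p | MapClusterPt p atTop x} < r :=
        (hinf.comp (tendsto_add_atTop_nat 1)).eventually_lt_const hr
      obtain ⟨K, hKprop⟩ := eventually_atTop.1 ((hev1.and hev2).and hev3)
      have hki : ∀ j : ℕ, δ * (7 * ‖x (K+j+2) - x (K+j+1)‖) ≤ δ * ‖x (K+j+1) - x (K+j)‖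
          + 16*b*(ψ (Es (K+j) - Ltil) - ψ (Es (K+j+1) - Ltil)) := by
        intro j
        obtain ⟨⟨hη1, hr1⟩, hr2⟩ := hKprop (K+j) (by omega)
        have hek : 0 < Es (K+j) - Ltil := hcase (K+j)
        have hek1pos : 0 < Es (K+j+1) - Ltil := hcase (K+j+1)
        have hw0 : (0:ℝ) ≤ δ * ‖x (K+j+2) - x (K+j+1)‖^2 := mul_nonneg hδ.le (sq_nonneg _)
        have hdes2 : δ * ‖x (K+j+2) - x (K+j+1)‖^2
            ≤ (Es (K+j) - Ltil) - (Es (K+j+1) - Ltil) := by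
          have := hdesc (K+j); linarith
        have hle : Es (K+j+1) - Ltil ≤ Es (K+j) - Ltil := by nlinarith
        have hEsval : f (x (K+j+1)) + C₁ / 2 * ‖x (K+j+1) - x (K+j)‖ ^ 2 = Es (K+j) := by
          simp only [hEs]
        have hKLk := hKL (x (K+j+1)) (x (K+j+1) - x (K+j)) hr2 hr1
          (by rw [hEsval]; exact hek) (by rw [hEsval]; exact hη1)
        rw [hEsval] at hKLk
        have hψ'k := hψ'pos _ ⟨hek, hη1⟩
        have htan := concave_tangent hψconc hψderiv ⟨hek, hη1⟩ hek1pos.le hle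
        have hgbk := hgb (K+j)
        have hsqrt : Real.sqrt (‖gradient f (x (K+j+1))‖^2
              + C₁^2 * ‖x (K+j+1) - x (K+j)‖^2)
            ≤ b * (‖x (K+j+1) - x (K+j)‖ + ‖x (K+j+2) - x (K+j+1)‖) := by
          have h1 : ‖gradient f (x (K+j+1))‖^2 + C₁^2 * ‖x (K+j+1) - x (K+j)‖^2
              ≤ (‖gradient f (x (K+j+1))‖ + C₁ * ‖x (K+j+1) - x (K+j)‖)^2 := by
            nlinarith [mul_nonneg (norm_nonneg (gradient f (x (K+j+1))))
              (mul_nonneg hC₁pos.le (norm_nonneg (x (K+j+1) - x (K+j))))]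
          have h2 := Real.sqrt_le_sqrt h1
          rw [Real.sqrt_sq (by positivity)] at h2
          refine h2.trans ?_
          rw [hbdef]
          have h3 : C₁ * ‖x (K+j+1) - x (K+j)‖
              ≤ C₁ * (‖x (K+j+1) - x (K+j)‖ + ‖x (K+j+2) - x (K+j+1)‖) := by
            nlinarith [norm_nonneg (x (K+j+2) - x (K+j+1))]
          linarith [hgbk]
        set a0 := ‖x (K+j+1) - x (K+j)‖ with ha0
        set a1 := ‖x (K+j+2) - x (K+j+1)‖ with ha1
        set ek := Es (K+j) - Ltil with hekdef
        set ek1 := Es (K+j+1) - Ltil with hek1def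
        set Dψ : ℝ := ψ ek - ψ ek1 with hDψ
        have hDψ0 : 0 ≤ Dψ := le_trans (mul_nonneg hψ'k.le (by linarith)) htan
        have hS0 : 0 ≤ b*(a0+a1) :=
          mul_nonneg hb.le (add_nonneg (norm_nonneg _) (norm_nonneg _))
        have t1 : 1 ≤ ψ' ek * (b*(a0+a1)) :=
          le_trans hKLk (mul_le_mul_of_nonneg_left hsqrt hψ'k.le)
        have step1 : δ * a1^2 ≤ (b*(a0+a1)) * Dψ := by
          have u1 : δ * a1^2 ≤ (ψ' ek * (b*(a0+a1))) * (δ * a1^2) :=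
            le_mul_of_one_le_left (mul_nonneg hδ.le (sq_nonneg a1)) t1
          have t2 : ψ' ek * (δ * a1 ^ 2) ≤ ψ' ek * (ek - ek1) :=
            mul_le_mul_of_nonneg_left hdes2 hψ'k.le
          have u2 : ψ' ek * (δ * a1 ^ 2) ≤ Dψ := t2.trans htan
          have u3 : (b*(a0+a1)) * (ψ' ek * (δ * a1^2)) ≤ (b*(a0+a1)) * Dψ :=
            mul_le_mul_of_nonneg_left u2 hS0
          calc δ*a1^2 ≤ (ψ' ek * (b*(a0+a1))) * (δ*a1^2) := u1
            _ = (b*(a0+a1)) * (ψ' ek * (δ*a1^2)) := by ring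
            _ ≤ (b*(a0+a1)) * Dψ := u3
        have ha00 : 0 ≤ a0 := norm_nonneg _
        have ha10 : 0 ≤ a1 := norm_nonneg _
        have hbD : 0 ≤ b * Dψ := mul_nonneg hb.le hDψ0
        have := am_step hδ ha00 ha10 hbD (le_of_le_of_eq step1 (by ring))
        linarith
      have htel : ∀ N : ℕ, δ * (7 * ∑ j ∈ Finset.range N, ‖x (K+j+2) - x (K+j+1)‖)
          ≤ δ * (∑ j ∈ Finset.range N, ‖x (K+j+1) - x (K+j)‖)
            + 16*b*(ψ (Es K - Ltil) - ψ (Es (K+N) - Ltil)) := by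
        intro N
        induction N with
        | zero => simp
        | succ N ih =>
          rw [Finset.sum_range_succ, Finset.sum_range_succ]
          have hidx : K + (N+1) = K + N + 1 := rfl
          rw [hidx]
          linarith [hki N]
      have hTS : ∀ N, (∑ j ∈ Finset.range N, ‖x (K+j+1) - x (K+j)‖)
          ≤ ‖x (K+1) - x K‖ + ∑ j ∈ Finset.range N, ‖x (K+j+2) - x (K+j+1)‖ := by
        intro N
        cases N with
        | zero => simp [norm_nonneg]
        | succ N =>
          rw [Finset.sum_range_succ']
          have hmono : (∑ j ∈ Finset.range N, ‖x (K+(j+1)+1) - x (K+(j+1))‖)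
              ≤ ∑ j ∈ Finset.range (N+1), ‖x (K+j+2) - x (K+j+1)‖ := by
            have heq : (∑ j ∈ Finset.range N, ‖x (K+(j+1)+1) - x (K+(j+1))‖)
                = ∑ j ∈ Finset.range N, ‖x (K+j+2) - x (K+j+1)‖ := rfl
            rw [heq]
            exact Finset.sum_le_sum_of_subset_of_nonneg
              (Finset.range_subset_range.2 (Nat.le_succ N)) (fun _ _ _ => norm_nonneg _)
          simp only [Nat.add_zero]
          linarith [hmono]
      have hEsKη : Es K - Ltil < η := ((hKprop K le_rfl).1).1
      have hbound2 : ∀ N, (∑ j ∈ Finset.range N, ‖x (K+j+2) - x (K+j+1)‖)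
          ≤ (δ * ‖x (K+1) - x K‖ + 16*b*ψ (Es K - Ltil)) / (6*δ) := by
        intro N
        rw [le_div_iff₀ (by positivity)]
        have h1 := htel N
        have h2 := mul_le_mul_of_nonneg_left (hTS N) hδ.le
        have hψKN : 0 ≤ ψ (Es (K+N) - Ltil) := by
          apply hψnonneg
          constructor
          · exact (hcase (K+N)).le
          · have := hanti (Nat.le_add_right K N)
            linarith
        have h3 : 0 ≤ 16*b*ψ (Es (K+N) - Ltil) := by positivity
        set S := ∑ j ∈ Finset.range N, ‖x (K+j+2) - x (K+j+1)‖ with hSdef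
        set T := ∑ j ∈ Finset.range N, ‖x (K+j+1) - x (K+j)‖ with hTdef
        linarith [h1, h2, h3]
      have hsummableS : Summable (fun j => ‖x (K+j+2) - x (K+j+1)‖) :=
        summable_of_sum_range_le (fun j => norm_nonneg _) hbound2
      refine (summable_nat_add_iff (K+1)).1 (hsummableS.congr ?_)
      intro n
      have h1 : K+n+2 = n+(K+1)+1 := by omega
      have h2 : K+n+1 = n+(K+1) := by omega
      rw [h1, h2]
  refine ⟨hsum, ?_⟩
  have hdist : (fun n => dist (x n) (x (n+1))) = fun n => ‖x (n+1) - x n‖ := by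
    funext n; rw [dist_eq_norm, norm_sub_rev]
  have hcauchy : CauchySeq x := cauchySeq_of_summable_dist (by rw [hdist]; exact hsum)
  obtain ⟨xinf, hxinf⟩ := cauchySeq_tendsto_of_complete hcauchy
  refine ⟨xinf, hxinf, ?_⟩
  have hshift : Tendsto (fun k => x (k+1)) atTop (𝓝 xinf) :=
    hxinf.comp (tendsto_add_atTop_nat 1)
  have hgcont : Tendsto (fun k => gradient f (x (k+1))) atTop (𝓝 (gradient f xinf)) :=
    (hlip.continuous.tendsto xinf).comp hshift
  have hgzero : Tendsto (fun k => gradient f (x (k+1))) atTop (𝓝 0) := by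
    rw [tendsto_zero_iff_norm_tendsto_zero]
    apply squeeze_zero (fun k => norm_nonneg _) hgb
    have h1 : Tendsto (fun k => ‖x (k+1) - x k‖ + ‖x (k+2) - x (k+1)‖) atTop (𝓝 0) := by
      have h2 : Tendsto (fun k => ‖x (k+2) - x (k+1)‖) atTop (𝓝 0) := by
        exact hato.comp (tendsto_add_atTop_nat 1)
      simpa using hato.add h2
    simpa using h1.const_mul ((2 + β*h*L + C*h)/h^2)
  exact tendsto_nhds_unique hgcont hgzero
end

section
/- Let (α_k), (β_k), (s_k) be positive sequences, and consider the iteration y_k = x_k + α_k(x_k − x_{k−1}) − β_k(∇f(x_k) − ∇f(x_{k−1})), x_{k+1} = y_k − s_k∇f(x_k), with x₀, x₁ ∈ ℝ^d. Suppose there exists s̄ > 0 such that 0 < inf_k s_k ≤ sup_k s_k ≤ s̄ < 2/L and sup_k (α_k + β_k L)/s_k < 1/s̄ − L/2. Then Σ_k ‖∇f(x_k)‖² < ∞ and Σ_k ‖x_{k+1} − x_k‖² < ∞; in particular ‖∇f(x_k)‖ → 0 as k → ∞. -/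
set_option maxHeartbeats 1000000
open Filter Topology Set RealInnerProductSpace

lemma descent_lemma_s14 {E : Type*} [NormedAddCommGroup E] [InnerProductSpace ℝ E]
    [CompleteSpace E]
    (f : E → ℝ) (g : E → E) (L : ℝ)
    (hg : ∀ p, HasGradientAt f (g p) p)
    (hgc : Continuous g)
    (hlip : ∀ p q, ‖g p - g q‖ ≤ L * ‖p - q‖)
    (x y : E) :
    f y ≤ f x + ⟪g x, y - x⟫ + L / 2 * ‖y - x‖ ^ 2 := by
  set v := y - x with hv
  have hφ : ∀ t : ℝ, HasDerivAt (fun t : ℝ => f (x + t • v))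
      ⟪g (x + t • v), v⟫ t := by
    intro t
    have h1 : HasFDerivAt f (InnerProductSpace.toDual ℝ E (g (x + t • v))) (x + t • v) :=
      (hg _).hasFDerivAt
    have h2 : HasDerivAt (fun t : ℝ => x + t • v) v t := by
      simpa using ((hasDerivAt_id t).smul_const v).const_add x
    have h3 := h1.comp_hasDerivAt t h2
    simp at h3
    exact h3
  have hcont : Continuous fun t : ℝ => ⟪g (x + t • v), v⟫ := by
    exact (hgc.comp (by continuity)).inner continuous_const
  have hint : ∀ t ∈ Set.uIcc (0:ℝ) 1, HasDerivAt (fun t : ℝ => f (x + t • v))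
      ⟪g (x + t • v), v⟫ t := fun t _ => hφ t
  have heq : ∫ t in (0:ℝ)..1, ⟪g (x + t • v), v⟫ =
      f (x + (1:ℝ) • v) - f (x + (0:ℝ) • v) := by
    exact intervalIntegral.integral_eq_sub_of_hasDerivAt hint (hcont.intervalIntegrable 0 1)
  have hmono : ∫ t in (0:ℝ)..1, ⟪g (x + t • v), v⟫ ≤
      ∫ t in (0:ℝ)..1, (⟪g x, v⟫ + L * ‖v‖ ^ 2 * t) := by
    apply intervalIntegral.integral_mono_on (by norm_num) (hcont.intervalIntegrable 0 1)
      (by apply Continuous.intervalIntegrable; continuity)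
    intro t ht
    have h3 : ⟪g (x + t • v), v⟫ - ⟪g x, v⟫ = ⟪g (x + t • v) - g x, v⟫ := by
      rw [inner_sub_left]
    have h4 : ⟪g (x + t • v) - g x, v⟫ ≤ ‖g (x + t • v) - g x‖ * ‖v‖ :=
      real_inner_le_norm _ _
    have h5 : ‖g (x + t • v) - g x‖ ≤ L * ‖t • v‖ := by
      have := hlip (x + t • v) x
      simpa using this
    have h6 : ‖t • v‖ = t * ‖v‖ := by
      rw [norm_smul, Real.norm_eq_abs, abs_of_nonneg ht.1]
    have h7 : ‖g (x + t • v) - g x‖ * ‖v‖ ≤ L * (t * ‖v‖) * ‖v‖ := by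
      rw [← h6]; exact mul_le_mul_of_nonneg_right h5 (norm_nonneg v)
    nlinarith [h3, h4, h7]
  have hR : ∫ t in (0:ℝ)..1, (⟪g x, v⟫ + L * ‖v‖ ^ 2 * t) =
      ⟪g x, v⟫ + L / 2 * ‖v‖ ^ 2 := by
    rw [intervalIntegral.integral_add intervalIntegrable_const
      (by apply Continuous.intervalIntegrable; continuity),
      intervalIntegral.integral_const, intervalIntegral.integral_const_mul,
      integral_id]
    norm_num; ring
  have : f (x + (1:ℝ) • v) - f (x + (0:ℝ) • v) ≤ ⟪g x, v⟫ + L / 2 * ‖v‖ ^ 2 := by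
    rw [← heq]; linarith
  have h0 : x + (0:ℝ) • v = x := by simp
  have h1 : x + (1:ℝ) • v = y := by simp [hv]
  rw [h0, h1] at this
  linarith

lemma step_real (L m A sbar S S' aa b W P fk fk1 u2 : ℝ)
    (hL : 0 < L) (hmdef : m = 1 - L * sbar / 2) (hm0 : 0 < m)
    (hA : 0 < A) (hq : A * sbar < m)
    (hS : 0 < S) (hSs : S ≤ sbar) (hS' : 0 < S') (hS's : S' ≤ sbar)
    (haa : 0 ≤ aa) (hb : 0 ≤ b) (hW : 0 ≤ W)
    (hWb : W ≤ A * S * b)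
    (hP1 : P ≤ aa * W) (hP2 : -(aa * W) ≤ P)
    (hu2 : u2 = W ^ 2 - 2 * S * P + S ^ 2 * aa ^ 2)
    (hdesc : fk1 ≤ fk + (P - S * aa ^ 2) + L / 2 * u2) :
    fk1 + (m / 2) / S * u2 + (m ^ 2 - (A * sbar) ^ 2) / (2 * m * sbar) * b ^ 2
      ≤ fk + (m / 2) / S' * b ^ 2 := by
  have hsbar0 : 0 < sbar := lt_of_lt_of_le hS hSs
  have hred : m / (2 * sbar) * b ^ 2 ≤ (m / 2) / S' * b ^ 2 := by
    apply mul_le_mul_of_nonneg_right _ (sq_nonneg b)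
    rw [div_div]
    gcongr
  -- suffices to bound against m/(2*sbar)
  have hδ : m / (2 * sbar) = (m ^ 2 - (A * sbar) ^ 2) / (2 * m * sbar)
      + A ^ 2 * sbar / (2 * m) := by
    field_simp
    ring
  -- main chain
  obtain ⟨κ, hκ⟩ : ∃ κ, κ = 1 - L * S - m := ⟨_, rfl⟩
  have habsP : |P| ≤ aa * W := abs_le.mpr ⟨by linarith, hP1⟩
  have hcross : κ * P ≤ S * m / 2 * aa ^ 2 + κ ^ 2 * A ^ 2 * S / (2 * m) * b ^ 2 := by
    have h2 : κ * P ≤ |κ| * (aa * W) := by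
      calc κ * P ≤ |κ * P| := le_abs_self _
        _ = |κ| * |P| := abs_mul _ _
        _ ≤ |κ| * (aa * W) := mul_le_mul_of_nonneg_left habsP (abs_nonneg _)
    have h3 : |κ| * (aa * W) ≤ |κ| * (aa * (A * S * b)) := by
      apply mul_le_mul_of_nonneg_left _ (abs_nonneg _)
      exact mul_le_mul_of_nonneg_left hWb haa
    have h4 : |κ| * (aa * (A * S * b)) ≤ S * m / 2 * aa ^ 2
        + κ ^ 2 * A ^ 2 * S / (2 * m) * b ^ 2 := by
      have e : (S * m / 2 * aa ^ 2 + κ ^ 2 * A ^ 2 * S / (2 * m) * b ^ 2) * (2 * m)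
          = S * (m ^ 2 * aa ^ 2 + κ ^ 2 * A ^ 2 * b ^ 2) := by
        field_simp
      have key : |κ| * (aa * (A * S * b)) * (2 * m)
          ≤ (S * m / 2 * aa ^ 2 + κ ^ 2 * A ^ 2 * S / (2 * m) * b ^ 2) * (2 * m) := by
        rw [e]
        have hsq : (0:ℝ) ≤ S * (m * aa - |κ| * (A * b)) ^ 2 :=
          mul_nonneg hS.le (sq_nonneg _)
        have hexpand : S * (m * aa - |κ| * (A * b)) ^ 2
            = S * m ^ 2 * aa ^ 2 - 2 * S * m * |κ| * A * aa * b + S * κ ^ 2 * A ^ 2 * b ^ 2 := by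
          rw [← sq_abs κ]; ring
        linarith [hsq, hexpand.ge, hexpand.le]
      exact le_of_mul_le_mul_right key (by positivity)
    linarith
  have hw2 : (L / 2 + (m / 2) / S) * W ^ 2 ≤ (L * S / 2 + m / 2) * A ^ 2 * S * b ^ 2 := by
    have h5 : W ^ 2 ≤ (A * S * b) ^ 2 := by
      have := mul_le_mul hWb hWb hW (by positivity)
      nlinarith
    have hc0 : (0:ℝ) ≤ L / 2 + (m / 2) / S := by positivity
    calc (L / 2 + (m / 2) / S) * W ^ 2 ≤ (L / 2 + (m / 2) / S) * (A * S * b) ^ 2 :=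
          mul_le_mul_of_nonneg_left h5 hc0
      _ = (L * S / 2 + m / 2) * A ^ 2 * S * b ^ 2 := by
          field_simp
  have hpoly : κ ^ 2 * A ^ 2 * S / (2 * m) * b ^ 2
      + (L * S / 2 + m / 2) * A ^ 2 * S * b ^ 2 ≤ A ^ 2 * sbar / (2 * m) * b ^ 2 := by
    have hid : sbar - S * (κ ^ 2 + m * (L * S) + m ^ 2)
        = (sbar - S) * (L ^ 2 * S ^ 2 + m * L * S + 1) := by
      rw [hκ, hmdef]; ring
    have hfac : (0:ℝ) ≤ (sbar - S) * (L ^ 2 * S ^ 2 + m * L * S + 1) := by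
      apply mul_nonneg (by linarith)
      positivity
    have h6 : S * (κ ^ 2 + m * (L * S) + m ^ 2) ≤ sbar := by linarith
    have e1 : κ ^ 2 * A ^ 2 * S / (2 * m) * b ^ 2 + (L * S / 2 + m / 2) * A ^ 2 * S * b ^ 2
        = A ^ 2 * b ^ 2 * (S * (κ ^ 2 + m * (L * S) + m ^ 2)) / (2 * m) := by
      field_simp; ring
    have e2 : A ^ 2 * sbar / (2 * m) * b ^ 2 = A ^ 2 * b ^ 2 * sbar / (2 * m) := by ring
    rw [e1, e2]
    gcongr
  have hexp : fk + (P - S * aa ^ 2) + L / 2 * u2 + (m / 2) / S * u2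
      = fk + κ * P - S * (1 - L * S / 2 - m / 2) * aa ^ 2
        + (L / 2 + (m / 2) / S) * W ^ 2 := by
    rw [hu2, hκ]
    field_simp
    ring
  have haa2 : S * m / 2 * aa ^ 2 - S * (1 - L * S / 2 - m / 2) * aa ^ 2 ≤ 0 := by
    have hLS : L * S ≤ L * sbar := mul_le_mul_of_nonneg_left hSs hL.le
    have : (0:ℝ) ≤ 1 - L * S / 2 - m := by rw [hmdef]; linarith
    nlinarith [mul_nonneg (mul_nonneg hS.le this) (sq_nonneg aa)]
  have hmain : fk1 + (m / 2) / S * u2 ≤ fk + A ^ 2 * sbar / (2 * m) * b ^ 2 := by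
    have h7 : fk1 + (m / 2) / S * u2 ≤ fk + (P - S * aa ^ 2) + L / 2 * u2
        + (m / 2) / S * u2 := by linarith
    rw [hexp] at h7
    linarith
  have hfin : (m ^ 2 - (A * sbar) ^ 2) / (2 * m * sbar) * b ^ 2
      + A ^ 2 * sbar / (2 * m) * b ^ 2 = m / (2 * sbar) * b ^ 2 := by
    rw [hδ]; ring
  linarith

/-- ISEHD-Disc with general positive coefficients
`(α_k), (β_k), (s_k)`: if `0 < inf_k s_k ≤ sup_k s_k ≤ s̄ < 2/L` and
`sup_k (α_k + β_k L)/s_k < 1/s̄ − L/2`, then `Σ_k ‖∇f(x_k)‖² < ∞` and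
`Σ_k ‖x_{k+1} − x_k‖² < ∞`; in particular `‖∇f(x_k)‖ → 0`. -/
theorem isehd_disc_general_coefficients
    (d : ℕ) (f : EuclideanSpace ℝ (Fin d) → ℝ) (L : ℝ)
    (hf : ContDiff ℝ 2 f) (hbdd : BddBelow (Set.range f))
    (hL : 0 < L) (hlip : LipschitzWith (Real.toNNReal L) (gradient f))
    (α βc s : ℕ → ℝ)
    (hαpos : ∀ k, 0 < α k) (hβpos : ∀ k, 0 < βc k) (hspos : ∀ k, 0 < s k)
    (sbar : ℝ)
    (hinf : ∃ ε > (0:ℝ), ∀ k, ε ≤ s k)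
    (hsup : ∀ k, s k ≤ sbar)
    (hsbar : sbar < 2 / L)
    (hratio : ∃ A : ℝ, A < 1 / sbar - L / 2 ∧ ∀ k, (α k + βc k * L) / s k ≤ A)
    (x : ℕ → EuclideanSpace ℝ (Fin d))
    (hrec : ∀ k : ℕ, 1 ≤ k →
      x (k + 1) = x k + α k • (x k - x (k - 1))
        - βc k • (gradient f (x k) - gradient f (x (k - 1)))
        - s k • gradient f (x k)) :
    Summable (fun k => ‖gradient f (x k)‖ ^ 2) ∧
    Summable (fun k => ‖x (k + 1) - x k‖ ^ 2) ∧
    Tendsto (fun k => ‖gradient f (x k)‖) atTop (𝓝 0) := by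
  obtain ⟨ε, hε, hεs⟩ := hinf
  obtain ⟨A, hA1, hA2⟩ := hratio
  have hsbar0 : 0 < sbar := lt_of_lt_of_le (hspos 0) (hsup 0)
  set m : ℝ := 1 - L * sbar / 2 with hmdef
  have hm0 : 0 < m := by
    have h1 : sbar * L < 2 := (lt_div_iff₀ hL).mp hsbar
    rw [hmdef]; nlinarith
  have hApos : 0 < A :=
    lt_of_lt_of_le (div_pos (by nlinarith [hαpos 0, hβpos 0]) (hspos 0)) (hA2 0)
  have hq : A * sbar < m := by
    have e : (1 / sbar - L / 2) * sbar = 1 - L * sbar / 2 := by field_simp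
    have h := mul_lt_mul_of_pos_right hA1 hsbar0
    rw [e] at h; rw [hmdef]; linarith
  set δ : ℝ := (m ^ 2 - (A * sbar) ^ 2) / (2 * m * sbar) with hδdef
  have hδ0 : 0 < δ := by
    apply div_pos _ (by positivity)
    nlinarith [mul_nonneg hApos.le hsbar0.le]
  have hdiff : ∀ p, HasGradientAt f (gradient f p) p := fun p =>
    ((hf.differentiable (by norm_num)) p).hasGradientAt
  have hgc : Continuous (gradient f) := hlip.continuous
  have hlip' : ∀ p q, ‖gradient f p - gradient f q‖ ≤ L * ‖p - q‖ := by
    intro p q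
    have h := hlip.dist_le_mul p q
    rwa [dist_eq_norm, dist_eq_norm, Real.coe_toNNReal L hL.le] at h
  -- the one-step Lyapunov inequality
  have hstep : ∀ k : ℕ,
      f (x (k + 2)) + (m / 2) / s (k + 1) * ‖x (k + 2) - x (k + 1)‖ ^ 2
        + δ * ‖x (k + 1) - x k‖ ^ 2
      ≤ f (x (k + 1)) + (m / 2) / s k * ‖x (k + 1) - x k‖ ^ 2 := by
    intro k
    set w : EuclideanSpace ℝ (Fin d) :=
      α (k + 1) • (x (k + 1) - x k)
        - βc (k + 1) • (gradient f (x (k + 1)) - gradient f (x k)) with hwdef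
    have hΔ : x (k + 2) - x (k + 1) = w - s (k + 1) • gradient f (x (k + 1)) := by
      have h := hrec (k + 1) (by omega)
      simp only [Nat.add_sub_cancel] at h
      rw [h, hwdef]; abel
    have hb0 : (0:ℝ) ≤ ‖x (k + 1) - x k‖ := norm_nonneg _
    have hWb : ‖w‖ ≤ A * s (k + 1) * ‖x (k + 1) - x k‖ := by
      have h1 : ‖w‖ ≤ α (k + 1) * ‖x (k + 1) - x k‖
          + βc (k + 1) * ‖gradient f (x (k + 1)) - gradient f (x k)‖ := by
        rw [hwdef]
        refine le_trans (norm_sub_le _ _) ?_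
        rw [norm_smul, norm_smul, Real.norm_eq_abs, Real.norm_eq_abs,
          abs_of_pos (hαpos _), abs_of_pos (hβpos _)]
      have h2 : ‖gradient f (x (k + 1)) - gradient f (x k)‖ ≤ L * ‖x (k + 1) - x k‖ :=
        hlip' _ _
      have h3 : α (k + 1) + βc (k + 1) * L ≤ A * s (k + 1) := by
        have := (div_le_iff₀ (hspos (k + 1))).mp (hA2 (k + 1))
        linarith
      have h4 : ‖w‖ ≤ (α (k + 1) + βc (k + 1) * L) * ‖x (k + 1) - x k‖ := by
        nlinarith [mul_le_mul_of_nonneg_left h2 (hβpos (k + 1)).le]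
      nlinarith [mul_le_mul_of_nonneg_right h3 hb0]
    have hu2 : ‖x (k + 2) - x (k + 1)‖ ^ 2
        = ‖w‖ ^ 2 - 2 * s (k + 1) * ⟪gradient f (x (k + 1)), w⟫
          + s (k + 1) ^ 2 * ‖gradient f (x (k + 1))‖ ^ 2 := by
      rw [hΔ, norm_sub_sq_real, real_inner_smul_right, real_inner_comm, norm_smul,
        Real.norm_eq_abs, abs_of_pos (hspos _)]
      ring
    have hdesc : f (x (k + 2)) ≤ f (x (k + 1))
        + (⟪gradient f (x (k + 1)), w⟫ - s (k + 1) * ‖gradient f (x (k + 1))‖ ^ 2)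
        + L / 2 * ‖x (k + 2) - x (k + 1)‖ ^ 2 := by
      have h := descent_lemma_s14 f (gradient f) L hdiff hgc hlip' (x (k + 1)) (x (k + 2))
      rw [hΔ] at h
      rw [inner_sub_right, real_inner_smul_right, real_inner_self_eq_norm_sq] at h
      calc f (x (k + 2)) ≤ _ := h
        _ = f (x (k + 1))
            + (⟪gradient f (x (k + 1)), w⟫ - s (k + 1) * ‖gradient f (x (k + 1))‖ ^ 2)
            + L / 2 * ‖x (k + 2) - x (k + 1)‖ ^ 2 := by rw [hΔ]
    exact step_real L m A sbar (s (k + 1)) (s k)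
      ‖gradient f (x (k + 1))‖ ‖x (k + 1) - x k‖ ‖w‖
      ⟪gradient f (x (k + 1)), w⟫ (f (x (k + 1))) (f (x (k + 2)))
      (‖x (k + 2) - x (k + 1)‖ ^ 2)
      hL hmdef hm0 hApos hq (hspos _) (hsup _) (hspos _) (hsup _)
      (norm_nonneg _) hb0 (norm_nonneg _) hWb
      (real_inner_le_norm _ _) (by
        have h1 := abs_real_inner_le_norm (gradient f (x (k + 1))) w
        have h2 := neg_abs_le (⟪gradient f (x (k + 1)), w⟫ : ℝ)
        linarith)
      hu2 hdesc
  -- telescoping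
  obtain ⟨B, hB⟩ := hbdd
  have hB' : ∀ y, B ≤ f y := fun y => hB ⟨y, rfl⟩
  set F : ℕ → ℝ := fun k => f (x (k + 1)) + (m / 2) / s k * ‖x (k + 1) - x k‖ ^ 2
    with hFdef
  have htel : ∀ N : ℕ, F N + δ * ∑ j ∈ Finset.range N, ‖x (j + 1) - x j‖ ^ 2 ≤ F 0 := by
    intro N
    induction N with
    | zero => simp
    | succ N ih =>
      have h := hstep N
      rw [Finset.sum_range_succ]
      have e : F (N + 1) = f (x (N + 2)) + (m / 2) / s (N + 1) * ‖x (N + 2) - x (N + 1)‖ ^ 2 :=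
        rfl
      have e0 : F N = f (x (N + 1)) + (m / 2) / s N * ‖x (N + 1) - x N‖ ^ 2 := rfl
      rw [e]
      rw [e0] at ih
      nlinarith [h, ih]
  have hFlb : ∀ N : ℕ, B ≤ F N := by
    intro N
    have h1 : (0:ℝ) ≤ (m / 2) / s N * ‖x (N + 1) - x N‖ ^ 2 := by
      have := hspos N
      positivity
    have h2 := hB' (x (N + 1))
    rw [hFdef]; dsimp only; linarith
  have hsum_u : Summable (fun j => ‖x (j + 1) - x j‖ ^ 2) := by
    apply summable_of_sum_range_le (c := (F 0 - B) / δ) (fun n => sq_nonneg _)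
    intro N
    have h := htel N
    have h2 := hFlb N
    rw [le_div_iff₀ hδ0, mul_comm]
    linarith
  -- gradient bound
  have hgb : ∀ k : ℕ, ‖gradient f (x (k + 1))‖ ^ 2
      ≤ 2 * A ^ 2 * ‖x (k + 1) - x k‖ ^ 2 + 2 / ε ^ 2 * ‖x (k + 2) - x (k + 1)‖ ^ 2 := by
    intro k
    set w : EuclideanSpace ℝ (Fin d) :=
      α (k + 1) • (x (k + 1) - x k)
        - βc (k + 1) • (gradient f (x (k + 1)) - gradient f (x k)) with hwdef
    have hΔ : x (k + 2) - x (k + 1) = w - s (k + 1) • gradient f (x (k + 1)) := by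
      have h := hrec (k + 1) (by omega)
      simp only [Nat.add_sub_cancel] at h
      rw [h, hwdef]; abel
    have hb0 : (0:ℝ) ≤ ‖x (k + 1) - x k‖ := norm_nonneg _
    have hWb : ‖w‖ ≤ A * s (k + 1) * ‖x (k + 1) - x k‖ := by
      have h1 : ‖w‖ ≤ α (k + 1) * ‖x (k + 1) - x k‖
          + βc (k + 1) * ‖gradient f (x (k + 1)) - gradient f (x k)‖ := by
        rw [hwdef]
        refine le_trans (norm_sub_le _ _) ?_
        rw [norm_smul, norm_smul, Real.norm_eq_abs, Real.norm_eq_abs,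
          abs_of_pos (hαpos _), abs_of_pos (hβpos _)]
      have h2 : ‖gradient f (x (k + 1)) - gradient f (x k)‖ ≤ L * ‖x (k + 1) - x k‖ :=
        hlip' _ _
      have h3 : α (k + 1) + βc (k + 1) * L ≤ A * s (k + 1) := by
        have := (div_le_iff₀ (hspos (k + 1))).mp (hA2 (k + 1))
        linarith
      have h4 : ‖w‖ ≤ (α (k + 1) + βc (k + 1) * L) * ‖x (k + 1) - x k‖ := by
        nlinarith [mul_le_mul_of_nonneg_left h2 (hβpos (k + 1)).le]
      nlinarith [mul_le_mul_of_nonneg_right h3 hb0]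
    -- ‖s•g‖ ≤ ‖w‖ + ‖Δ‖
    have h5 : s (k + 1) * ‖gradient f (x (k + 1))‖
        ≤ A * s (k + 1) * ‖x (k + 1) - x k‖ + ‖x (k + 2) - x (k + 1)‖ := by
      have e : s (k + 1) • gradient f (x (k + 1)) = w - (x (k + 2) - x (k + 1)) := by
        rw [hΔ]; abel
      have h6 : ‖s (k + 1) • gradient f (x (k + 1))‖
          ≤ ‖w‖ + ‖x (k + 2) - x (k + 1)‖ := by
        rw [e]; exact norm_sub_le _ _
      rw [norm_smul, Real.norm_eq_abs, abs_of_pos (hspos _)] at h6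
      linarith
    -- split on sign
    set aa := ‖gradient f (x (k + 1))‖ with haadef
    set b := ‖x (k + 1) - x k‖ with hbdef
    set u1 := ‖x (k + 2) - x (k + 1)‖ with hu1def
    have haa0 : 0 ≤ aa := norm_nonneg _
    have hu10 : 0 ≤ u1 := norm_nonneg _
    have hεk := hεs (k + 1)
    have hle : aa ≤ A * b + u1 / ε := by
      rcases le_or_gt aa (A * b) with h | h
      · have : 0 ≤ u1 / ε := by positivity
        linarith
      · have h7 : ε * (aa - A * b) ≤ s (k + 1) * (aa - A * b) :=
          mul_le_mul_of_nonneg_right hεk (by linarith)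
        have h8 : s (k + 1) * (aa - A * b) ≤ u1 := by nlinarith [h5]
        rw [div_eq_mul_inv]
        have h9 : aa - A * b ≤ u1 * ε⁻¹ := by
          rw [← div_eq_mul_inv, le_div_iff₀ hε]
          nlinarith
        linarith
    have hsq : aa ^ 2 ≤ (A * b + u1 / ε) ^ 2 := by
      apply pow_le_pow_left₀ haa0 hle
    have : (A * b + u1 / ε) ^ 2 ≤ 2 * A ^ 2 * b ^ 2 + 2 / ε ^ 2 * u1 ^ 2 := by
      have h10 : 2 / ε ^ 2 * u1 ^ 2 = 2 * (u1 / ε) ^ 2 := by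
        field_simp
      rw [h10]
      nlinarith [sq_nonneg (A * b - u1 / ε)]
    linarith
  have hsum2 : Summable (fun k => 2 * A ^ 2 * ‖x (k + 1) - x k‖ ^ 2
      + 2 / ε ^ 2 * ‖x (k + 2) - x (k + 1)‖ ^ 2) := by
    apply Summable.add
    · exact hsum_u.mul_left _
    · exact ((summable_nat_add_iff 1).mpr hsum_u).mul_left _
  have hsa1 : Summable (fun k => ‖gradient f (x (k + 1))‖ ^ 2) :=
    Summable.of_nonneg_of_le (fun k => sq_nonneg _) hgb hsum2
  have hsum_a : Summable (fun k => ‖gradient f (x k)‖ ^ 2) :=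
    (summable_nat_add_iff 1).mp hsa1
  refine ⟨hsum_a, hsum_u, ?_⟩
  have h0 : Tendsto (fun k => ‖gradient f (x k)‖ ^ 2) atTop (𝓝 0) :=
    hsum_a.tendsto_atTop_zero
  have h1 : Tendsto (fun k => Real.sqrt (‖gradient f (x k)‖ ^ 2)) atTop
      (𝓝 (Real.sqrt 0)) := (Real.continuous_sqrt.tendsto 0).comp h0
  have heq : (fun k => Real.sqrt (‖gradient f (x k)‖ ^ 2))
      = fun k => ‖gradient f (x k)‖ :=
    funext fun k => Real.sqrt_sq (norm_nonneg _)
  rw [heq, Real.sqrt_zero] at h1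
  exact h1
end
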